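/- arXiv:1502.04096 — 10 statements merged into one kernel-verified Lean document; each statement's English description precedes it below -/
import Mathlib

section
/- Let D be a 2-(v,k,λ) design with block multiset B. If the block set of D can be partitioned into ρ classes, each of which covers every point exactly α times (an α-resolvable design), and ρ ≥ 2, then there exists a function f from the blocks of D to {-2,-1,1,2} such that for every point x, the sum of f over all blocks containing x equals zero (a zero-sum 3-flow); moreover if ρ is even the values can be taken in {-1,1} (a zero-sum 2-flow). -/
/-!
Give every block of the `j`-th resolution class the weight `w j`. A point lies in exactly `α`
blocks of each class, so the weights at a point add up to `α • ∑ j, w j`; hence any weights on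
the classes summing to zero give a zero-sum flow. For an even number of classes alternate `±1`;
for an odd number `ρ ≥ 3` alternate `±1` and lower the second weight from `-1` to `-2`.
-/

open Finset

theorem sum_filter_mem_comp_eq_zero {ι κ P M : Type*} [Fintype ι] [Fintype κ] [DecidableEq κ]
    [DecidableEq P] [AddCommMonoid M] {α : ℕ} (B : ι → Finset P) (c : ι → κ)
    (hres : ∀ (j : κ) (x : P), #{i | c i = j ∧ x ∈ B i} = α)
    (w : κ → M) (hw : ∑ j, w j = 0) (x : P) :
    ∑ i with x ∈ B i, w (c i) = 0 := by
  have hclass (j : κ) : ∑ i ∈ {i | x ∈ B i} with c i = j, w (c i) = α • w j := by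
    rw [sum_congr rfl fun i hi => congrArg w (mem_filter.1 hi).2, sum_const, filter_filter,
      ← hres j x]
    simp only [and_comm]
  rw [← sum_fiberwise _ c, sum_congr rfl fun j _ => hclass j, ← smul_sum, hw, smul_zero]

theorem exists_pm_one_sum_eq_zero {n : ℕ} (hn : Even n) :
    ∃ w : Fin n → ℤ, (∀ j, w j = 1 ∨ w j = -1) ∧ ∑ j, w j = 0 :=
  ⟨fun j => (-1) ^ j.val, fun j => j.val.even_or_odd.imp Even.neg_one_pow Odd.neg_one_pow,
    by rw [Fin.sum_neg_one_pow, if_pos hn]⟩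

theorem exists_sum_eq_zero_of_two_le {n : ℕ} (hn : 2 ≤ n) :
    ∃ w : Fin n → ℤ, (∀ j, w j ≠ 0 ∧ |w j| ≤ 2) ∧ ∑ j, w j = 0 := by
  rcases n.even_or_odd with heven | hodd
  · obtain ⟨w, hpm, hsum⟩ := exists_pm_one_sum_eq_zero heven
    exact ⟨w, fun j => by rcases hpm j with h | h <;> simp [h], hsum⟩
  · refine ⟨fun j => (-1) ^ j.val - (Pi.single ⟨1, hn⟩ 1 : Fin n → ℤ) j, fun j => ?_, ?_⟩
    · rcases eq_or_ne j ⟨1, hn⟩ with rfl | hj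
      · norm_num
      · rcases j.val.even_or_odd with h | h <;> simp [hj, h.neg_one_pow]
    · rw [sum_sub_distrib, Fin.sum_neg_one_pow, if_neg (Nat.not_even_iff_odd.2 hodd),
        sum_pi_single', if_pos (mem_univ _), sub_self]

theorem stmt0_general (v b α ρ : ℕ) (hρ : 2 ≤ ρ)
    (B : Fin b → Finset (Fin v))
    (c : Fin b → Fin ρ)
    (hres : ∀ (j : Fin ρ) (x : Fin v),
      (Finset.univ.filter (fun i => c i = j ∧ x ∈ B i)).card = α) :
    (∃ f : Fin b → ℤ, (∀ i, f i ≠ 0 ∧ |f i| ≤ 2) ∧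
      ∀ x : Fin v, ∑ i ∈ Finset.univ.filter (fun i => x ∈ B i), f i = 0) ∧
    (Even ρ → ∃ f : Fin b → ℤ, (∀ i, f i = 1 ∨ f i = -1) ∧
      ∀ x : Fin v, ∑ i ∈ Finset.univ.filter (fun i => x ∈ B i), f i = 0) := by
  constructor
  · obtain ⟨w, hw, hsum⟩ := exists_sum_eq_zero_of_two_le hρ
    exact ⟨w ∘ c, fun i => hw (c i), sum_filter_mem_comp_eq_zero B c hres w hsum⟩
  · intro hev
    obtain ⟨w, hw, hsum⟩ := exists_pm_one_sum_eq_zero hev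
    exact ⟨w ∘ c, fun i => hw (c i), sum_filter_mem_comp_eq_zero B c hres w hsum⟩

/-- An α-resolvable 2-(v,k,λ) design with ρ ≥ 2 resolution classes
admits a zero-sum 3-flow; if ρ is even it admits a zero-sum 2-flow. -/
theorem stmt0 (v b k lam α ρ : ℕ) (hρ : 2 ≤ ρ)
    (B : Fin b → Finset (Fin v))
    (hcard : ∀ i, (B i).card = k)
    (hpair : ∀ x y : Fin v, x ≠ y →
      (Finset.univ.filter (fun i => x ∈ B i ∧ y ∈ B i)).card = lam)
    (c : Fin b → Fin ρ)
    (hres : ∀ (j : Fin ρ) (x : Fin v),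
      (Finset.univ.filter (fun i => c i = j ∧ x ∈ B i)).card = α) :
    (∃ f : Fin b → ℤ, (∀ i, f i ≠ 0 ∧ |f i| ≤ 2) ∧
      ∀ x : Fin v, ∑ i ∈ Finset.univ.filter (fun i => x ∈ B i), f i = 0) ∧
    (Even ρ → ∃ f : Fin b → ℤ, (∀ i, f i = 1 ∨ f i = -1) ∧
      ∀ x : Fin v, ∑ i ∈ Finset.univ.filter (fun i => x ∈ B i), f i = 0) :=
  stmt0_general v b α ρ hρ B c hres
end

section
/- The Fano plane (the unique STS(7)) admits no zero-sum flow: there is no function from its 7 blocks to the nonzero real numbers such that for each of the 7 points, the sum of values on the 3 blocks through that point is zero. -/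
/-- The blocks of the Fano plane, the unique STS(7). -/
def fano : Fin 7 → Finset (Fin 7) :=
  ![{0,1,2}, {0,3,4}, {0,5,6}, {1,3,5}, {1,4,6}, {2,3,6}, {2,4,5}]

/-- The Fano plane admits no zero-sum flow. -/
theorem stmt3 :
    ¬ ∃ f : Fin 7 → ℝ, (∀ i, f i ≠ 0) ∧
      ∀ x : Fin 7, ∑ i ∈ Finset.univ.filter (fun i => x ∈ fano i), f i = 0 := by
  rintro ⟨f, hf, h⟩
  have h0 := h 0
  have h1 := h 1
  have h2 := h 2
  have h3 := h 3
  have h4 := h 4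
  have h5 := h 5
  have h6 := h 6
  rw [show (Finset.univ.filter (fun i => (0:Fin 7) ∈ fano i)) = {0,1,2} by decide] at h0
  rw [show (Finset.univ.filter (fun i => (1:Fin 7) ∈ fano i)) = {0,3,4} by decide] at h1
  rw [show (Finset.univ.filter (fun i => (2:Fin 7) ∈ fano i)) = {0,5,6} by decide] at h2
  rw [show (Finset.univ.filter (fun i => (3:Fin 7) ∈ fano i)) = {1,3,5} by decide] at h3
  rw [show (Finset.univ.filter (fun i => (4:Fin 7) ∈ fano i)) = {1,4,6} by decide] at h4
  rw [show (Finset.univ.filter (fun i => (5:Fin 7) ∈ fano i)) = {2,3,6} by decide] at h5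
  rw [show (Finset.univ.filter (fun i => (6:Fin 7) ∈ fano i)) = {2,4,5} by decide] at h6
  simp [Finset.sum_insert, Finset.mem_insert] at h0 h1 h2 h3 h4 h5 h6
  exact hf 0 (by linarith)
end

section
/- The unique 2-(6,3,2) design admits no zero-sum 3-flow, but it does admit a zero-sum 4-flow (an assignment of values from {±1, ±2, ±3} to its 10 blocks such that the sum of values on the blocks through each point is zero). -/
/-- The blocks of the unique TS(6,2) (points 1..6 renamed 0..5):
123, 134, 145, 156, 126, 235, 346, 245, 356, 246. -/
def ts62 : Fin 10 → Finset (Fin 6) :=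
  ![{0,1,2}, {0,2,3}, {0,3,4}, {0,4,5}, {0,1,5},
    {1,2,4}, {2,3,5}, {1,3,4}, {2,4,5}, {1,3,5}]

private lemma sum_ten (g : Fin 10 → ℤ) :
    ∑ i, g i = g 0 + g 1 + g 2 + g 3 + g 4 + g 5 + g 6 + g 7 + g 8 + g 9 := by
  simp [Fin.sum_univ_succ]
  ring_nf

set_option maxHeartbeats 1600000 in
/-- The unique TS(6,2) admits no zero-sum 3-flow, but it does
admit a zero-sum 4-flow. -/
theorem stmt6 :
    (¬ ∃ f : Fin 10 → ℤ, (∀ i, f i ≠ 0 ∧ |f i| ≤ 2) ∧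
      ∀ x : Fin 6, ∑ i ∈ Finset.univ.filter (fun i => x ∈ ts62 i), f i = 0) ∧
    (∃ f : Fin 10 → ℤ, (∀ i, f i ≠ 0 ∧ |f i| ≤ 3) ∧
      ∀ x : Fin 6, ∑ i ∈ Finset.univ.filter (fun i => x ∈ ts62 i), f i = 0) := by
  constructor
  · rintro ⟨f, hf, hsum⟩
    have hb : ∀ i, f i ≠ 0 ∧ -2 ≤ f i ∧ f i ≤ 2 := by
      intro i
      obtain ⟨h1, h2⟩ := hf i
      rw [abs_le] at h2
      exact ⟨h1, h2.1, h2.2⟩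
    obtain ⟨n0, l0, u0⟩ := hb 0
    obtain ⟨n1, l1, u1⟩ := hb 1
    obtain ⟨n2, l2, u2⟩ := hb 2
    obtain ⟨n3, l3, u3⟩ := hb 3
    obtain ⟨n4, l4, u4⟩ := hb 4
    obtain ⟨n5, l5, u5⟩ := hb 5
    obtain ⟨n6, l6, u6⟩ := hb 6
    obtain ⟨n7, l7, u7⟩ := hb 7
    obtain ⟨n8, l8, u8⟩ := hb 8
    obtain ⟨n9, l9, u9⟩ := hb 9
    have e0 := hsum 0
    have e1 := hsum 1
    have e2 := hsum 2
    have e3 := hsum 3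
    have e4 := hsum 4
    have e5 := hsum 5
    rw [Finset.sum_filter, sum_ten, if_pos (by decide), if_pos (by decide), if_pos (by decide), if_pos (by decide), if_pos (by decide), if_neg (by decide), if_neg (by decide), if_neg (by decide), if_neg (by decide), if_neg (by decide)] at e0
    rw [Finset.sum_filter, sum_ten, if_pos (by decide), if_neg (by decide), if_neg (by decide), if_neg (by decide), if_pos (by decide), if_pos (by decide), if_neg (by decide), if_pos (by decide), if_neg (by decide), if_pos (by decide)] at e1
    rw [Finset.sum_filter, sum_ten, if_pos (by decide), if_pos (by decide), if_neg (by decide), if_neg (by decide), if_neg (by decide), if_pos (by decide), if_pos (by decide), if_neg (by decide), if_pos (by decide), if_neg (by decide)] at e2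
    rw [Finset.sum_filter, sum_ten, if_neg (by decide), if_pos (by decide), if_pos (by decide), if_neg (by decide), if_neg (by decide), if_neg (by decide), if_pos (by decide), if_pos (by decide), if_neg (by decide), if_pos (by decide)] at e3
    rw [Finset.sum_filter, sum_ten, if_neg (by decide), if_neg (by decide), if_pos (by decide), if_pos (by decide), if_neg (by decide), if_pos (by decide), if_neg (by decide), if_pos (by decide), if_pos (by decide), if_neg (by decide)] at e4
    rw [Finset.sum_filter, sum_ten, if_neg (by decide), if_neg (by decide), if_neg (by decide), if_pos (by decide), if_pos (by decide), if_neg (by decide), if_pos (by decide), if_neg (by decide), if_pos (by decide), if_pos (by decide)] at e5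
    have h6 : f 6 = -2 ∨ f 6 = -1 ∨ f 6 = 1 ∨ f 6 = 2 := by omega
    rcases h6 with h6|h6|h6|h6 <;> omega
  · refine ⟨![1, -2, 2, -3, 2, -2, 1, 1, 2, -2], ?_, ?_⟩
    · decide
    · decide
end

section
/- Any Hanani triple system of order 6v+1 with v ≥ 3 admits a zero-sum 3-flow. -/
lemma exists_t_step (v : ℕ)
    (h : ∃ t : Fin v → ℤ, (∀ k, t k ≠ 0 ∧ |t k| ≤ 2) ∧ ∑ k, t k = 0) :
    ∃ t : Fin (v+2) → ℤ, (∀ k, t k ≠ 0 ∧ |t k| ≤ 2) ∧ ∑ k, t k = 0 := by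
  obtain ⟨t, ht, hsum⟩ := h
  refine ⟨Fin.snoc (Fin.snoc t 1) (-1), ?_, ?_⟩
  · intro k
    refine Fin.lastCases ?_ (fun k => ?_) k
    · simp
    refine Fin.lastCases ?_ (fun k' => ?_) k
    · simp
    · simpa using ht k'
  · rw [Fin.sum_univ_castSucc, Fin.sum_univ_castSucc]
    simp [hsum]

lemma exists_t (v : ℕ) (hv : 2 ≤ v) : ∃ t : Fin v → ℤ,
    (∀ k, t k ≠ 0 ∧ |t k| ≤ 2) ∧ ∑ k, t k = 0 := by
  obtain ⟨k, rfl⟩ : ∃ k, v = k + 2 := ⟨v - 2, by omega⟩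
  clear hv
  induction k using Nat.strong_induction_on with
  | _ k ih =>
    match k, ih with
    | 0, _ => exact ⟨![1,-1], by decide, by decide⟩
    | 1, _ => exact ⟨![2,-1,-1], by decide, by decide⟩
    | (k+2), ih => exact exists_t_step (k+2) (ih k (by omega))

/-- Any Hanani triple system of order 6v+1 (v ≥ 3) admits a
zero-sum 3-flow.  The system is an STS(6v+1) whose blocks partition into
classes indexed by `Fin (3v+1)`: class `0` is a partial parallel class, and
each class `j ≠ 0` is an almost parallel class missing exactly the point
`miss j`; the missed points are distinct and form the support of class `0`. -/
theorem stmt7 (v b : ℕ) (hv : 3 ≤ v)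
    (B : Fin b → Finset (Fin (6*v+1)))
    (hcard : ∀ i, (B i).card = 3)
    (hpair : ∀ x y : Fin (6*v+1), x ≠ y →
      (Finset.univ.filter (fun i => x ∈ B i ∧ y ∈ B i)).card = 1)
    (c : Fin b → Fin (3*v+1))
    (miss : Fin (3*v+1) → Fin (6*v+1))
    (halmost : ∀ j : Fin (3*v+1), j ≠ 0 → ∀ x : Fin (6*v+1),
      (Finset.univ.filter (fun i => c i = j ∧ x ∈ B i)).card
        = if x = miss j then 0 else 1)
    (hpartial : ∀ x : Fin (6*v+1),
      (Finset.univ.filter (fun i => c i = 0 ∧ x ∈ B i)).card ≤ 1)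
    (hmissinj : ∀ j j' : Fin (3*v+1), j ≠ 0 → j' ≠ 0 → miss j = miss j' → j = j')
    (hsupport : ∀ x : Fin (6*v+1),
      (Finset.univ.filter (fun i => c i = 0 ∧ x ∈ B i)).card = 1
        ↔ ∃ j : Fin (3*v+1), j ≠ 0 ∧ miss j = x) :
    ∃ f : Fin b → ℤ, (∀ i, f i ≠ 0 ∧ |f i| ≤ 2) ∧
      ∀ x : Fin (6*v+1), ∑ i ∈ Finset.univ.filter (fun i => x ∈ B i), f i = 0 := by
  classical
  set P0 : Finset (Fin b) := Finset.univ.filter (fun i => c i = 0) with hP0def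
  have hmemP0 : ∀ i, i ∈ P0 ↔ c i = 0 := by
    intro i; simp [hP0def]
  -- the set of "missed" points
  set S : Finset (Fin (6*v+1)) :=
    (Finset.univ.erase (0 : Fin (3*v+1))).image miss with hSdef
  have hScard : S.card = 3*v := by
    rw [hSdef, Finset.card_image_of_injOn]
    · simp
    · intro j hj j' hj' h
      exact hmissinj j j' (Finset.mem_erase.mp hj).1 (Finset.mem_erase.mp hj').1 h
  have hsub : S ⊆ P0.biUnion B := by
    intro x hx
    obtain ⟨j, hj, rfl⟩ := Finset.mem_image.mp hx
    have h1 := (hsupport (miss j)).mpr ⟨j, (Finset.mem_erase.mp hj).1, rfl⟩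
    obtain ⟨i, hi⟩ := Finset.card_eq_one.mp h1
    have : i ∈ Finset.univ.filter (fun i => c i = 0 ∧ miss j ∈ B i) :=
      hi ▸ Finset.mem_singleton_self i
    rw [Finset.mem_filter] at this
    exact Finset.mem_biUnion.mpr ⟨i, (hmemP0 i).mpr this.2.1, this.2.2⟩
  have hP0card : v ≤ P0.card := by
    have h1 := Finset.card_le_card hsub
    have h2 := Finset.card_biUnion_le (s := P0) (t := B)
    have h3 : ∑ i ∈ P0, (B i).card = 3 * P0.card := by
      rw [Finset.sum_congr rfl (fun i _ => hcard i), Finset.sum_const, smul_eq_mul]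
      ring
    omega
  obtain ⟨t0, ht0, ht0sum⟩ := exists_t P0.card (by omega)
  set e := P0.orderIsoOfFin rfl with hedef
  set τ : Fin b → ℤ := fun i => if h : i ∈ P0 then t0 (e.symm ⟨i, h⟩) else 0 with hτdef
  have hτval : ∀ i ∈ P0, τ i ≠ 0 ∧ |τ i| ≤ 2 := by
    intro i hi
    simp only [hτdef, dif_pos hi]
    exact ht0 _
  have hτe : ∀ k, τ (e k) = t0 k := by
    intro k
    have h : ((e k : {x // x ∈ P0}) : Fin b) ∈ P0 := (e k).2
    simp only [hτdef, dif_pos h]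
    congr 1
    rw [show (⟨((e k : {x // x ∈ P0}) : Fin b), h⟩ : {x // x ∈ P0}) = e k from
      Subtype.ext rfl]
    exact e.symm_apply_apply k
  have hτsum : ∑ i ∈ P0, τ i = 0 := by
    calc ∑ i ∈ P0, τ i = ∑ p ∈ P0.attach, τ ↑p := (Finset.sum_attach _ _).symm
      _ = ∑ p : {x // x ∈ P0}, τ ↑p := by rw [Finset.univ_eq_attach]
      _ = ∑ k : Fin P0.card, τ (e k) :=
          (Fintype.sum_equiv e.toEquiv (fun k => τ (e k)) (fun p => τ ↑p)
            (fun k => rfl)).symm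
      _ = 0 := by simp only [hτe]; exact ht0sum
  -- the unique block of the partial class through each missed point
  have hP0ne : P0.Nonempty := Finset.card_pos.mp (by omega)
  obtain ⟨i0, hi0⟩ := hP0ne
  obtain ⟨ψ, hψ⟩ : ∃ ψ : Fin (3*v+1) → Fin b, ∀ j, j ≠ 0 →
      c (ψ j) = 0 ∧ miss j ∈ B (ψ j) ∧
        ∀ i', c i' = 0 → miss j ∈ B i' → i' = ψ j := by
    have key : ∀ j : Fin (3*v+1), ∃ i : Fin b, j ≠ 0 →
        c i = 0 ∧ miss j ∈ B i ∧ ∀ i', c i' = 0 → miss j ∈ B i' → i' = i := by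
      intro j
      by_cases hj : j = 0
      · exact ⟨i0, fun h => absurd hj h⟩
      · obtain ⟨i, hi⟩ := Finset.card_eq_one.mp ((hsupport (miss j)).mpr ⟨j, hj, rfl⟩)
        have him : i ∈ Finset.univ.filter (fun i => c i = 0 ∧ miss j ∈ B i) :=
          hi ▸ Finset.mem_singleton_self i
        rw [Finset.mem_filter] at him
        refine ⟨i, fun _ => ⟨him.2.1, him.2.2, fun i' h1 h2 => ?_⟩⟩
        have : i' ∈ ({i} : Finset (Fin b)) :=
          hi ▸ Finset.mem_filter.mpr ⟨Finset.mem_univ _, h1, h2⟩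
        exact Finset.mem_singleton.mp this
    choose ψ hψ using key
    exact ⟨ψ, hψ⟩
  -- every point of a partial-class block is a missed point, with its ψ
  have hsup : ∀ i, c i = 0 → ∀ x ∈ B i, ∃ j, j ≠ 0 ∧ miss j = x ∧ ψ j = i := by
    intro i hci x hx
    have hge : 0 < (Finset.univ.filter (fun i' => c i' = 0 ∧ x ∈ B i')).card :=
      Finset.card_pos.mpr ⟨i, Finset.mem_filter.mpr ⟨Finset.mem_univ _, hci, hx⟩⟩
    have hle := hpartial x
    have h1 : (Finset.univ.filter (fun i' => c i' = 0 ∧ x ∈ B i')).card = 1 := by omega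
    obtain ⟨j, hj, hmx⟩ := (hsupport x).mp h1
    refine ⟨j, hj, hmx, ((hψ j hj).2.2 i hci (by rw [hmx]; exact hx)).symm⟩
  -- key global zero-sum over nonzero classes
  have hΦ : ∑ j ∈ Finset.univ.erase (0 : Fin (3*v+1)), τ (ψ j) = 0 := by
    rw [Finset.sum_comp τ ψ]
    have himg : (Finset.univ.erase (0 : Fin (3*v+1))).image ψ = P0 := by
      apply Finset.Subset.antisymm
      · intro i hi
        obtain ⟨j, hj, rfl⟩ := Finset.mem_image.mp hi
        exact (hmemP0 _).mpr (hψ j (Finset.mem_erase.mp hj).1).1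
      · intro i hi
        have hci := (hmemP0 i).mp hi
        have hBne : (B i).Nonempty := Finset.card_pos.mp (by rw [hcard]; omega)
        obtain ⟨x, hx⟩ := hBne
        obtain ⟨j, hj, hmx, hpsi⟩ := hsup i hci x hx
        exact Finset.mem_image.mpr ⟨j, Finset.mem_erase.mpr ⟨hj, Finset.mem_univ _⟩, hpsi⟩
    rw [himg]
    have hfib : ∀ i ∈ P0,
        ((Finset.univ.erase (0 : Fin (3*v+1))).filter (fun j => ψ j = i)).card = 3 := by
      intro i hi
      have hci := (hmemP0 i).mp hi
      have hbij : ((Finset.univ.erase (0 : Fin (3*v+1))).filter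
          (fun j => ψ j = i)).card = (B i).card := by
        apply Finset.card_bij (fun j _ => miss j)
        · intro j hj
          rw [Finset.mem_filter] at hj
          have h := hψ j (Finset.mem_erase.mp hj.1).1
          rw [← hj.2]
          exact h.2.1
        · intro j hj j' hj' h
          rw [Finset.mem_filter] at hj hj'
          exact hmissinj j j' (Finset.mem_erase.mp hj.1).1 (Finset.mem_erase.mp hj'.1).1 h
        · intro x hx
          obtain ⟨j, hj, hmx, hpsi⟩ := hsup i hci x hx
          exact ⟨j, Finset.mem_filter.mpr
            ⟨Finset.mem_erase.mpr ⟨hj, Finset.mem_univ _⟩, hpsi⟩, hmx⟩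
      rw [hbij, hcard]
    rw [Finset.sum_congr rfl (fun i hi => by rw [hfib i hi])]
    rw [← Finset.smul_sum, hτsum, smul_zero]
  -- the flow
  refine ⟨fun i => if c i = 0 then τ i else τ (ψ (c i)), ?_, ?_⟩
  · intro i
    by_cases hci : c i = 0
    · simp only [if_pos hci]
      exact hτval i ((hmemP0 i).mpr hci)
    · simp only [if_neg hci]
      exact hτval _ ((hmemP0 _).mpr (hψ (c i) hci).1)
  · intro x
    set f : Fin b → ℤ := fun i => if c i = 0 then τ i else τ (ψ (c i)) with hfdef
    rw [← Finset.sum_fiberwise (Finset.univ.filter (fun i => x ∈ B i)) c f]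
    have hre : ∀ j : Fin (3*v+1),
        (Finset.univ.filter (fun i => x ∈ B i)).filter (fun i => c i = j)
          = Finset.univ.filter (fun i => c i = j ∧ x ∈ B i) := by
      intro j
      ext i
      simp [and_comm]
    set g : Fin (3*v+1) → ℤ :=
      fun j => ∑ i ∈ Finset.univ.filter (fun i => c i = j ∧ x ∈ B i), f i with hgdef
    have hgeq : ∀ j : Fin (3*v+1),
        ∑ i ∈ (Finset.univ.filter (fun i => x ∈ B i)).filter (fun i => c i = j), f i
          = g j := by
      intro j; rw [hre j]
    rw [Finset.sum_congr rfl (fun j _ => hgeq j)]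
    -- values of g on nonzero classes
    have hGne : ∀ j, j ≠ 0 → x ≠ miss j → g j = τ (ψ j) := by
      intro j hj hxm
      have h1 : (Finset.univ.filter (fun i => c i = j ∧ x ∈ B i)).card = 1 := by
        rw [halmost j hj x, if_neg hxm]
      obtain ⟨i1, hi1⟩ := Finset.card_eq_one.mp h1
      have hm : i1 ∈ Finset.univ.filter (fun i => c i = j ∧ x ∈ B i) :=
        hi1 ▸ Finset.mem_singleton_self i1
      rw [Finset.mem_filter] at hm
      rw [hgdef]
      simp only []
      rw [hi1, Finset.sum_singleton, hfdef]
      simp only [hm.2.1, if_neg hj]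
    have hGmiss : ∀ j, j ≠ 0 → x = miss j → g j = 0 := by
      intro j hj hxm
      have h1 : (Finset.univ.filter (fun i => c i = j ∧ x ∈ B i)).card = 0 := by
        rw [halmost j hj x, if_pos hxm]
      rw [hgdef]
      simp only []
      rw [Finset.card_eq_zero.mp h1, Finset.sum_empty]
    rw [← Finset.add_sum_erase Finset.univ g (Finset.mem_univ (0 : Fin (3*v+1)))]
    by_cases hxs : ∃ j : Fin (3*v+1), j ≠ 0 ∧ miss j = x
    · obtain ⟨j0, hj0, hx0⟩ := hxs
      -- class 0 contributes τ (ψ j0)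
      have hg0 : g 0 = τ (ψ j0) := by
        have h1 : Finset.univ.filter (fun i => c i = (0 : Fin (3*v+1)) ∧ x ∈ B i)
            = {ψ j0} := by
          obtain ⟨i, hi⟩ := Finset.card_eq_one.mp ((hsupport x).mpr ⟨j0, hj0, hx0⟩)
          have hm : ψ j0 ∈ Finset.univ.filter (fun i => c i = (0:Fin (3*v+1)) ∧ x ∈ B i) := by
            refine Finset.mem_filter.mpr ⟨Finset.mem_univ _, (hψ j0 hj0).1, ?_⟩
            rw [← hx0]; exact (hψ j0 hj0).2.1
          rw [hi] at hm ⊢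
          rw [Finset.mem_singleton.mp hm]
        rw [hgdef]
        simp only []
        rw [h1, Finset.sum_singleton, hfdef]
        simp only [(hψ j0 hj0).1, if_pos]
      have hj0mem : j0 ∈ Finset.univ.erase (0 : Fin (3*v+1)) :=
        Finset.mem_erase.mpr ⟨hj0, Finset.mem_univ _⟩
      rw [← Finset.add_sum_erase _ g hj0mem, hGmiss j0 hj0 hx0.symm]
      have hrest : ∑ j ∈ (Finset.univ.erase (0 : Fin (3*v+1))).erase j0, g j
          = ∑ j ∈ (Finset.univ.erase (0 : Fin (3*v+1))).erase j0, τ (ψ j) := by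
        apply Finset.sum_congr rfl
        intro j hj
        have hj1 := Finset.mem_erase.mp hj
        have hj2 := Finset.mem_erase.mp hj1.2
        apply hGne j hj2.1
        intro hxm
        exact hj1.1 (hmissinj j j0 hj2.1 hj0 (by rw [← hxm, hx0]))
      rw [hrest]
      have hΦ' : τ (ψ j0) + ∑ j ∈ (Finset.univ.erase (0 : Fin (3*v+1))).erase j0,
          τ (ψ j) = 0 := by
        rw [Finset.add_sum_erase _ (fun j => τ (ψ j)) hj0mem]
        exact hΦ
      rw [hg0]
      linarith
    · -- x is not a missed point: class 0 contributes nothing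
      have hg0 : g 0 = 0 := by
        have hle := hpartial x
        have hne : (Finset.univ.filter (fun i => c i = (0:Fin (3*v+1)) ∧ x ∈ B i)).card ≠ 1 := by
          intro h; exact hxs ((hsupport x).mp h)
        have h0 : (Finset.univ.filter (fun i => c i = (0:Fin (3*v+1)) ∧ x ∈ B i)).card = 0 := by
          omega
        rw [hgdef]
        simp only []
        rw [Finset.card_eq_zero.mp h0, Finset.sum_empty]
      have hrest : ∑ j ∈ Finset.univ.erase (0 : Fin (3*v+1)), g j
          = ∑ j ∈ Finset.univ.erase (0 : Fin (3*v+1)), τ (ψ j) := by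
        apply Finset.sum_congr rfl
        intro j hj
        exact hGne j (Finset.mem_erase.mp hj).1
          (fun hxm => hxs ⟨j, (Finset.mem_erase.mp hj).1, hxm.symm⟩)
      rw [hg0, hrest, hΦ, add_zero]
end

section
/- Suppose the complete graph K_{v+1} admits a k-null 1-factorisation and (X,B) is a Steiner triple system STS(v) admitting a zero-sum ℓ-flow. Then (X,B) can be embedded into an STS(2v+1) that admits a zero-sum max(k,ℓ)-flow, with the flow restricted to the original blocks B unchanged. -/
/-!
Place the STS on the left summand of `X ⊕ Y`, where `Y` is the vertex set of `K_{v+1}`, and add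
the blocks `{i} ∪ e` for `e ∈ F i`. A pair `(i, y)` lies in exactly one new block because `F i` is
a perfect matching, and a pair of points of `Y` does because every edge lies in exactly one
factor. Keep the old weights and give `{i} ∪ e` the weight of the edge `e`: at an old point `i`
the new blocks contribute the total weight of `F i`, which is zero, and at a new point `y` they
contribute the vertex sum of the edge flow at `y`, also zero. Finally relabel `X ⊕ Y` as
`Fin (2v+1)`, sending `X` onto the first `v` points.
-/

open Finset

section Designs

variable {α β : Type*} [DecidableEq α] [DecidableEq β]

def IsSteinerTripleSystem (B : Finset (Finset α)) : Prop :=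
  (∀ b ∈ B, b.card = 3) ∧ ∀ x y : α, x ≠ y → (B.filter fun b => x ∈ b ∧ y ∈ b).card = 1

def IsZeroSumFlow (B : Finset (Finset α)) (g : Finset α → ℤ) (n : ℕ) : Prop :=
  (∀ b ∈ B, g b ≠ 0 ∧ |g b| ≤ (n : ℤ) - 1) ∧
    ∀ x : α, ∑ b ∈ B.filter (fun b => x ∈ b), g b = 0

variable {B : Finset (Finset α)}

theorem IsSteinerTripleSystem.map_finsetCongr (hB : IsSteinerTripleSystem B) (e : α ≃ β) :
    IsSteinerTripleSystem (B.map e.finsetCongr.toEmbedding) := by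
  refine ⟨fun b hb => ?_, fun x y hxy => ?_⟩
  · obtain ⟨a, ha, rfl⟩ := mem_map.mp hb
    simpa using hB.1 a ha
  · rw [filter_map, card_map]
    simpa [Function.comp_def, mem_map_equiv] using hB.2 _ _ (e.symm.injective.ne hxy)

theorem IsZeroSumFlow.map_finsetCongr {g : Finset α → ℤ} {n : ℕ} (hg : IsZeroSumFlow B g n)
    (e : α ≃ β) :
    IsZeroSumFlow (B.map e.finsetCongr.toEmbedding) (g ∘ e.finsetCongr.symm) n := by
  refine ⟨fun b hb => ?_, fun x => ?_⟩
  · obtain ⟨a, ha, rfl⟩ := mem_map.mp hb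
    simpa only [Equiv.coe_toEmbedding, Function.comp_apply, Equiv.symm_apply_apply]
      using hg.1 a ha
  · rw [filter_map, sum_map, ← hg.2 (e.symm x)]
    refine sum_congr (filter_congr fun a _ => ?_) fun a _ => ?_
    · simp [mem_map_equiv]
    · simp only [Equiv.coe_toEmbedding, Function.comp_apply, Equiv.symm_apply_apply]

end Designs

section OneFactorisation

variable {ι Y : Type*}

structure IsOneFactorisation (F : ι → Finset (Finset Y)) : Prop where
  card_eq_two : ∀ i, ∀ e ∈ F i, e.card = 2
  existsUnique_mem : ∀ i y, ∃! e, e ∈ F i ∧ y ∈ e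
  existsUnique_factor : ∀ e : Finset Y, e.card = 2 → ∃! i, e ∈ F i

structure IsNullOneFactorisation [Fintype Y] [DecidableEq Y] (F : ι → Finset (Finset Y))
    (w : Finset Y → ℤ) (k : ℕ) : Prop extends IsOneFactorisation F where
  isZeroSumFlow : IsZeroSumFlow {e : Finset Y | e.card = 2} w k
  sum_factor_eq_zero : ∀ i, ∑ e ∈ F i, w e = 0

variable {F : ι → Finset (Finset Y)}

theorem IsOneFactorisation.nonempty (hF : IsOneFactorisation F) {i : ι} {e : Finset Y}
    (he : e ∈ F i) : e.Nonempty :=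
  card_pos.mp (by rw [hF.card_eq_two i e he]; norm_num)

theorem IsOneFactorisation.sum_filter_sigma [Fintype ι] [Fintype Y] [DecidableEq Y]
    {M : Type*} [AddCommMonoid M] (hF : IsOneFactorisation F) (Q : Finset Y → Prop)
    [DecidablePred Q] (f : Finset Y → M) :
    ∑ ip ∈ (univ.sigma F).filter (fun ip => Q ip.2), f ip.2 =
      ∑ e ∈ ({e : Finset Y | e.card = 2} : Finset _).filter Q, f e := by
  refine sum_bij (fun ip _ => ip.2) (fun ip hip => ?_) (fun ip hip jq hjq h => ?_)
    (fun e he => ?_) (fun _ _ => rfl)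
  · simp only [mem_filter, mem_sigma, mem_univ, true_and] at hip ⊢
    exact ⟨hF.card_eq_two _ _ hip.1, hip.2⟩
  · simp only [mem_filter, mem_sigma, mem_univ, true_and] at hip hjq
    obtain ⟨i, p⟩ := ip
    obtain ⟨j, q⟩ := jq
    obtain rfl : p = q := h
    obtain rfl : i = j :=
      (hF.existsUnique_factor p (hF.card_eq_two i p hip.1)).unique hip.1 hjq.1
    rfl
  · simp only [mem_filter, mem_univ, true_and] at he
    obtain ⟨i, hi, -⟩ := hF.existsUnique_factor e he.1
    exact ⟨⟨i, e⟩, by simp [hi, he.2], rfl⟩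

theorem IsOneFactorisation.card_filter_sigma_eq_and_mem [Fintype ι] [DecidableEq ι]
    [DecidableEq Y] (hF : IsOneFactorisation F) (i : ι) (y : Y) :
    ((univ.sigma F).filter fun ip : Σ _ : ι, Finset Y => i = ip.1 ∧ y ∈ ip.2).card = 1 := by
  rw [card_eq_one_iff_existsUnique]
  obtain ⟨p, hp, hu⟩ := hF.existsUnique_mem i y
  refine ⟨⟨i, p⟩, by simpa using hp, ?_⟩
  rintro ⟨j, q⟩ h
  simp only [mem_filter, mem_sigma, mem_univ, true_and] at h
  obtain ⟨hq, rfl, hyq⟩ := h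
  rw [hu q ⟨hq, hyq⟩]

theorem card_eq_two_and_mem_and_mem_iff [DecidableEq Y] {y y' : Y} (h : y ≠ y')
    {e : Finset Y} : e.card = 2 ∧ y ∈ e ∧ y' ∈ e ↔ e = {y, y'} := by
  constructor
  · rintro ⟨he, hy, hy'⟩
    exact (eq_of_subset_of_card_le (insert_subset hy (singleton_subset_iff.mpr hy'))
      (by rw [he, card_pair h])).symm
  · rintro rfl
    simp [card_pair h]

theorem IsOneFactorisation.card_filter_sigma_mem_and_mem [Fintype ι] [Fintype Y] [DecidableEq Y]
    (hF : IsOneFactorisation F) {y y' : Y} (h : y ≠ y') :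
    ((univ.sigma F).filter fun ip => y ∈ ip.2 ∧ y' ∈ ip.2).card = 1 := by
  have := hF.sum_filter_sigma (fun e => y ∈ e ∧ y' ∈ e) (fun _ => 1)
  simp only [sum_const, smul_eq_mul, mul_one, filter_filter] at this
  rw [this, filter_congr fun e _ => card_eq_two_and_mem_and_mem_iff h, filter_eq',
    if_pos (mem_univ _), card_singleton]

end OneFactorisation

section Doubling

variable {X Y : Type*}

def oldBlock (a : Finset X) : Finset (X ⊕ Y) := a.disjSum ∅

def newBlock (ip : Σ _ : X, Finset Y) : Finset (X ⊕ Y) := ({ip.1} : Finset X).disjSum ip.2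

def doubledFlow (g : Finset X → ℤ) (w : Finset Y → ℤ) (b : Finset (X ⊕ Y)) : ℤ :=
  if b.toRight.Nonempty then w b.toRight else g b.toLeft

theorem oldBlock_injective : Function.Injective (oldBlock : Finset X → Finset (X ⊕ Y)) :=
  fun _ _ h => (disjSum_inj.mp h).1

theorem newBlock_injective : Function.Injective (newBlock : (Σ _ : X, Finset Y) → _) := by
  rintro ⟨i, p⟩ ⟨j, q⟩ h
  obtain ⟨hij, rfl⟩ := disjSum_inj.mp h
  obtain rfl := singleton_injective hij
  rfl

theorem doubledFlow_oldBlock (g : Finset X → ℤ) (w : Finset Y → ℤ) (a : Finset X) :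
    doubledFlow g w (oldBlock a) = g a := by
  simp only [doubledFlow, oldBlock, toRight_disjSum, toLeft_disjSum, Finset.not_nonempty_empty,
    if_false]

theorem doubledFlow_newBlock (g : Finset X → ℤ) (w : Finset Y → ℤ) {ip : Σ _ : X, Finset Y}
    (hp : ip.2.Nonempty) : doubledFlow g w (newBlock ip) = w ip.2 := by
  simp only [doubledFlow, newBlock, toRight_disjSum, if_pos hp]

def doubledBlocks [Fintype X] [DecidableEq X] [DecidableEq Y] (B : Finset (Finset X))
    (F : X → Finset (Finset Y)) : Finset (Finset (X ⊕ Y)) :=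
  B.image oldBlock ∪ (univ.sigma F).image newBlock

variable [Fintype X] [DecidableEq X] [DecidableEq Y]
  {B : Finset (Finset X)} {F : X → Finset (Finset Y)}

theorem disjoint_oldBlocks_newBlocks (hF : ∀ i, ∀ p ∈ F i, p.Nonempty) :
    Disjoint (B.image oldBlock) ((univ.sigma F).image newBlock) := by
  simp only [disjoint_left, mem_image, mem_sigma, mem_univ, true_and, not_exists, not_and]
  rintro _ ⟨a, -, rfl⟩ ⟨i, p⟩ hp h
  have := congrArg Finset.toRight h
  simp only [newBlock, oldBlock, toRight_disjSum] at this
  exact (hF i p hp).ne_empty this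

theorem card_filter_doubledBlocks (hF : ∀ i, ∀ p ∈ F i, p.Nonempty)
    (P : Finset (X ⊕ Y) → Prop) [DecidablePred P] :
    ((doubledBlocks B F).filter P).card =
      (B.filter (P ∘ oldBlock)).card + ((univ.sigma F).filter (P ∘ newBlock)).card := by
  rw [doubledBlocks, filter_union, card_union_of_disjoint
    (disjoint_filter_filter (disjoint_oldBlocks_newBlocks hF)), filter_image, filter_image,
    card_image_of_injective _ oldBlock_injective, card_image_of_injective _ newBlock_injective]
  rfl

theorem sum_filter_doubledBlocks (hF : ∀ i, ∀ p ∈ F i, p.Nonempty) (g : Finset X → ℤ)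
    (w : Finset Y → ℤ) (P : Finset (X ⊕ Y) → Prop) [DecidablePred P] :
    ∑ b ∈ (doubledBlocks B F).filter P, doubledFlow g w b =
      ∑ a ∈ B.filter (P ∘ oldBlock), g a +
        ∑ ip ∈ (univ.sigma F).filter (P ∘ newBlock), w ip.2 := by
  rw [doubledBlocks, filter_union, sum_union
    (disjoint_filter_filter (disjoint_oldBlocks_newBlocks hF)), filter_image, filter_image,
    sum_image oldBlock_injective.injOn, sum_image newBlock_injective.injOn]
  refine congrArg₂ (· + ·) (sum_congr rfl fun a _ => doubledFlow_oldBlock g w a)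
    (sum_congr rfl fun ip hip => doubledFlow_newBlock g w ?_)
  simp only [mem_filter, mem_sigma, mem_univ, true_and] at hip
  exact hF _ _ hip.1

theorem isSteinerTripleSystem_doubledBlocks [Fintype Y] (hB : IsSteinerTripleSystem B)
    (hF : IsOneFactorisation F) : IsSteinerTripleSystem (doubledBlocks B F) := by
  have hne : ∀ i, ∀ p ∈ F i, p.Nonempty := fun i p hp => hF.nonempty hp
  refine ⟨fun b hb => ?_, ?_⟩
  · rcases mem_union.mp hb with hb | hb <;> obtain ⟨_, h, rfl⟩ := mem_image.mp hb
    · simp [oldBlock, hB.1 _ h]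
    · simp [newBlock, hF.card_eq_two _ _ (mem_sigma.mp h).2]
  · have mixed : ∀ x y,
        ((doubledBlocks B F).filter fun b => Sum.inl x ∈ b ∧ Sum.inr y ∈ b).card = 1 := by
      intro x y
      rw [card_filter_doubledBlocks hne]
      simpa [oldBlock, newBlock] using hF.card_filter_sigma_eq_and_mem x y
    rintro (x | y) (x' | y') hxy
    · have hxx' : x ≠ x' := fun h => hxy (congrArg _ h)
      rw [card_filter_doubledBlocks hne]
      simp only [Function.comp_def, oldBlock, newBlock, inl_mem_disjSum, mem_singleton]
      rw [hB.2 x x' hxx', card_eq_zero.mpr (filter_eq_empty_iff.mpr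
        fun ip _ h => hxx' (h.1.trans h.2.symm))]
    · exact mixed x y'
    · simpa only [and_comm] using mixed x' y
    · rw [card_filter_doubledBlocks hne]
      simpa [oldBlock, newBlock] using
        hF.card_filter_sigma_mem_and_mem fun h => hxy (congrArg _ h)

theorem isZeroSumFlow_doubledFlow [Fintype Y] {g : Finset X → ℤ} {w : Finset Y → ℤ}
    {k l : ℕ} (hF : IsNullOneFactorisation F w k) (hg : IsZeroSumFlow B g l) :
    IsZeroSumFlow (doubledBlocks B F) (doubledFlow g w) (max k l) := by
  have hne : ∀ i, ∀ p ∈ F i, p.Nonempty := fun i p hp => hF.nonempty hp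
  refine ⟨fun b hb => ?_, ?_⟩
  · rcases mem_union.mp hb with hb | hb
    · obtain ⟨a, ha, rfl⟩ := mem_image.mp hb
      obtain ⟨hne0, hle⟩ := hg.1 a ha
      rw [doubledFlow_oldBlock]
      exact ⟨hne0, hle.trans (by omega)⟩
    · obtain ⟨⟨i, p⟩, hp, rfl⟩ := mem_image.mp hb
      have hp : p ∈ F i := (mem_sigma.mp hp).2
      obtain ⟨hne0, hle⟩ := hF.isZeroSumFlow.1 p (by simpa using hF.card_eq_two i p hp)
      rw [doubledFlow_newBlock g w (hne i p hp)]
      exact ⟨hne0, hle.trans (by omega)⟩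
  · rintro (x | y) <;> rw [sum_filter_doubledBlocks hne]
    · have hfac :
          ∑ ip ∈ (univ.sigma F).filter (fun ip => x = ip.1), w ip.2 = ∑ p ∈ F x, w p := by
        rw [sum_filter, sum_sigma]
        simp
      simp only [Function.comp_def, oldBlock, newBlock, inl_mem_disjSum, mem_singleton]
      rw [hg.2 x, hfac, hF.sum_factor_eq_zero x, add_zero]
    · simp only [Function.comp_def, oldBlock, newBlock, inr_mem_disjSum,
        notMem_empty, filter_false, sum_empty, zero_add]
      rw [hF.sum_filter_sigma (y ∈ ·) w]
      exact hF.isZeroSumFlow.2 y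

end Doubling

def finSumFinSuccEquiv (v : ℕ) : Fin v ⊕ Fin (v + 1) ≃ Fin (2 * v + 1) :=
  finSumFinEquiv.trans (finCongr (by omega))

theorem finsetCongr_finSumFinSuccEquiv_oldBlock {v : ℕ} (h : v ≤ 2 * v + 1)
    (a : Finset (Fin v)) :
    (finSumFinSuccEquiv v).finsetCongr (oldBlock a) = a.image (Fin.castLE h) := by
  rw [Equiv.finsetCongr_apply, oldBlock, disjSum_empty, map_map, map_eq_image]
  rfl

/-- If K_{v+1} has a k-null 1-factorisation and an STS(v) has a
zero-sum ℓ-flow, then the STS(v) embeds into an STS(2v+1) with a zero-sum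
max(k,ℓ)-flow restricting to the original flow on the original blocks. -/
theorem stmt9 (v k l : ℕ)
    -- a k-null 1-factorisation of K_{v+1}: 1-factors F 0, ..., F (v-1)
    (F : Fin v → Finset (Finset (Fin (v+1))))
    (w : Finset (Fin (v+1)) → ℤ)
    (hecard : ∀ i, ∀ e ∈ F i, e.card = 2)
    (hmatch : ∀ (i : Fin v) (y : Fin (v+1)), ∃! e, e ∈ F i ∧ y ∈ e)
    (hedge : ∀ e : Finset (Fin (v+1)), e.card = 2 → ∃! i, e ∈ F i)
    (hwval : ∀ i, ∀ e ∈ F i, w e ≠ 0 ∧ |w e| ≤ (k:ℤ) - 1)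
    (hwvert : ∀ y : Fin (v+1),
      ∑ e ∈ Finset.univ.filter (fun e : Finset (Fin (v+1)) => e.card = 2 ∧ y ∈ e),
        w e = 0)
    (hwfac : ∀ i, ∑ e ∈ F i, w e = 0)
    -- an STS(v) with a zero-sum ℓ-flow
    (B : Finset (Finset (Fin v)))
    (hcard : ∀ b ∈ B, b.card = 3)
    (hpair : ∀ x y : Fin v, x ≠ y → (B.filter (fun b => x ∈ b ∧ y ∈ b)).card = 1)
    (g : Finset (Fin v) → ℤ)
    (hgval : ∀ b ∈ B, g b ≠ 0 ∧ |g b| ≤ (l:ℤ) - 1)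
    (hgflow : ∀ x : Fin v, ∑ b ∈ B.filter (fun b => x ∈ b), g b = 0) :
    ∃ B' : Finset (Finset (Fin (2*v+1))),
      (∀ b ∈ B', b.card = 3) ∧
      (∀ x y : Fin (2*v+1), x ≠ y →
        (B'.filter (fun b => x ∈ b ∧ y ∈ b)).card = 1) ∧
      B.image (Finset.image (Fin.castLE (by omega : v ≤ 2*v+1))) ⊆ B' ∧
      ∃ g' : Finset (Fin (2*v+1)) → ℤ,
        (∀ b ∈ B', g' b ≠ 0 ∧ |g' b| ≤ ((max k l : ℕ) : ℤ) - 1) ∧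
        (∀ x : Fin (2*v+1), ∑ b ∈ B'.filter (fun b => x ∈ b), g' b = 0) ∧
        (∀ b ∈ B, g' (b.image (Fin.castLE (by omega : v ≤ 2*v+1))) = g b) := by
  have hw : IsZeroSumFlow {e : Finset (Fin (v + 1)) | e.card = 2} w k := by
    refine ⟨fun e he => ?_, fun y => by simpa only [filter_filter] using hwvert y⟩
    obtain ⟨i, hi, -⟩ := hedge e (mem_filter.mp he).2
    exact hwval i e hi
  have hF : IsNullOneFactorisation F w k := ⟨⟨hecard, hmatch, hedge⟩, hw, hwfac⟩
  have hSTS := (isSteinerTripleSystem_doubledBlocks ⟨hcard, hpair⟩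
    hF.toIsOneFactorisation).map_finsetCongr (finSumFinSuccEquiv v)
  have hflow := (isZeroSumFlow_doubledFlow hF ⟨hgval, hgflow⟩).map_finsetCongr
    (finSumFinSuccEquiv v)
  refine ⟨_, hSTS.1, hSTS.2, ?_, _, hflow.1, hflow.2, fun a ha => ?_⟩
  · intro b hb
    obtain ⟨a, ha, rfl⟩ := mem_image.mp hb
    rw [← finsetCongr_finSumFinSuccEquiv_oldBlock]
    exact mem_map_of_mem _ (mem_union_left _ (mem_image_of_mem _ ha))
  · rw [Function.comp_apply, ← finsetCongr_finSumFinSuccEquiv_oldBlock, Equiv.symm_apply_apply,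
      doubledFlow_oldBlock]
end

section
/- For every n ≥ 3, the complete bipartite graph K_{n,n} admits a 3-null 1-factorisation: a 1-factorisation of K_{n,n} together with an assignment of values from {−2,−1,1,2} to the edges such that the sum of edge values at every vertex is zero and every 1-factor has total weight zero. -/
/-- weight pattern on `range k`, values in {±1,±2}, summing to 0 for `k ≥ 2`. -/
private def hh (k p : ℕ) : ℤ :=
  if Even k then (-1)^p else if p = 0 then 2 else if p ≤ 2 then -1 else (-1)^p

private lemma hh_ne (k p : ℕ) : hh k p ≠ 0 ∧ |hh k p| ≤ 2 := by
  have hpow : ∀ q : ℕ, ((-1:ℤ)^q ≠ 0 ∧ |(-1:ℤ)^q| ≤ 2) := by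
    intro q
    rcases Nat.even_or_odd q with h | h
    · rw [h.neg_one_pow]; norm_num
    · rw [h.neg_one_pow]; norm_num
  unfold hh
  split_ifs <;> first | exact hpow _ | norm_num

private lemma sum_hh (k : ℕ) (hk : 2 ≤ k) : ∑ p ∈ Finset.range k, hh k p = 0 := by
  rcases Nat.even_or_odd k with h | h
  · simp only [hh, if_pos h]
    rw [neg_one_geom_sum, if_pos h]
  · have hk3 : 3 ≤ k := by
      rcases h with ⟨r, hr⟩; omega
    have hne : ¬ Even k := Nat.not_even_iff_odd.mpr h
    have split1 : ∑ p ∈ Finset.Ico 0 3, hh k p + ∑ p ∈ Finset.Ico 3 k, hh k p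
        = ∑ p ∈ Finset.range k, hh k p := by
      rw [Finset.range_eq_Ico]; exact Finset.sum_Ico_consecutive _ (by omega) hk3
    have h1 : ∑ p ∈ Finset.Ico 0 3, hh k p = 0 := by
      simp [hh, hne, Finset.sum_Ico_eq_sum_range]
      decide
    have h2 : ∑ p ∈ Finset.Ico 3 k, hh k p = ∑ p ∈ Finset.Ico 3 k, (-1:ℤ)^p := by
      refine Finset.sum_congr rfl ?_
      intro p hp
      rw [Finset.mem_Ico] at hp
      simp [hh, hne]; omega
    have split2 : ∑ p ∈ Finset.Ico 0 3, (-1:ℤ)^p + ∑ p ∈ Finset.Ico 3 k, (-1:ℤ)^p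
        = ∑ p ∈ Finset.range k, (-1:ℤ)^p := by
      rw [Finset.range_eq_Ico]; exact Finset.sum_Ico_consecutive _ (by omega) hk3
    have h3 : ∑ p ∈ Finset.range k, (-1:ℤ)^p = 1 := by rw [neg_one_geom_sum, if_neg hne]
    have h4 : ∑ p ∈ Finset.Ico 0 3, (-1:ℤ)^p = 1 := by decide
    omega


private lemma pair_sum (g : ℕ → ℤ) (m : ℕ) :
    ∑ p ∈ Finset.range (2*m), (-1:ℤ)^p * g (p/2) = 0 := by
  induction m with
  | zero => simp
  | succ m ih =>
    have : 2*(m+1) = (2*m+1)+1 := by omega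
    rw [this, Finset.sum_range_succ, Finset.sum_range_succ, ih]
    have e1 : (2*m)/2 = m := by omega
    have e2 : (2*m+1)/2 = m := by omega
    have o1 : (-1:ℤ)^(2*m) = 1 := (even_two_mul m).neg_one_pow
    have o2 : (-1:ℤ)^(2*m+1) = -1 := by
      rw [pow_succ, o1]; ring
    rw [e1, e2, o1, o2]; ring

private lemma pair_sum2 (g : ℕ → ℤ) (m : ℕ) :
    ∑ p ∈ Finset.range (2*m), g (p/2) = 2 * ∑ q ∈ Finset.range m, g q := by
  induction m with
  | zero => simp
  | succ m ih =>
    have : 2*(m+1) = (2*m+1)+1 := by omega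
    rw [this, Finset.sum_range_succ, Finset.sum_range_succ, ih, Finset.sum_range_succ]
    have e1 : (2*m)/2 = m := by omega
    have e2 : (2*m+1)/2 = m := by omega
    rw [e1, e2]; ring

private lemma parity_sub (n : ℕ) [NeZero n] (hn : Even n) (t i : Fin n) :
    (-1:ℤ)^((t - i).val) = (-1)^(t.val) * (-1)^(i.val) := by
  have hd : (t - i).val = (n - i.val + t.val) % n := by
    rw [Fin.sub_def]
  have hmod : ∀ a : ℕ, (-1:ℤ)^(a % n) = (-1)^a := by
    intro a
    conv_rhs => rw [← Nat.div_add_mod a n]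
    rw [pow_add, pow_mul, hn.neg_one_pow, one_pow, one_mul]
  have hle : i.val ≤ n := le_of_lt i.isLt
  have key : (-1:ℤ)^(n - i.val) = (-1)^(i.val) := by
    have h1 : (-1:ℤ)^(n - i.val) * (-1)^(i.val) = 1 := by
      rw [← pow_add, Nat.sub_add_cancel hle, hn.neg_one_pow]
    have h2 : (-1:ℤ)^(i.val) * (-1)^(i.val) = 1 := by
      rw [← pow_add, ← two_mul, pow_mul]; norm_num
    calc (-1:ℤ)^(n - i.val) = (-1:ℤ)^(n - i.val) * ((-1)^(i.val) * (-1)^(i.val)) := by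
          rw [h2, mul_one]
      _ = ((-1:ℤ)^(n - i.val) * (-1)^(i.val)) * (-1)^(i.val) := by ring
      _ = (-1)^(i.val) := by rw [h1, one_mul]
  rw [hd, hmod, pow_add, key]; ring

private lemma double_inj (n : ℕ) [NeZero n] (hn : Odd n) :
    Function.Injective (fun i : Fin n => i + i) := by
  intro i j h
  simp only at h
  have hv : (i.val + i.val) % n = (j.val + j.val) % n := by
    have := congrArg Fin.val h
    rwa [Fin.add_def, Fin.add_def] at this
  have hm : 2 * i.val ≡ 2 * j.val [MOD n] := by
    show (2 * i.val) % n = (2 * j.val) % n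
    rw [two_mul, two_mul]; exact hv
  have hc : Nat.gcd n 2 = 1 := by
    have := Nat.coprime_two_left.mpr hn
    exact Nat.Coprime.gcd_eq_one (Nat.Coprime.symm this)
  have := Nat.ModEq.cancel_left_of_coprime hc hm
  unfold Nat.ModEq at this
  rw [Nat.mod_eq_of_lt i.isLt, Nat.mod_eq_of_lt j.isLt] at this
  exact Fin.val_injective this



private lemma factor_reduce (n : ℕ) [NeZero n] (w : Fin n → Fin n → ℤ) (t : Fin n) :
    ∑ i, ∑ j, (if i + j = t then w i j else 0) = ∑ i, w i (t - i) := by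
  refine Finset.sum_congr rfl ?_
  intro i _
  have hiff : ∀ j : Fin n, (i + j = t) ↔ (j = t - i) := by
    intro j
    rw [eq_sub_iff_add_eq, add_comm]
  simp only [hiff]
  rw [Finset.sum_ite_eq' Finset.univ (t - i) (fun j => w i j), if_pos (Finset.mem_univ _)]


/-- For every n ≥ 3, K_{n,n} admits a 3-null 1-factorisation.
The edge {i,j} (i in the left part, j in the right part) belongs to 1-factor
`M i j`, where `M` is a Latin square, and carries weight `w i j ∈ {±1,±2}`;
all vertex sums and all 1-factor sums vanish. -/
theorem stmt10 (n : ℕ) (hn : 3 ≤ n) :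
    ∃ (M : Fin n → Fin n → Fin n) (w : Fin n → Fin n → ℤ),
      (∀ i, Function.Bijective (M i)) ∧
      (∀ j, Function.Bijective (fun i => M i j)) ∧
      (∀ i j, w i j ≠ 0 ∧ |w i j| ≤ 2) ∧
      (∀ i, ∑ j, w i j = 0) ∧
      (∀ j, ∑ i, w i j = 0) ∧
      (∀ t : Fin n, ∑ i, ∑ j, (if M i j = t then w i j else 0) = 0) := by
  haveI : NeZero n := ⟨by omega⟩
  refine ⟨fun i j => i + j, ?_⟩
  rcases Nat.even_or_odd n with he | ho
  · -- even case
    obtain ⟨m, hm⟩ : ∃ m, n = 2 * m := by rcases he with ⟨r, hr⟩; exact ⟨r, by omega⟩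
    refine ⟨fun i j => (-1:ℤ)^(j.val) * hh m (i.val / 2), ?_, ?_, ?_, ?_, ?_, ?_⟩
    · exact fun i => (Equiv.addLeft i).bijective
    · exact fun j => (Equiv.addRight j).bijective
    · intro i j
      obtain ⟨h1, h2⟩ := hh_ne m (i.val / 2)
      constructor
      · intro h
        rcases mul_eq_zero.mp h with h | h
        · exact pow_ne_zero _ (by norm_num) h
        · exact h1 h
      · rw [abs_mul, abs_pow, abs_neg, abs_one, one_pow, one_mul]; exact h2
    · intro i
      rw [← Finset.sum_mul]
      have : ∑ j : Fin n, (-1:ℤ)^(j.val) = 0 := by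
        rw [Fin.sum_univ_eq_sum_range (fun p => (-1:ℤ)^p) n, neg_one_geom_sum, if_pos he]
      rw [this, zero_mul]
    · intro j
      rw [← Finset.mul_sum]
      have : ∑ i : Fin n, hh m (i.val / 2) = 0 := by
        rw [Fin.sum_univ_eq_sum_range (fun p => hh m (p / 2)) n, hm, pair_sum2,
          sum_hh m (by omega), mul_zero]
      rw [this, mul_zero]
    · intro t
      rw [factor_reduce]
      have step : ∀ i : Fin n, (-1:ℤ)^((t-i).val) * hh m (i.val / 2)
          = (-1)^(t.val) * ((-1)^(i.val) * hh m (i.val / 2)) := by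
        intro i; rw [parity_sub n he t i]; ring
      calc ∑ i : Fin n, (-1:ℤ)^((t-i).val) * hh m (i.val / 2)
          = ∑ i : Fin n, (-1:ℤ)^(t.val) * ((-1)^(i.val) * hh m (i.val / 2)) :=
            Finset.sum_congr rfl (fun i _ => step i)
        _ = (-1:ℤ)^(t.val) * ∑ i : Fin n, ((-1:ℤ)^(i.val) * hh m (i.val / 2)) := by
            rw [Finset.mul_sum]
        _ = 0 := by
            have hz : ∑ p ∈ Finset.range n, (-1:ℤ)^p * hh m (p / 2) = 0 := by
              rw [hm]; exact pair_sum _ m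
            rw [Fin.sum_univ_eq_sum_range (fun p => (-1:ℤ)^p * hh m (p / 2)) n, hz, mul_zero]
  · -- odd case
    refine ⟨fun i j => hh n ((j - i).val), ?_, ?_, ?_, ?_, ?_, ?_⟩
    · exact fun i => (Equiv.addLeft i).bijective
    · exact fun j => (Equiv.addRight j).bijective
    · exact fun i j => hh_ne n ((j - i).val)
    · intro i
      have := Equiv.sum_comp (Equiv.subRight i) (fun x : Fin n => hh n x.val)
      simp only [Equiv.subRight_apply] at this
      rw [this, Fin.sum_univ_eq_sum_range (fun p => hh n p) n, sum_hh n (by omega)]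
    · intro j
      have := Equiv.sum_comp (Equiv.subLeft j) (fun x : Fin n => hh n x.val)
      simp only [Equiv.subLeft_apply] at this
      rw [this, Fin.sum_univ_eq_sum_range (fun p => hh n p) n, sum_hh n (by omega)]
    · intro t
      rw [factor_reduce]
      have hbij : Function.Bijective (fun i : Fin n => i + i) :=
        Finite.injective_iff_bijective.mp (double_inj n ho)
      let e : Fin n ≃ Fin n := (Equiv.ofBijective _ hbij).trans (Equiv.subLeft t)
      have he : ∀ i : Fin n, e i = t - (i + i) := fun i => rfl
      have := Equiv.sum_comp e (fun x : Fin n => hh n x.val)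
      simp only [he] at this
      have hss : ∀ i : Fin n, t - i - i = t - (i + i) := fun i => sub_sub t i i
      calc ∑ i : Fin n, hh n ((t - i - i).val)
          = ∑ i : Fin n, hh n ((t - (i + i)).val) := by simp only [hss]
        _ = ∑ x : Fin n, hh n x.val := this
        _ = 0 := by
            rw [Fin.sum_univ_eq_sum_range (fun p => hh n p) n, sum_hh n (by omega)]
end

section
/- For every n ≡ 0 (mod 4) with n ≠ 4, the complete graph K_n admits a 3-null 1-factorisation: a partition of the edges into perfect matchings together with an edge assignment from {−2,−1,1,2} such that the values at every vertex sum to zero and each perfect matching has total weight zero. -/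
namespace S11
open Finset

/-! ### modular arithmetic helpers -/

lemma mod_eq_shift {m A B k1 k2 : ℕ} (h : A + m * k1 = B + m * k2) : A % m = B % m := by
  calc A % m = (A + m * k1) % m := (Nat.add_mul_mod_self_left A m k1).symm
    _ = (B + m * k2) % m := by rw [h]
    _ = B % m := Nat.add_mul_mod_self_left B m k2

lemma mod_eq_of_shift {m A B k1 k2 : ℕ} (hB : B < m) (h : A + m * k1 = B + m * k2) :
    A % m = B := by rw [mod_eq_shift h, Nat.mod_eq_of_lt hB]

/-! ### sum reindexing helpers -/

lemma sum_range_comp (F : ℕ → ℤ) {m : ℕ} (φ ψ : ℕ → ℕ)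
    (hφ : ∀ j < m, φ j < m) (hψ : ∀ j < m, ψ j < m)
    (h1 : ∀ j < m, ψ (φ j) = j) (h2 : ∀ j < m, φ (ψ j) = j) :
    ∑ j ∈ range m, F (φ j) = ∑ j ∈ range m, F j := by
  refine Finset.sum_nbij' φ ψ ?_ ?_ ?_ ?_ ?_
  · exact fun a ha => mem_range.mpr (hφ a (mem_range.mp ha))
  · exact fun a ha => mem_range.mpr (hψ a (mem_range.mp ha))
  · exact fun a ha => h1 a (mem_range.mp ha)
  · exact fun a ha => h2 a (mem_range.mp ha)
  · exact fun a _ => rfl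

lemma sum_range_rot (F : ℕ → ℤ) {m : ℕ} (hm : 0 < m) (d : ℕ) :
    ∑ j ∈ range m, F ((j + d) % m) = ∑ j ∈ range m, F j := by
  obtain ⟨l, hl⟩ : ∃ l, d = m * l + d % m := ⟨_, (Nat.div_add_mod _ _).symm⟩
  have hdm : d % m < m := Nat.mod_lt _ hm
  have hml : m * (1 + l) = m + m * l := by ring
  refine sum_range_comp F _ (fun j => (j + (m - d % m)) % m)
    (fun j hj => Nat.mod_lt _ hm) (fun j hj => Nat.mod_lt _ hm) ?_ ?_
  · intro j hj
    obtain ⟨k, hk⟩ : ∃ k, j + d = m * k + (j + d) % m := ⟨_, (Nat.div_add_mod _ _).symm⟩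
    have hlt : (j + d) % m < m := Nat.mod_lt _ hm
    exact mod_eq_of_shift hj (k1 := k) (k2 := 1 + l) (by omega)
  · intro j hj
    show ((j + (m - d % m)) % m + d) % m = j
    obtain ⟨k, hk⟩ : ∃ k, j + (m - d % m) = m * k + (j + (m - d % m)) % m :=
      ⟨_, (Nat.div_add_mod _ _).symm⟩
    have hlt : (j + (m - d % m)) % m < m := Nat.mod_lt _ hm
    exact mod_eq_of_shift hj (k1 := k) (k2 := 1 + l) (by omega)

lemma sum_range_refl (F : ℕ → ℤ) {m : ℕ} (hm : 0 < m) (d : ℕ) :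
    ∑ j ∈ range m, F ((d + (m - j)) % m) = ∑ j ∈ range m, F j := by
  have key : ∀ j < m, (d + (m - (d + (m - j)) % m)) % m = j := by
    intro j hj
    obtain ⟨k, hk⟩ : ∃ k, d + (m - j) = m * k + (d + (m - j)) % m :=
      ⟨_, (Nat.div_add_mod _ _).symm⟩
    have hlt : (d + (m - j)) % m < m := Nat.mod_lt _ hm
    exact mod_eq_of_shift hj (k1 := 0) (k2 := k) (by omega)
  refine sum_range_comp F _ (fun j => (d + (m - j)) % m)
    (fun j hj => Nat.mod_lt _ hm) (fun j hj => Nat.mod_lt _ hm) ?_ ?_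
  · exact key
  · exact key

lemma sum_range_two_mul (F : ℕ → ℤ) (r : ℕ) :
    ∑ z ∈ range (2 * r), F (z / 2) = 2 * ∑ j ∈ range r, F j := by
  induction r with
  | zero => simp
  | succ k ih =>
    have h2 : 2 * (k + 1) = (2 * k + 1) + 1 := by ring
    rw [h2, Finset.sum_range_succ, Finset.sum_range_succ, ih, Finset.sum_range_succ]
    have e1 : (2 * k) / 2 = k := by omega
    have e2 : (2 * k + 1) / 2 = k := by omega
    rw [e1, e2]; ring

/-! ### the weight functions -/

def ff (t : ℕ) : ℤ := if t = 0 then 2 else if t < 3 then -1 else (-1) ^ t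

def hh (r j : ℕ) : ℤ :=
  if r % 2 = 0 then (-1) ^ j else if j = 0 then 2 else if j < 3 then -1 else (-1) ^ (j + 1)

def gg (r z : ℕ) : ℤ := hh r (z / 2)

lemma neg_one_pow_cases (t : ℕ) : ((-1 : ℤ)) ^ t = 1 ∨ ((-1 : ℤ)) ^ t = -1 :=
  (Nat.even_or_odd t).imp Even.neg_one_pow Odd.neg_one_pow

lemma ff_cases (t : ℕ) : ff t = 2 ∨ ff t = 1 ∨ ff t = -1 := by
  unfold ff; split_ifs
  · left; rfl
  · right; right; rfl
  · rcases neg_one_pow_cases t with h | h <;> rw [h] <;> tauto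

lemma hh_cases (r j : ℕ) : hh r j = 2 ∨ hh r j = 1 ∨ hh r j = -1 := by
  unfold hh; split_ifs
  · rcases neg_one_pow_cases j with h | h <;> rw [h] <;> tauto
  · left; rfl
  · right; right; rfl
  · rcases neg_one_pow_cases (j + 1) with h | h <;> rw [h] <;> tauto

lemma sum_ff (r : ℕ) (hr : 2 ≤ r) : ∑ t ∈ range (2 * r - 1), ff t = 0 := by
  have h3 : 3 ≤ 2 * r - 1 := by omega
  have hsplit : ∀ (G : ℕ → ℤ), ∑ t ∈ range (2 * r - 1), G t
      = ∑ t ∈ range 3, G t + ∑ t ∈ Ico 3 (2 * r - 1), G t := by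
    intro G
    rw [← Nat.Ico_zero_eq_range, ← Finset.sum_Ico_consecutive _ (Nat.zero_le 3) h3,
      Nat.Ico_zero_eq_range]
  have htail : ∑ t ∈ Ico 3 (2 * r - 1), ff t = ∑ t ∈ Ico 3 (2 * r - 1), (-1 : ℤ) ^ t := by
    refine Finset.sum_congr rfl fun t ht => ?_
    have := (Finset.mem_Ico.mp ht).1
    unfold ff
    rw [if_neg (by omega), if_neg (by omega)]
  have hgeom : ∑ t ∈ range (2 * r - 1), ((-1 : ℤ)) ^ t = 1 := by
    rw [neg_one_geom_sum, if_neg]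
    rw [Nat.even_sub (by omega)]
    simp [Nat.even_mul]
  have hgeom3 : ∑ t ∈ range 3, ((-1 : ℤ)) ^ t = 1 := by decide
  have hhead : ∑ t ∈ range 3, ff t = 0 := by decide
  have h2 := hsplit ff
  have h4 := hsplit (fun t => (-1 : ℤ) ^ t)
  omega

lemma sum_hh (r : ℕ) (hr : 2 ≤ r) : ∑ j ∈ range r, hh r j = 0 := by
  rcases Nat.even_or_odd r with he | ho
  · have : ∀ j, hh r j = (-1 : ℤ) ^ j := by
      intro j; unfold hh; rw [if_pos (Nat.even_iff.mp he)]
    simp only [this]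
    rw [neg_one_geom_sum, if_pos he]
  · have hodd : r % 2 = 1 := Nat.odd_iff.mp ho
    have h3 : 3 ≤ r := by omega
    have hval : ∀ j, hh r j = if j = 0 then 2 else if j < 3 then -1 else (-1) ^ (j + 1) := by
      intro j; unfold hh; rw [if_neg (by omega)]
    have hsplit : ∀ (G : ℕ → ℤ), ∑ t ∈ range r, G t
        = ∑ t ∈ range 3, G t + ∑ t ∈ Ico 3 r, G t := by
      intro G
      rw [← Nat.Ico_zero_eq_range, ← Finset.sum_Ico_consecutive _ (Nat.zero_le 3) h3,
        Nat.Ico_zero_eq_range]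
    have htail : ∑ t ∈ Ico 3 r, hh r t = ∑ t ∈ Ico 3 r, (-(-1 : ℤ) ^ t) := by
      refine Finset.sum_congr rfl fun t ht => ?_
      have := (Finset.mem_Ico.mp ht).1
      rw [hval t, if_neg (by omega), if_neg (by omega), pow_succ]
      ring
    have hgeom : ∑ t ∈ range r, ((-1 : ℤ)) ^ t = 1 := by
      rw [neg_one_geom_sum, if_neg (Nat.not_even_iff_odd.mpr ho)]
    have hgeom3 : ∑ t ∈ range 3, ((-1 : ℤ)) ^ t = 1 := by decide
    have hhead : ∑ t ∈ range 3, hh r t = 0 := by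
      rw [Finset.sum_range_succ, Finset.sum_range_succ, Finset.sum_range_succ,
        Finset.sum_range_zero, hval, hval, hval]
      norm_num
    have htail2 : ∑ t ∈ Ico 3 r, (-(-1 : ℤ) ^ t) = - ∑ t ∈ Ico 3 r, ((-1 : ℤ)) ^ t := by
      rw [Finset.sum_neg_distrib]
    have h2 := hsplit (hh r)
    have h4 := hsplit (fun t => (-1 : ℤ) ^ t)
    omega

lemma sum_gg (r : ℕ) (hr : 2 ≤ r) : ∑ z ∈ range (2 * r), gg r z = 0 := by
  have : ∑ z ∈ range (2 * r), gg r z = 2 * ∑ j ∈ range r, hh r j :=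
    sum_range_two_mul (hh r) r
  rw [this, sum_hh r hr, mul_zero]

lemma div2_mod (r y c : ℕ) (hr : 0 < r) :
    ((2 * y + c) % (2 * r)) / 2 = (y + c / 2) % r := by
  obtain ⟨k, hk⟩ : ∃ k, 2 * y + c = 2 * r * k + (2 * y + c) % (2 * r) :=
    ⟨_, (Nat.div_add_mod _ _).symm⟩
  set t := (2 * y + c) % (2 * r) with hts
  have htlt : t < 2 * r := Nat.mod_lt _ (by omega)
  have htp : t % 2 = c % 2 := by
    have h1 : t % 2 = (2 * y + c) % 2 := by
      rw [hts]; exact Nat.mod_mod_of_dvd _ ⟨r, by ring⟩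
    rw [h1, Nat.mul_add_mod]
  have h5 : y + c / 2 = r * k + t / 2 := by
    have e1 := Nat.div_add_mod t 2
    have e2 := Nat.div_add_mod c 2
    have e3 : 2 * (r * k) = 2 * r * k := by ring
    omega
  rw [h5, Nat.mul_add_mod, Nat.mod_eq_of_lt (by omega)]


/-! ### round-robin 1-factorisation of `K_{2r}` -/

def rr (r a b : ℕ) : ℕ :=
  if a = 2 * r - 1 then b else if b = 2 * r - 1 then a else ((a + b) * r) % (2 * r - 1)

def pa (r a t : ℕ) : ℕ :=
  if a = 2 * r - 1 then t else if a = t then 2 * r - 1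
  else (2 * t + 2 * (2 * r - 1) - a) % (2 * r - 1)

/-- key cancellation: `2 * z * r ≡ z (mod 2r-1)`. -/
lemma two_mul_r_mod (r : ℕ) (hr : 2 ≤ r) (z : ℕ) :
    (2 * z * r) % (2 * r - 1) = z % (2 * r - 1) := by
  have h1 : 2 * z * r + (2 * r - 1) * 0 = z + (2 * r - 1) * z := by
    have : 2 * r = (2 * r - 1) + 1 := by omega
    calc 2 * z * r + (2 * r - 1) * 0 = z * (2 * r) := by ring
      _ = z * ((2 * r - 1) + 1) := by rw [← this]
      _ = z + (2 * r - 1) * z := by ring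
  exact mod_eq_shift h1

lemma rr_comm (r a b : ℕ) : rr r a b = rr r b a := by
  unfold rr
  split_ifs <;> first | omega | rw [Nat.add_comm]

lemma rr_lt (r : ℕ) (hr : 2 ≤ r) {a b : ℕ} (ha : a < 2 * r) (hb : b < 2 * r) (hab : a ≠ b) :
    rr r a b < 2 * r - 1 := by
  unfold rr
  split_ifs with h1 h2
  · omega
  · omega
  · exact Nat.mod_lt _ (by omega)

lemma rr_lt_all (r : ℕ) (hr : 2 ≤ r) {a b : ℕ} (ha : a < 2 * r) (hb : b < 2 * r) :
    rr r a b < 4 * r - 1 := by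
  unfold rr
  split_ifs with h1 h2
  · omega
  · omega
  · have := Nat.mod_lt ((a + b) * r) (show 0 < 2 * r - 1 by omega)
    omega

lemma pa_lt (r : ℕ) (hr : 2 ≤ r) {a t : ℕ} (ha : a < 2 * r) (ht : t < 2 * r - 1) :
    pa r a t < 2 * r := by
  unfold pa
  split_ifs with h1 h2
  · omega
  · omega
  · have := Nat.mod_lt (2 * t + 2 * (2 * r - 1) - a) (show 0 < 2 * r - 1 by omega)
    omega

lemma pa_ne (r : ℕ) (hr : 2 ≤ r) {a t : ℕ} (ha : a < 2 * r) (ht : t < 2 * r - 1) :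
    pa r a t ≠ a := by
  unfold pa
  split_ifs with h1 h2
  · omega
  · omega
  · intro hcon
    -- from (2t + 2q - a) % q = a derive t ≡ a, contradiction with h2
    obtain ⟨k, hk⟩ : ∃ k, 2 * t + 2 * (2 * r - 1) - a
        = (2 * r - 1) * k + (2 * t + 2 * (2 * r - 1) - a) % (2 * r - 1) :=
      ⟨_, (Nat.div_add_mod _ _).symm⟩
    rw [hcon] at hk
    -- 2t + 2q = q*k + 2a  (as a ≤ q ≤ 2t+2q)
    have h2t : (2 * t) % (2 * r - 1) = (2 * a) % (2 * r - 1) :=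
      mod_eq_shift (A := 2 * t) (B := 2 * a) (k1 := 2) (k2 := k) (by omega)
    have h3 : (2 * t * r) % (2 * r - 1) = (2 * a * r) % (2 * r - 1) :=
      Nat.ModEq.mul_right r h2t
    rw [two_mul_r_mod r hr, two_mul_r_mod r hr, Nat.mod_eq_of_lt ht,
      Nat.mod_eq_of_lt (by omega)] at h3
    exact h2 h3.symm

lemma rr_pa (r : ℕ) (hr : 2 ≤ r) {a t : ℕ} (ha : a < 2 * r) (ht : t < 2 * r - 1) :
    rr r a (pa r a t) = t := by
  have hq : 0 < 2 * r - 1 := by omega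
  by_cases h1 : a = 2 * r - 1
  · have hpa : pa r a t = t := by unfold pa; rw [if_pos h1]
    rw [hpa]; unfold rr; rw [if_pos h1]
  · by_cases h2 : a = t
    · have hpa : pa r a t = 2 * r - 1 := by unfold pa; rw [if_neg h1, if_pos h2]
      rw [hpa]; unfold rr; rw [if_neg h1, if_pos rfl]; exact h2
    · have hpa : pa r a t = (2 * t + 2 * (2 * r - 1) - a) % (2 * r - 1) := by
        unfold pa; rw [if_neg h1, if_neg h2]
      have hu : (2 * t + 2 * (2 * r - 1) - a) % (2 * r - 1) < 2 * r - 1 := Nat.mod_lt _ hq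
      rw [hpa]; unfold rr; rw [if_neg h1, if_neg (by omega)]
      obtain ⟨k, hk⟩ : ∃ k, 2 * t + 2 * (2 * r - 1) - a
          = (2 * r - 1) * k + (2 * t + 2 * (2 * r - 1) - a) % (2 * r - 1) :=
        ⟨_, (Nat.div_add_mod _ _).symm⟩
      have hmod : (a + (2 * t + 2 * (2 * r - 1) - a) % (2 * r - 1)) % (2 * r - 1)
          = (2 * t) % (2 * r - 1) :=
        mod_eq_shift (k1 := k) (k2 := 2) (by omega)
      rw [Nat.mul_mod, hmod, ← Nat.mul_mod, two_mul_r_mod r hr, Nat.mod_eq_of_lt ht]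

lemma rr_inj (r : ℕ) (hr : 2 ≤ r) {a b t : ℕ} (ha : a < 2 * r) (hb : b < 2 * r)
    (hne : b ≠ a) (ht : t < 2 * r - 1) (h : rr r a b = t) : b = pa r a t := by
  have hq : 0 < 2 * r - 1 := by omega
  unfold rr at h
  by_cases h1 : a = 2 * r - 1
  · rw [if_pos h1] at h
    unfold pa; rw [if_pos h1]; exact h
  by_cases h2 : b = 2 * r - 1
  · rw [if_neg h1, if_pos h2] at h
    unfold pa; rw [if_neg h1, if_pos h]; exact h2
  · rw [if_neg h1, if_neg h2] at h
    -- from h : ((a+b)*r) % q = t we get (a+b) % q = (2t) % q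
    obtain ⟨k, hk⟩ : ∃ k, (a + b) * r = (2 * r - 1) * k + ((a + b) * r) % (2 * r - 1) :=
      ⟨_, (Nat.div_add_mod _ _).symm⟩
    rw [h] at hk
    have hlink : (2 * r - 1) * (2 * k) = 2 * ((2 * r - 1) * k) := by ring
    have he : 2 * (a + b) * r = 2 * ((a + b) * r) := by ring
    have hd : (2 * (a + b) * r) % (2 * r - 1) = (2 * t) % (2 * r - 1) := by
      rw [he]
      exact mod_eq_shift (k1 := 0) (k2 := 2 * k) (by omega)
    rw [two_mul_r_mod r hr] at hd
    -- hd : (a + b) % q = (2*t) % q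
    obtain ⟨k2, hk2⟩ : ∃ k2, a + b = (2 * r - 1) * k2 + (a + b) % (2 * r - 1) :=
      ⟨_, (Nat.div_add_mod _ _).symm⟩
    obtain ⟨k3, hk3⟩ : ∃ k3, 2 * t = (2 * r - 1) * k3 + (2 * t) % (2 * r - 1) :=
      ⟨_, (Nat.div_add_mod _ _).symm⟩
    have hblt : b < 2 * r - 1 := by omega
    have halt : a < 2 * r - 1 := by omega
    have hat : ¬ a = t := by
      intro hat
      apply hne
      have hfin : b % (2 * r - 1) = a % (2 * r - 1) := by
        refine mod_eq_shift (k1 := k3) (k2 := k2) ?_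
        subst hat
        omega
      rwa [Nat.mod_eq_of_lt hblt, Nat.mod_eq_of_lt halt] at hfin
    unfold pa; rw [if_neg h1, if_neg hat]
    refine (mod_eq_of_shift (hB := hblt) (k1 := k2) (k2 := k3 + 2) ?_).symm
    have hlink2 : (2 * r - 1) * (k3 + 2) = (2 * r - 1) * k3 + 2 * (2 * r - 1) := by ring
    omega

/-! ### bipartite modular identities -/

lemma bip1 {m x s : ℕ} (hm : 0 < m) (hx : x < m) (hs : s < m) :
    ((x + s) % m + (m - x)) % m = s := by
  obtain ⟨k, hk⟩ : ∃ k, x + s = m * k + (x + s) % m := ⟨_, (Nat.div_add_mod _ _).symm⟩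
  have hlt : (x + s) % m < m := Nat.mod_lt _ hm
  exact mod_eq_of_shift hs (k1 := k) (k2 := 1) (by omega)

lemma bip2 {m x s y : ℕ} (hm : 0 < m) (hx : x < m) (hy : y < m)
    (h : (y + (m - x)) % m = s) : y = (x + s) % m := by
  obtain ⟨k, hk⟩ : ∃ k, y + (m - x) = m * k + s := by
    refine ⟨(y + (m - x)) / m, ?_⟩; rw [← h, Nat.div_add_mod]
  exact (mod_eq_of_shift hy (k1 := k) (k2 := 1) (by omega)).symm

lemma bip3 {m x s : ℕ} (hm : 0 < m) (hx : x < m) (hs : s < m) :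
    (x + (m - (x + (m - s)) % m)) % m = s := by
  obtain ⟨k, hk⟩ : ∃ k, x + (m - s) = m * k + (x + (m - s)) % m :=
    ⟨_, (Nat.div_add_mod _ _).symm⟩
  have hlt : (x + (m - s)) % m < m := Nat.mod_lt _ hm
  exact mod_eq_of_shift hs (k1 := 0) (k2 := k) (by omega)

lemma bip4 {m x s y : ℕ} (hm : 0 < m) (hx : x < m) (hy : y < m) (hs : s < m)
    (h : (x + (m - y)) % m = s) : y = (x + (m - s)) % m := by
  obtain ⟨k, hk⟩ : ∃ k, x + (m - y) = m * k + s := by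
    refine ⟨(x + (m - y)) / m, ?_⟩; rw [← h, Nat.div_add_mod]
  exact (mod_eq_of_shift hy (k1 := 0) (k2 := k) (by omega)).symm

lemma bipI6 {m x s : ℕ} (hm : 0 < m) (hx : x < m) (hs : s < m) :
    (2 * x + (m - (x + s) % m)) % m = (x + (m - s)) % m := by
  obtain ⟨k, hk⟩ : ∃ k, x + s = m * k + (x + s) % m := ⟨_, (Nat.div_add_mod _ _).symm⟩
  have hlt : (x + s) % m < m := Nat.mod_lt _ hm
  exact mod_eq_shift (k1 := 0) (k2 := k) (by omega)

lemma bipI7 {m z s : ℕ} (hm : 0 < m) (hz : z < m) (hs : s < m) :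
    (2 * ((z + (m - s)) % m) + (m - z)) % m = (z + 2 * (m - s)) % m := by
  obtain ⟨k, hk⟩ : ∃ k, z + (m - s) = m * k + (z + (m - s)) % m :=
    ⟨_, (Nat.div_add_mod _ _).symm⟩
  have hlt : (z + (m - s)) % m < m := Nat.mod_lt _ hm
  have hlink : m * (2 * k) = 2 * (m * k) := by ring
  exact mod_eq_shift (k1 := 2 * k) (k2 := 1) (by omega)

/-! ### the global construction on `K_{4r}` -/

def cc (r a b : ℕ) : ℕ :=
  if a < 2 * r then
    (if b < 2 * r then rr r a b else 2 * r - 1 + (b - 2 * r + (2 * r - a)) % (2 * r))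
  else
    (if b < 2 * r then 2 * r - 1 + (a - 2 * r + (2 * r - b)) % (2 * r)
     else rr r (a - 2 * r) (b - 2 * r))

def ww (r a b : ℕ) : ℤ :=
  if a < 2 * r then
    (if b < 2 * r then ff (rr r a b)
     else gg r ((2 * a + (2 * r - (b - 2 * r))) % (2 * r)))
  else
    (if b < 2 * r then gg r ((2 * b + (2 * r - (a - 2 * r))) % (2 * r))
     else - ff (rr r (a - 2 * r) (b - 2 * r)))

def PP (r t x : ℕ) : ℕ :=
  if t < 2 * r - 1 then
    (if x < 2 * r then pa r x t else 2 * r + pa r (x - 2 * r) t)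
  else
    (if x < 2 * r then 2 * r + (x + (t - (2 * r - 1))) % (2 * r)
     else (x - 2 * r + (2 * r - (t - (2 * r - 1)))) % (2 * r))

lemma cc_lt (r : ℕ) (hr : 2 ≤ r) {a b : ℕ} (ha : a < 4 * r) (hb : b < 4 * r) :
    cc r a b < 4 * r - 1 := by
  have hm : 0 < 2 * r := by omega
  unfold cc
  split_ifs with h1 h2 h3
  · exact rr_lt_all r hr h1 h2
  · have := Nat.mod_lt (b - 2 * r + (2 * r - a)) hm; omega
  · have := Nat.mod_lt (a - 2 * r + (2 * r - b)) hm; omega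
  · exact rr_lt_all r hr (by omega) (by omega)

lemma cc_comm (r : ℕ) (a b : ℕ) : cc r a b = cc r b a := by
  unfold cc
  split_ifs <;> first | rw [rr_comm] | rfl | omega

lemma ww_comm (r : ℕ) (a b : ℕ) : ww r a b = ww r b a := by
  unfold ww
  split_ifs <;> first | rw [rr_comm] | rfl | omega

lemma ww_cases (r a b : ℕ) : ww r a b = 2 ∨ ww r a b = 1 ∨ ww r a b = -1 ∨ ww r a b = -2 := by
  unfold ww
  split_ifs
  · rcases ff_cases (rr r a b) with h | h | h <;> rw [h] <;> tauto
  · rcases hh_cases r ((2 * a + (2 * r - (b - 2 * r))) % (2 * r) / 2) with h | h | h <;>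
      [skip; skip; skip] <;> unfold gg <;> rw [h] <;> tauto
  · rcases hh_cases r ((2 * b + (2 * r - (a - 2 * r))) % (2 * r) / 2) with h | h | h <;>
      unfold gg <;> rw [h] <;> tauto
  · rcases ff_cases (rr r (a - 2 * r) (b - 2 * r)) with h | h | h <;> rw [h] <;> norm_num

lemma PP_lt (r : ℕ) (hr : 2 ≤ r) {t x : ℕ} (ht : t < 4 * r - 1) (hx : x < 4 * r) :
    PP r t x < 4 * r := by
  have hm : 0 < 2 * r := by omega
  unfold PP
  split_ifs with h1 h2 h3
  · have := pa_lt r hr (a := x) (t := t) h2 h1; omega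
  · have := pa_lt r hr (a := x - 2 * r) (t := t) (by omega) h1; omega
  · have := Nat.mod_lt (x + (t - (2 * r - 1))) hm; omega
  · have := Nat.mod_lt (x - 2 * r + (2 * r - (t - (2 * r - 1)))) hm; omega

lemma PP_ne (r : ℕ) (hr : 2 ≤ r) {t x : ℕ} (ht : t < 4 * r - 1) (hx : x < 4 * r) :
    PP r t x ≠ x := by
  have hm : 0 < 2 * r := by omega
  unfold PP
  split_ifs with h1 h2 h3
  · exact pa_ne r hr h2 h1
  · have h4 := pa_ne r hr (a := x - 2 * r) (t := t) (by omega) h1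
    have h5 := pa_lt r hr (a := x - 2 * r) (t := t) (by omega) h1
    omega
  · have := Nat.mod_lt (x + (t - (2 * r - 1))) hm; omega
  · have := Nat.mod_lt (x - 2 * r + (2 * r - (t - (2 * r - 1)))) hm; omega

lemma cc_PP (r : ℕ) (hr : 2 ≤ r) {t x : ℕ} (ht : t < 4 * r - 1) (hx : x < 4 * r) :
    cc r x (PP r t x) = t := by
  have hm : 0 < 2 * r := by omega
  by_cases h1 : t < 2 * r - 1
  · by_cases h2 : x < 2 * r
    · have hpp : PP r t x = pa r x t := by unfold PP; rw [if_pos h1, if_pos h2]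
      have hlt := pa_lt r hr h2 h1
      rw [hpp]; unfold cc; rw [if_pos h2, if_pos hlt]
      exact rr_pa r hr h2 h1
    · have hpp : PP r t x = 2 * r + pa r (x - 2 * r) t := by
        unfold PP; rw [if_pos h1, if_neg h2]
      have hlt := pa_lt r hr (a := x - 2 * r) (by omega) h1
      rw [hpp]; unfold cc; rw [if_neg h2, if_neg (by omega)]
      have he : 2 * r + pa r (x - 2 * r) t - 2 * r = pa r (x - 2 * r) t := by omega
      rw [he]
      exact rr_pa r hr (by omega) h1
  · have hs : t - (2 * r - 1) < 2 * r := by omega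
    by_cases h2 : x < 2 * r
    · have hpp : PP r t x = 2 * r + (x + (t - (2 * r - 1))) % (2 * r) := by
        unfold PP; rw [if_neg h1, if_pos h2]
      rw [hpp]; unfold cc; rw [if_pos h2, if_neg (by omega)]
      have he : 2 * r + (x + (t - (2 * r - 1))) % (2 * r) - 2 * r
          = (x + (t - (2 * r - 1))) % (2 * r) := by omega
      rw [he, bip1 hm h2 hs]
      omega
    · have hpp : PP r t x = (x - 2 * r + (2 * r - (t - (2 * r - 1)))) % (2 * r) := by
        unfold PP; rw [if_neg h1, if_neg h2]
      have hlt : PP r t x < 2 * r := by rw [hpp]; exact Nat.mod_lt _ hm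
      rw [hpp]; unfold cc; rw [if_neg h2, if_pos (hpp ▸ hlt)]
      rw [bip3 hm (by omega) hs]
      omega

lemma cc_inj (r : ℕ) (hr : 2 ≤ r) {a b t : ℕ} (ha : a < 4 * r) (hb : b < 4 * r)
    (hne : b ≠ a) (ht : t < 4 * r - 1) (h : cc r a b = t) : b = PP r t a := by
  have hm : 0 < 2 * r := by omega
  by_cases h1 : a < 2 * r <;> by_cases h2 : b < 2 * r
  · -- both in A
    have hcc : rr r a b = t := by
      have : cc r a b = rr r a b := by unfold cc; rw [if_pos h1, if_pos h2]
      omega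
    have htq : t < 2 * r - 1 := by
      have := rr_lt r hr h1 h2 (fun hh => hne hh.symm)
      omega
    unfold PP; rw [if_pos htq, if_pos h1]
    exact rr_inj r hr h1 h2 hne htq hcc
  · -- a in A, b in B
    have hcc : 2 * r - 1 + (b - 2 * r + (2 * r - a)) % (2 * r) = t := by
      have : cc r a b = 2 * r - 1 + (b - 2 * r + (2 * r - a)) % (2 * r) := by
        unfold cc; rw [if_pos h1, if_neg h2]
      omega
    have hmod : (b - 2 * r + (2 * r - a)) % (2 * r) < 2 * r := Nat.mod_lt _ hm
    have htq : ¬ t < 2 * r - 1 := by omega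
    unfold PP; rw [if_neg htq, if_pos h1]
    have hs : (b - 2 * r + (2 * r - a)) % (2 * r) = t - (2 * r - 1) := by omega
    have hb2 := bip2 hm h1 (show b - 2 * r < 2 * r by omega) hs
    omega
  · -- a in B, b in A
    have hcc : (a - 2 * r + (2 * r - b)) % (2 * r) = t - (2 * r - 1) := by
      have : cc r a b = 2 * r - 1 + (a - 2 * r + (2 * r - b)) % (2 * r) := by
        unfold cc; rw [if_neg h1, if_pos h2]
      have hmod : (a - 2 * r + (2 * r - b)) % (2 * r) < 2 * r := Nat.mod_lt _ hm
      omega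
    have hmod : (a - 2 * r + (2 * r - b)) % (2 * r) < 2 * r := Nat.mod_lt _ hm
    have htq : ¬ t < 2 * r - 1 := by
      have : cc r a b = 2 * r - 1 + (a - 2 * r + (2 * r - b)) % (2 * r) := by
        unfold cc; rw [if_neg h1, if_pos h2]
      omega
    unfold PP; rw [if_neg htq, if_neg h1]
    exact bip4 hm (by omega) h2 (by omega) hcc
  · -- both in B
    have hcc : rr r (a - 2 * r) (b - 2 * r) = t := by
      have : cc r a b = rr r (a - 2 * r) (b - 2 * r) := by
        unfold cc; rw [if_neg h1, if_neg h2]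
      omega
    have htq : t < 2 * r - 1 :=
      hcc ▸ rr_lt r hr (by omega) (by omega) (by omega)
    unfold PP; rw [if_pos htq, if_neg h1]
    have := rr_inj r hr (a := a - 2 * r) (b := b - 2 * r) (by omega) (by omega)
      (by omega) htq hcc
    omega

/-! ### pointwise evaluation lemmas for the sums -/

lemma ww_PP_within_A (r : ℕ) (hr : 2 ≤ r) {x tt : ℕ} (hx : x < 2 * r) (ht : tt < 2 * r - 1) :
    ww r x (PP r tt x) = ff tt := by
  have hpp : PP r tt x = pa r x tt := by unfold PP; rw [if_pos ht, if_pos hx]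
  have hlt := pa_lt r hr hx ht
  rw [hpp]; unfold ww; rw [if_pos hx, if_pos hlt, rr_pa r hr hx ht]

lemma ww_PP_within_B (r : ℕ) (hr : 2 ≤ r) {x tt : ℕ} (hx1 : 2 * r ≤ x) (hx2 : x < 4 * r)
    (ht : tt < 2 * r - 1) : ww r x (PP r tt x) = - ff tt := by
  have hpp : PP r tt x = 2 * r + pa r (x - 2 * r) tt := by
    unfold PP; rw [if_pos ht, if_neg (by omega)]
  have hlt := pa_lt r hr (a := x - 2 * r) (by omega) ht
  rw [hpp]; unfold ww; rw [if_neg (by omega), if_neg (by omega)]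
  have he : 2 * r + pa r (x - 2 * r) tt - 2 * r = pa r (x - 2 * r) tt := by omega
  rw [he, rr_pa r hr (by omega) ht]

lemma ww_PP_bip_A (r : ℕ) (hr : 2 ≤ r) {x s : ℕ} (hx : x < 2 * r) (hs : s < 2 * r) :
    ww r x (PP r (2 * r - 1 + s) x) = gg r ((x + (2 * r - s)) % (2 * r)) := by
  have hm : 0 < 2 * r := by omega
  have hpp : PP r (2 * r - 1 + s) x = 2 * r + (x + s) % (2 * r) := by
    unfold PP; rw [if_neg (by omega), if_pos hx]
    congr 1; congr 1; omega
  have hlt : (x + s) % (2 * r) < 2 * r := Nat.mod_lt _ hm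
  rw [hpp]; unfold ww; rw [if_pos hx, if_neg (by omega)]
  have he : 2 * r + (x + s) % (2 * r) - 2 * r = (x + s) % (2 * r) := by omega
  rw [he]
  unfold gg
  rw [bipI6 hm hx hs]

lemma ww_PP_bip_B (r : ℕ) (hr : 2 ≤ r) {x s : ℕ} (hx1 : 2 * r ≤ x) (hx2 : x < 4 * r)
    (hs : s < 2 * r) :
    ww r x (PP r (2 * r - 1 + s) x) = gg r ((x - 2 * r + 2 * (2 * r - s)) % (2 * r)) := by
  have hm : 0 < 2 * r := by omega
  have hpp : PP r (2 * r - 1 + s) x = (x - 2 * r + (2 * r - s)) % (2 * r) := by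
    unfold PP; rw [if_neg (by omega), if_neg (by omega)]
    congr 2; omega
  have hlt : (x - 2 * r + (2 * r - s)) % (2 * r) < 2 * r := Nat.mod_lt _ hm
  rw [hpp]; unfold ww; rw [if_neg (by omega), if_pos hlt]
  unfold gg
  rw [bipI7 hm (by omega) hs]

/-- sum over one bipartite `B`-side family vanishes (used for vertex sums at `B`-vertices). -/
lemma sum_bip_B (r : ℕ) (hr : 2 ≤ r) {z : ℕ} (hz : z < 2 * r) :
    ∑ s ∈ range (2 * r), gg r ((z + 2 * (2 * r - s)) % (2 * r)) = 0 := by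
  have hrpos : 0 < r := by omega
  have key : ∀ s, gg r ((z + 2 * (2 * r - s)) % (2 * r))
      = hh r (((2 * r - s) + z / 2) % r) := by
    intro s
    unfold gg
    congr 1
    rw [show z + 2 * (2 * r - s) = 2 * (2 * r - s) + z from by omega]
    exact div2_mod r (2 * r - s) z hrpos
  simp only [key]
  rw [show 2 * r = r + r from by omega, Finset.sum_range_add]
  have e1 : ∀ s ∈ range r, hh r ((r + r - s + z / 2) % r)
      = hh r (((z / 2 + r) + (r - s)) % r) := by
    intro s hs
    have := Finset.mem_range.mp hs
    congr 2; omega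
  have e2 : ∀ s ∈ range r, hh r ((r + r - (r + s) + z / 2) % r)
      = hh r ((z / 2 + (r - s)) % r) := by
    intro s hs
    have := Finset.mem_range.mp hs
    congr 2; omega
  rw [Finset.sum_congr rfl e1, Finset.sum_congr rfl e2,
    sum_range_refl (hh r) hrpos (z / 2 + r), sum_range_refl (hh r) hrpos (z / 2),
    sum_hh r hr]
  norm_num

/-! ### the main construction -/

theorem main (r : ℕ) (hr : 2 ≤ r) :
    ∃ (c : Fin (4*r) → Fin (4*r) → Fin (4*r-1)) (w : Fin (4*r) → Fin (4*r) → ℤ),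
      (∀ x y, c x y = c y x) ∧
      (∀ x y, w x y = w y x) ∧
      (∀ (t : Fin (4*r-1)) (x : Fin (4*r)), ∃! y, y ≠ x ∧ c x y = t) ∧
      (∀ x y : Fin (4*r), x ≠ y → (w x y ≠ 0 ∧ |w x y| ≤ 2)) ∧
      (∀ x : Fin (4*r), ∑ y ∈ Finset.univ.erase x, w x y = 0) ∧
      (∀ t : Fin (4*r-1),
        ∑ x, ∑ y ∈ Finset.univ.erase x, (if c x y = t then w x y else 0) = 0) := by
  have hm : 0 < 2 * r := by omega
  refine ⟨fun x y => ⟨cc r x.val y.val, cc_lt r hr x.isLt y.isLt⟩,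
    fun x y => ww r x.val y.val, ?_, ?_, ?_, ?_, ?_, ?_⟩
  · intro x y
    exact Fin.mk_eq_mk.mpr (cc_comm r x.val y.val)
  · intro x y
    exact ww_comm r x.val y.val
  · intro t x
    refine ⟨⟨PP r t.val x.val, PP_lt r hr t.isLt x.isLt⟩,
      ⟨fun hcon => PP_ne r hr t.isLt x.isLt (congrArg Fin.val hcon), ?_⟩, ?_⟩
    · exact Fin.ext (cc_PP r hr t.isLt x.isLt)
    · rintro z ⟨hz1, hz2⟩
      exact Fin.ext (cc_inj r hr x.isLt z.isLt (fun h => hz1 (Fin.ext h))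
        t.isLt (congrArg Fin.val hz2))
  · intro x y _
    show ww r x.val y.val ≠ 0 ∧ |ww r x.val y.val| ≤ 2
    rcases ww_cases r x.val y.val with h | h | h | h <;> rw [h] <;> norm_num
  · -- vertex sums
    intro x
    have step1 : ∑ y ∈ Finset.univ.erase x, ww r x.val y.val
        = ∑ t : Fin (4*r-1), ww r x.val (PP r t.val x.val) := by
      refine Finset.sum_nbij'
        (fun y => (⟨cc r x.val y.val, cc_lt r hr x.isLt y.isLt⟩ : Fin (4*r-1)))
        (fun t => (⟨PP r t.val x.val, PP_lt r hr t.isLt x.isLt⟩ : Fin (4*r)))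
        (fun y _ => Finset.mem_univ _) ?_ ?_ ?_ ?_
      · intro t _
        exact Finset.mem_erase.mpr
          ⟨Fin.ne_of_val_ne (PP_ne r hr t.isLt x.isLt), Finset.mem_univ _⟩
      · intro y hy
        have hne : y.val ≠ x.val := Fin.val_ne_of_ne (Finset.mem_erase.mp hy).1
        exact Fin.ext
          ((cc_inj r hr x.isLt y.isLt hne (cc_lt r hr x.isLt y.isLt) rfl).symm)
      · intro t _
        exact Fin.ext (cc_PP r hr t.isLt x.isLt)
      · intro y hy
        have hne : y.val ≠ x.val := Fin.val_ne_of_ne (Finset.mem_erase.mp hy).1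
        have := cc_inj r hr x.isLt y.isLt hne (cc_lt r hr x.isLt y.isLt) rfl
        simp only
        rw [← this]
    rw [step1,
      Fin.sum_univ_eq_sum_range (fun tn => ww r x.val (PP r tn x.val)) (4*r-1),
      show 4*r-1 = (2*r-1) + 2*r from by omega, Finset.sum_range_add]
    have piece1 : ∑ tt ∈ range (2*r-1), ww r x.val (PP r tt x.val) = 0 := by
      by_cases hx : x.val < 2 * r
      · rw [Finset.sum_congr rfl
          (fun tt htt => ww_PP_within_A r hr hx (Finset.mem_range.mp htt))]
        exact sum_ff r hr
      · rw [Finset.sum_congr rfl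
          (fun tt htt => ww_PP_within_B r hr (by omega) x.isLt (Finset.mem_range.mp htt))]
        rw [Finset.sum_neg_distrib, sum_ff r hr, neg_zero]
    have piece2 : ∑ s ∈ range (2*r), ww r x.val (PP r (2*r-1 + s) x.val) = 0 := by
      by_cases hx : x.val < 2 * r
      · rw [Finset.sum_congr rfl
          (fun s hs => ww_PP_bip_A r hr hx (Finset.mem_range.mp hs))]
        rw [sum_range_refl (gg r) hm x.val]
        exact sum_gg r hr
      · rw [Finset.sum_congr rfl
          (fun s hs => ww_PP_bip_B r hr (by omega) x.isLt (Finset.mem_range.mp hs))]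
        exact sum_bip_B r hr (by omega)
    rw [piece1, piece2]
    norm_num
  · -- factor sums
    intro t
    have inner : ∀ x : Fin (4*r),
        ∑ y ∈ Finset.univ.erase x,
          (if (⟨cc r x.val y.val, cc_lt r hr x.isLt y.isLt⟩ : Fin (4*r-1)) = t
            then ww r x.val y.val else 0)
        = ww r x.val (PP r t.val x.val) := by
      intro x
      rw [Finset.sum_eq_single (⟨PP r t.val x.val, PP_lt r hr t.isLt x.isLt⟩ : Fin (4*r))]
      · rw [if_pos (Fin.ext (cc_PP r hr t.isLt x.isLt))]
      · intro b hb hba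
        rw [if_neg]
        intro hcon
        apply hba
        have hbv : b.val ≠ x.val := Fin.val_ne_of_ne (Finset.mem_erase.mp hb).1
        exact Fin.ext (cc_inj r hr x.isLt b.isLt hbv t.isLt (congrArg Fin.val hcon))
      · intro hmem
        exact absurd (Finset.mem_erase.mpr
          ⟨Fin.ne_of_val_ne (PP_ne r hr t.isLt x.isLt), Finset.mem_univ _⟩) hmem
    rw [Finset.sum_congr rfl (fun x _ => inner x),
      Fin.sum_univ_eq_sum_range (fun xn => ww r xn (PP r t.val xn)) (4*r),
      show range (4*r) = range (2*r + 2*r) from by rw [show (4:ℕ)*r = 2*r+2*r from by ring], Finset.sum_range_add]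
    by_cases ht : t.val < 2 * r - 1
    · rw [Finset.sum_congr rfl
        (fun z hz => ww_PP_within_A r hr (Finset.mem_range.mp hz) ht)]
      have e2 : ∀ z ∈ range (2*r), ww r (2*r + z) (PP r t.val (2*r + z)) = - ff t.val :=
        fun z hz => ww_PP_within_B r hr (by omega)
          (by have := Finset.mem_range.mp hz; omega) ht
      rw [Finset.sum_congr rfl e2, Finset.sum_neg_distrib]
      exact add_neg_cancel _
    · obtain ⟨sv, hsv⟩ : ∃ sv, t.val = 2*r-1 + sv := ⟨t.val - (2*r-1), by omega⟩
      have hs : sv < 2*r := by have := t.isLt; omega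
      have e1 : ∀ z ∈ range (2*r), ww r z (PP r t.val z)
          = gg r ((z + (2*r - sv)) % (2*r)) := by
        intro z hz
        rw [hsv]
        exact ww_PP_bip_A r hr (Finset.mem_range.mp hz) hs
      have e2 : ∀ z ∈ range (2*r), ww r (2*r + z) (PP r t.val (2*r + z))
          = gg r ((z + 2 * (2*r - sv)) % (2*r)) := by
        intro z hz
        have hzlt := Finset.mem_range.mp hz
        rw [hsv]
        have := ww_PP_bip_B r hr (x := 2*r + z) (s := sv) (by omega) (by omega) hs
        rw [this, show 2*r + z - 2*r = z from by omega]
      rw [Finset.sum_congr rfl e1, Finset.sum_congr rfl e2,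
        sum_range_rot (gg r) hm (2*r - sv), sum_range_rot (gg r) hm (2 * (2*r - sv)),
        sum_gg r hr]
      norm_num
end S11

/-- For every n ≡ 0 (mod 4), n ≠ 4, the complete graph K_n
admits a 3-null 1-factorisation.  `c x y` is the index of the 1-factor
containing edge {x,y} and `w x y ∈ {±1,±2}` its weight; each 1-factor is a
perfect matching, vertex sums vanish and each 1-factor has weight zero. -/
theorem stmt11 (n : ℕ) (hn : n % 4 = 0) (hn4 : n ≠ 4) :
    ∃ (c : Fin n → Fin n → Fin (n-1)) (w : Fin n → Fin n → ℤ),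
      (∀ x y, c x y = c y x) ∧
      (∀ x y, w x y = w y x) ∧
      (∀ (t : Fin (n-1)) (x : Fin n), ∃! y, y ≠ x ∧ c x y = t) ∧
      (∀ x y : Fin n, x ≠ y → (w x y ≠ 0 ∧ |w x y| ≤ 2)) ∧
      (∀ x : Fin n, ∑ y ∈ Finset.univ.erase x, w x y = 0) ∧
      (∀ t : Fin (n-1),
        ∑ x, ∑ y ∈ Finset.univ.erase x, (if c x y = t then w x y else 0) = 0) := by
  rcases Nat.eq_zero_or_pos n with h0 | hpos
  · subst h0
    exact ⟨fun x => x.elim0, fun x => x.elim0, fun x => x.elim0, fun x => x.elim0,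
      fun t => t.elim0, fun x y => x.elim0, fun x => x.elim0, fun t => t.elim0⟩
  · obtain ⟨r, rfl⟩ : ∃ r, n = 4 * r := ⟨n / 4, by omega⟩
    exact S11.main r (by omega)
end

section
/- For every k > 1, the complete graph K_{6k+4} admits a 4-null 1-factorisation: a 1-factorisation together with an edge assignment from {±1, ±2, ±3} such that edge values at each vertex sum to zero and each 1-factor has total weight zero. -/
/-!
Take the vertices to be `ZMod (6k+3)` together with a point `∞` (`none`), and let the 1-factor
`F_t` consist of the spoke `{t, ∞}` and the chords `{t + δ, t - δ}`. Weight the spoke `{t, ∞}`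
by a function of `t mod 3`, and the chord `{t + δ, t - δ}` by a function of `t mod 3` and of the
cyclic distance `|δ|` which is 3-periodic in `|δ|` except at `|δ| = 3`. The vertex sum at `∞`
vanishes because every residue mod 3 occurs equally often. The chords of `F_t`, and the chords
`{x, x - 2δ} ∈ F_(x - δ)` through a finite vertex `x`, pair up as `±δ`, so the factor sums and
the remaining vertex sums become sums over `|δ| = 1, …, 3k+1`; there every full period cancels
and a check of the first four terms is left.
-/

open Finset

/-- `c x y` is the index of the 1-factor containing the edge `{x, y}` and `w x y` its weight;
the values at `x = y` play no role. -/
def IsFourNullFactorisation {V T : Type*} [Fintype V] [DecidableEq V] [DecidableEq T]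
    (c : V → V → T) (w : V → V → ℤ) : Prop :=
  (∀ x y, c x y = c y x) ∧
  (∀ x y, w x y = w y x) ∧
  (∀ (t : T) (x : V), ∃! y, y ≠ x ∧ c x y = t) ∧
  (∀ x y : V, x ≠ y → (w x y ≠ 0 ∧ |w x y| ≤ 3)) ∧
  (∀ x : V, ∑ y ∈ univ.erase x, w x y = 0) ∧
  (∀ t : T, ∑ x, ∑ y ∈ univ.erase x, (if c x y = t then w x y else 0) = 0)

theorem IsFourNullFactorisation.comap {V V' T T' : Type*} [Fintype V] [Fintype V']
    [DecidableEq V] [DecidableEq V'] [DecidableEq T] [DecidableEq T']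
    {c : V' → V' → T'} {w : V' → V' → ℤ} (h : IsFourNullFactorisation c w)
    (e : V ≃ V') (f : T ≃ T') :
    IsFourNullFactorisation (fun x y => f.symm (c (e x) (e y))) (fun x y => w (e x) (e y)) := by
  obtain ⟨hc, hw, hmatch, hval, hvertex, hfactor⟩ := h
  have sum_erase (x : V) (g : V' → ℤ) :
      ∑ y ∈ univ.erase x, g (e y) = ∑ y ∈ univ.erase (e x), g y :=
    sum_equiv e (by simp) (by simp)
  refine ⟨fun x y => congrArg f.symm (hc _ _), fun x y => hw _ _, fun t x => ?_,
    fun x y hxy => hval _ _ (e.injective.ne hxy), fun x => by rw [sum_erase, hvertex], fun t => ?_⟩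
  · refine (e.existsUnique_congr ?_).2 (hmatch (f t) (e x))
    exact fun y => and_congr e.injective.ne_iff.symm f.symm_apply_eq
  · calc ∑ x, ∑ y ∈ univ.erase x, (if f.symm (c (e x) (e y)) = t then w (e x) (e y) else 0)
        = ∑ x, ∑ y ∈ univ.erase (e x), (if c (e x) y = f t then w (e x) y else 0) :=
          sum_congr rfl fun x _ =>
            (sum_congr rfl fun y _ => if_congr f.symm_apply_eq rfl rfl).trans
              (sum_erase x fun y => if c (e x) y = f t then w (e x) y else 0)
      _ = 0 := (e.sum_comp fun x => ∑ y ∈ univ.erase x,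
          if c x y = f t then w x y else 0).trans (hfactor (f t))

section Patterned

variable {R : Type*} [CommRing R] [Invertible (2 : R)]

/-- The 1-factor `F_t` of the development of the starter `{(δ, -δ)} ∪ {(0, ∞)}`, with `∞ = none`,
contains `{t + δ, t - δ}` and `{t, ∞}`. -/
def patternedColour : Option R → Option R → R
  | some x, some y => ⅟2 * (x + y)
  | some x, none => x
  | none, some y => y
  | none, none => 0

def patternedWeight (b : R → ℤ) (f : R → R → ℤ) : Option R → Option R → ℤ
  | some x, some y => f (⅟2 * (x + y)) (⅟2 * (x - y))
  | some x, none => b x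
  | none, some y => b y
  | none, none => 0

theorem patternedColour_comm (x y : Option R) : patternedColour x y = patternedColour y x := by
  cases x <;> cases y <;> simp [patternedColour, add_comm]

theorem patternedWeight_comm {b : R → ℤ} {f : R → R → ℤ} (hf : ∀ t δ, f t (-δ) = f t δ)
    (x y : Option R) : patternedWeight b f x y = patternedWeight b f y x := by
  cases x <;> cases y <;> simp only [patternedWeight]
  rw [add_comm, ← hf, ← mul_neg, neg_sub]

theorem patternedWeight_self {b : R → ℤ} {f : R → R → ℤ} (hf : ∀ t, f t 0 = 0) (x : Option R) :
    patternedWeight b f x x = 0 := by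
  cases x <;> simp [patternedWeight, hf]

theorem invOf_two_mul_add_eq_iff (x y t : R) : ⅟2 * (x + y) = t ↔ y = 2 * t - x := by
  constructor <;> intro h
  · rw [← h]; linear_combination -(x + y) * (mul_invOf_self (2 : R))
  · rw [h]; linear_combination t * (invOf_mul_self (2 : R))

theorem existsUnique_patternedColour_eq (t : R) :
    ∀ x : Option R, ∃! y, y ≠ x ∧ patternedColour x y = t
  | none => ⟨some t, ⟨by simp, rfl⟩, fun
      | none, h => absurd rfl h.1
      | some z, h => by rw [← h.2]; rfl⟩
  | some u => by
    have hsome (v : R) : patternedColour (some u) (some v) = t ↔ v = 2 * t - u :=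
      invOf_two_mul_add_eq_iff u v t
    have two_cancel : 2 * t - u = u ↔ u = t := by
      refine ⟨fun h => (isUnit_of_invertible (2 : R)).mul_left_cancel ?_, fun h => by rw [h]; ring⟩
      linear_combination -h
    by_cases hu : u = t
    · refine ⟨none, ⟨by simp, hu⟩, fun y ⟨hy, hyt⟩ => ?_⟩
      cases y with
      | none => rfl
      | some v => exact absurd (by rw [(hsome v).1 hyt, two_cancel.2 hu]) hy
    · refine ⟨some (2 * t - u), ⟨by simpa [two_cancel], (hsome _).2 rfl⟩, fun y ⟨hy, hyt⟩ => ?_⟩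
      cases y with
      | none => exact absurd hyt hu
      | some v => rw [(hsome v).1 hyt]

theorem invOf_two_mul_add_add_sub (a b : R) : ⅟2 * (a + b + (a - b)) = a := by
  linear_combination a * invOf_mul_self (2 : R)

theorem invOf_two_mul_add_sub_sub (a b : R) : ⅟2 * (a + b - (a - b)) = b := by
  linear_combination b * invOf_mul_self (2 : R)

def sumSubEquiv : R × R ≃ R × R where
  toFun p := (p.1 + p.2, p.1 - p.2)
  invFun p := (⅟2 * (p.1 + p.2), ⅟2 * (p.1 - p.2))
  left_inv p := by
    ext
    · linear_combination p.1 * invOf_mul_self (2 : R)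
    · linear_combination p.2 * invOf_mul_self (2 : R)
  right_inv p := by
    ext
    · linear_combination p.1 * invOf_mul_self (2 : R)
    · linear_combination p.2 * invOf_mul_self (2 : R)

variable [Fintype R]

theorem sum_patternedWeight_none (b : R → ℤ) (f : R → R → ℤ) :
    ∑ y, patternedWeight b f none y = ∑ y, b y := by
  simp [Fintype.sum_option, patternedWeight]

theorem sum_patternedWeight_some (b : R → ℤ) (f : R → R → ℤ) (x : R) :
    ∑ y, patternedWeight b f (some x) y = b x + ∑ δ, f (x - δ) δ := by
  rw [Fintype.sum_option, ← ((unitOfInvertible (2 : R)).mulLeft.trans (Equiv.subLeft x)).sum_comp]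
  congr 1
  refine sum_congr rfl fun δ _ => ?_
  simp only [patternedWeight, Equiv.trans_apply, Units.mulLeft_apply, Equiv.subLeft_apply,
    show ((unitOfInvertible (2 : R) : Rˣ) : R) = 2 from rfl]
  congr 1
  · linear_combination (x - δ) * invOf_mul_self (2 : R)
  · linear_combination δ * invOf_mul_self (2 : R)

variable [DecidableEq R]

theorem sum_sum_ite_patternedColour_eq (b : R → ℤ) (f : R → R → ℤ) (t : R) :
    ∑ x, ∑ y, (if patternedColour x y = t then patternedWeight b f x y else 0) =
      2 * b t + ∑ δ, f t δ := by
  have hmid : ∑ x, ∑ y, (if ⅟2 * (x + y) = t then f (⅟2 * (x + y)) (⅟2 * (x - y)) else 0) =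
      ∑ δ, f t δ := by
    rw [← Fintype.sum_prod_type', ← sumSubEquiv.sum_comp]
    simp only [sumSubEquiv, Equiv.coe_fn_mk, invOf_two_mul_add_add_sub, invOf_two_mul_add_sub_sub]
    rw [Fintype.sum_prod_type, sum_comm]
    simp
  calc _ = ((if (0 : R) = t then (0 : ℤ) else 0) + ∑ x, if x = t then b x else 0) +
        ((∑ y, if y = t then b y else 0) +
        ∑ x, ∑ y, if ⅟2 * (x + y) = t then f (⅟2 * (x + y)) (⅟2 * (x - y)) else 0) := by
        simp only [Fintype.sum_option, sum_add_distrib]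
        -- not `simp [patternedColour]`: rewriting inside `if` would leave stale `Decidable` instances
        rfl
    _ = 2 * b t + ∑ δ, f t δ := by
        rw [hmid, sum_ite_eq', ite_self]
        simp only [mem_univ, if_true]
        ring

theorem isFourNullFactorisation_patterned {b : R → ℤ} {f : R → R → ℤ}
    (hf_neg : ∀ t δ, f t (-δ) = f t δ) (hf_zero : ∀ t, f t 0 = 0)
    (hf : ∀ t δ, δ ≠ 0 → f t δ ≠ 0 ∧ |f t δ| ≤ 3) (hb : ∀ t, b t ≠ 0 ∧ |b t| ≤ 3)
    (hb_sum : ∑ t, b t = 0) (hvertex : ∀ x, b x + ∑ δ, f (x - δ) δ = 0)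
    (hfactor : ∀ t, 2 * b t + ∑ δ, f t δ = 0) :
    IsFourNullFactorisation patternedColour (patternedWeight b f) := by
  refine ⟨patternedColour_comm, patternedWeight_comm hf_neg, existsUnique_patternedColour_eq,
    ?_, fun x => ?_, fun t => ?_⟩
  · rintro (_ | x) (_ | y) hxy
    · exact absurd rfl hxy
    · exact hb y
    · exact hb x
    · refine hf _ _ fun h => hxy ?_
      rw [(isUnit_of_invertible (⅟2 : R)).mul_right_eq_zero, sub_eq_zero] at h
      rw [h]
  · rw [sum_erase _ (patternedWeight_self hf_zero x)]
    cases x with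
    | none => rw [sum_patternedWeight_none, hb_sum]
    | some x => rw [sum_patternedWeight_some, hvertex]
  · refine (sum_congr rfl fun x _ => sum_erase _ ?_).trans
      ((sum_sum_ite_patternedColour_eq b f t).trans (hfactor t))
    rw [patternedWeight_self hf_zero, ite_self]

end Patterned

theorem ZMod.sum_eq_sum_range {M : Type*} [AddCommMonoid M] {n : ℕ} [NeZero n] (g : ZMod n → M) :
    ∑ x, g x = ∑ i ∈ range n, g i := by
  rcases n with _ | n
  · exact absurd rfl (NeZero.ne 0)
  · rw [← Fin.sum_univ_eq_sum_range]
    exact sum_congr rfl fun x _ => congrArg g (ZMod.natCast_zmod_val x).symm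

theorem ZMod.sum_eq_add_sum_range_add_neg {M : Type*} [AddCommMonoid M] {n m : ℕ} [NeZero n]
    (hn : n = 2 * m + 1) (g : ZMod n → M) :
    ∑ x, g x = g 0 + ∑ i ∈ range m, (g (i + 1 : ℕ) + g (-(i + 1 : ℕ))) := by
  subst hn
  rw [ZMod.sum_eq_sum_range, sum_range_succ', show range (2 * m) = range (m + m) by rw [two_mul],
    sum_range_add, sum_add_distrib, Nat.cast_zero, add_comm,
    ← sum_range_reflect (fun i => g (-((i + 1 : ℕ) : ZMod (2 * m + 1)))) m]
  congr 2
  refine sum_congr rfl fun i hi => congrArg g (eq_neg_of_add_eq_zero_left ?_)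
  rw [← Nat.cast_add, ← ZMod.natCast_self (2 * m + 1)]
  have := mem_range.1 hi
  congr 1
  omega

theorem sum_range_add_three_mul {M : Type*} [AddCommMonoid M] {g : ℕ → M} {a : ℕ}
    (hg : ∀ i ≥ a, g i + g (i + 1) + g (i + 2) = 0) (k : ℕ) :
    ∑ i ∈ range (a + 3 * k), g i = ∑ i ∈ range a, g i := by
  induction k with
  | zero => rfl
  | succ k ih =>
    rw [show a + 3 * (k + 1) = a + 3 * k + 1 + 1 + 1 by ring, sum_range_succ, sum_range_succ,
      sum_range_succ, ih, add_assoc, add_assoc, ← add_assoc (g _), hg _ (by omega), add_zero]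

def spokeWeight (r : ZMod 3) : ℤ := if r = 2 then -2 else 1

def periodicChordWeight (r u : ZMod 3) : ℤ :=
  if u = 0 then 1 else if u = 1 then (if r = 2 then 2 else 1) else (if r = 2 then -3 else -2)

/-- Weight of a chord `{t + δ, t - δ}` with `r = t mod 3` and `i = |δ|`. -/
def chordWeight (r : ZMod 3) (i : ℕ) : ℤ :=
  if i = 0 then 0 else if i = 3 then (if r = 2 then 1 else -1) else periodicChordWeight r i

theorem chordWeight_zero (r : ZMod 3) : chordWeight r 0 = 0 := rfl

theorem chordWeight_of_ne {r : ZMod 3} {i : ℕ} (h0 : i ≠ 0) (h3 : i ≠ 3) :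
    chordWeight r i = periodicChordWeight r i := by
  simp [chordWeight, h0, h3]

theorem spokeWeight_ne_zero_and_abs_le (r : ZMod 3) :
    spokeWeight r ≠ 0 ∧ |spokeWeight r| ≤ 3 := by
  unfold spokeWeight
  split_ifs <;> norm_num

theorem chordWeight_ne_zero_and_abs_le (r : ZMod 3) {i : ℕ} (hi : i ≠ 0) :
    chordWeight r i ≠ 0 ∧ |chordWeight r i| ≤ 3 := by
  unfold chordWeight periodicChordWeight
  rw [if_neg hi]
  split_ifs <;> norm_num

theorem sum_range_chordWeight (r : ZMod 3) {k : ℕ} (hk : 1 ≤ k) :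
    ∑ i ∈ range (3 * k + 1), chordWeight r (i + 1) = -spokeWeight r := by
  obtain ⟨k, rfl⟩ := Nat.exists_eq_add_of_le' hk
  rw [show 3 * (k + 1) + 1 = 4 + 3 * k by ring, sum_range_add_three_mul]
  · simp only [sum_range_succ, sum_range_zero]
    revert r; decide
  · intro i hi
    rw [chordWeight_of_ne (by omega) (by omega), chordWeight_of_ne (by omega) (by omega),
      chordWeight_of_ne (by omega) (by omega)]
    push_cast
    generalize (i : ZMod 3) = u
    revert r u; decide

theorem sum_range_chordWeight_sub_add (s : ZMod 3) {k : ℕ} (hk : 1 ≤ k) :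
    ∑ i ∈ range (3 * k + 1),
      (chordWeight (s - (i + 1 : ℕ)) (i + 1) + chordWeight (s + (i + 1 : ℕ)) (i + 1)) =
      -spokeWeight s := by
  obtain ⟨k, rfl⟩ := Nat.exists_eq_add_of_le' hk
  rw [show 3 * (k + 1) + 1 = 4 + 3 * k by ring, sum_range_add_three_mul]
  · simp only [sum_range_succ, sum_range_zero]
    revert s; decide
  · intro i hi
    simp only [chordWeight_of_ne (show i + 1 ≠ 0 by omega) (show i + 1 ≠ 3 by omega),
      chordWeight_of_ne (show i + 1 + 1 ≠ 0 by omega) (show i + 1 + 1 ≠ 3 by omega),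
      chordWeight_of_ne (show i + 2 + 1 ≠ 0 by omega) (show i + 2 + 1 ≠ 3 by omega)]
    push_cast
    generalize (i : ZMod 3) = u
    revert s u; decide

section CyclicGroup

variable (k : ℕ)

def residueModThree : ZMod (6 * k + 3) →+* ZMod 3 :=
  ZMod.castHom (Dvd.intro (2 * k + 1) (by ring)) (ZMod 3)

instance : Invertible (2 : ZMod (6 * k + 3)) where
  invOf := (3 * k + 2 : ℕ)
  invOf_mul_self := by
    have h : ((6 * k + 3 : ℕ) : ZMod (6 * k + 3)) = 0 := ZMod.natCast_self _
    push_cast at h ⊢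
    linear_combination h
  mul_invOf_self := by
    have h : ((6 * k + 3 : ℕ) : ZMod (6 * k + 3)) = 0 := ZMod.natCast_self _
    push_cast at h ⊢
    linear_combination h

theorem natAbs_valMinAbs_natCast_succ {i : ℕ} (hi : i < 3 * k + 1) :
    ((i + 1 : ℕ) : ZMod (6 * k + 3)).valMinAbs.natAbs = i + 1 := by
  rw [ZMod.valMinAbs_natCast_of_le_half (by omega), Int.natAbs_natCast]

theorem sum_spokeWeight_residueModThree :
    ∑ x : ZMod (6 * k + 3), spokeWeight (residueModThree k x) = 0 := by
  rw [ZMod.sum_eq_sum_range, show range (6 * k + 3) = range (0 + 3 * (2 * k + 1)) by ring_nf,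
    sum_range_add_three_mul, sum_range_zero]
  intro i _
  simp only [map_natCast]
  push_cast
  generalize (i : ZMod 3) = u
  revert u; decide

theorem spokeWeight_add_sum_chordWeight_sub (hk : 1 ≤ k) (x : ZMod (6 * k + 3)) :
    spokeWeight (residueModThree k x) +
      ∑ δ : ZMod (6 * k + 3), chordWeight (residueModThree k (x - δ)) δ.valMinAbs.natAbs = 0 := by
  rw [ZMod.sum_eq_add_sum_range_add_neg (m := 3 * k + 1) (by ring)]
  simp only [ZMod.valMinAbs_zero, Int.natAbs_zero, chordWeight_zero, zero_add,
    ZMod.natAbs_valMinAbs_neg, sub_neg_eq_add, map_sub, map_add, map_natCast]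
  rw [sum_congr rfl fun i hi => by rw [natAbs_valMinAbs_natCast_succ k (mem_range.1 hi)],
    sum_range_chordWeight_sub_add _ hk, add_neg_cancel]

theorem two_mul_spokeWeight_add_sum_chordWeight (hk : 1 ≤ k) (t : ZMod (6 * k + 3)) :
    2 * spokeWeight (residueModThree k t) +
      ∑ δ : ZMod (6 * k + 3), chordWeight (residueModThree k t) δ.valMinAbs.natAbs = 0 := by
  rw [ZMod.sum_eq_add_sum_range_add_neg (m := 3 * k + 1) (by ring)]
  simp only [ZMod.valMinAbs_zero, Int.natAbs_zero, chordWeight_zero, zero_add,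
    ZMod.natAbs_valMinAbs_neg, ← two_mul]
  rw [sum_congr rfl fun i hi => by rw [natAbs_valMinAbs_natCast_succ k (mem_range.1 hi)],
    ← mul_sum, sum_range_chordWeight _ hk]
  ring

theorem isFourNullFactorisation_cyclic (hk : 1 ≤ k) :
    IsFourNullFactorisation patternedColour
      (patternedWeight (fun x => spokeWeight (residueModThree k x))
        (fun t δ : ZMod (6 * k + 3) => chordWeight (residueModThree k t) δ.valMinAbs.natAbs)) :=
  isFourNullFactorisation_patterned (fun _ _ => by rw [ZMod.natAbs_valMinAbs_neg])
    (fun _ => by rw [ZMod.valMinAbs_zero, Int.natAbs_zero, chordWeight_zero])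
    (fun _ _ hδ => chordWeight_ne_zero_and_abs_le _ (by simpa [ZMod.valMinAbs_eq_zero] using hδ))
    (fun _ => spokeWeight_ne_zero_and_abs_le _) (sum_spokeWeight_residueModThree k)
    (spokeWeight_add_sum_chordWeight_sub k hk) (two_mul_spokeWeight_add_sum_chordWeight k hk)

end CyclicGroup

/-- For every k > 1, K_{6k+4} admits a 4-null 1-factorisation.
`c x y` is the index of the 1-factor containing edge {x,y} and
`w x y ∈ {±1,±2,±3}` its weight; each 1-factor is a perfect matching, vertex
sums vanish and each 1-factor has weight zero. -/
theorem stmt14 (k : ℕ) (hk : 1 < k) :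
    ∃ (c : Fin (6*k+4) → Fin (6*k+4) → Fin (6*k+3))
      (w : Fin (6*k+4) → Fin (6*k+4) → ℤ),
      (∀ x y, c x y = c y x) ∧
      (∀ x y, w x y = w y x) ∧
      (∀ (t : Fin (6*k+3)) (x : Fin (6*k+4)), ∃! y, y ≠ x ∧ c x y = t) ∧
      (∀ x y : Fin (6*k+4), x ≠ y → (w x y ≠ 0 ∧ |w x y| ≤ 3)) ∧
      (∀ x : Fin (6*k+4), ∑ y ∈ Finset.univ.erase x, w x y = 0) ∧
      (∀ t : Fin (6*k+3),
        ∑ x, ∑ y ∈ Finset.univ.erase x, (if c x y = t then w x y else 0) = 0) := by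
  exact ⟨_, _, (isFourNullFactorisation_cyclic k hk.le).comap
    (Fintype.equivOfCardEq (by simp)) (Fintype.equivOfCardEq (by simp))⟩
end

section
/- With vertex set Z_{6k+3} ∪ {∞} and the 1-factorisation of K_{6k+4} generated from the starter F_1 = {(x,−x) : 1 ≤ x ≤ 3k+1} ∪ {(0,∞)} by F_i = F_1 + (i−1), the union F_1 ∪ F_{2k+2} ∪ F_{4k+3} is the disjoint union of a K_4 on vertex set {2k+1, −(2k+1), 0, ∞} and k copies of K_{3,3}, where the i-th copy (1 ≤ i ≤ k) has partite sets X_i = {i, −(2k+1−i), 2k+1+i} and Y_i = {−i, 2k+1−i, −(2k+1+i)} (arithmetic in Z_{6k+3}). -/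
/-- Vertex set of K_{6k+4}: Z_{6k+3} together with the point ∞ (`Sum.inr ()`). -/
abbrev Vtx (k : ℕ) := ZMod (6*k+3) ⊕ Unit

/-- Translation by `j`: `x ↦ x + j` on `Z_{6k+3}`, fixing ∞. -/
def shiftV (k : ℕ) (j : ZMod (6*k+3)) : Vtx k → Vtx k
  | .inl x => .inl (x + j)
  | .inr u => .inr u

/-- The starter 1-factor F₁ = {{x,−x} : 1 ≤ x ≤ 3k+1} ∪ {{0,∞}}. -/
def F₁ (k : ℕ) : Finset (Finset (Vtx k)) :=
  ((Finset.Icc 1 (3*k+1)).image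
    (fun x : ℕ => ({Sum.inl (x : ZMod (6*k+3)), Sum.inl (-(x : ZMod (6*k+3)))} :
      Finset (Vtx k))))
  ∪ {({Sum.inl 0, Sum.inr ()} : Finset (Vtx k))}

/-- The 1-factor F_i = F₁ + (i − 1). -/
def Ffac (k i : ℕ) : Finset (Finset (Vtx k)) :=
  (F₁ k).image (Finset.image (shiftV k ((i : ZMod (6*k+3)) - 1)))

/-- The vertex set {2k+1, −(2k+1), 0, ∞} of the K₄. -/
def quadSet (k : ℕ) : Finset (Vtx k) :=
  {Sum.inl ((2*k+1 : ℕ) : ZMod (6*k+3)), Sum.inl (-((2*k+1 : ℕ) : ZMod (6*k+3))),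
   Sum.inl 0, Sum.inr ()}

/-- The edge set of the K₄ on `quadSet k`: all of its 2-subsets. -/
def K4edges (k : ℕ) : Finset (Finset (Vtx k)) :=
  (quadSet k).powerset.filter (fun e => e.card = 2)

/-- The partite set X_i = {i, −(2k+1−i), 2k+1+i}. -/
def Xpart (k i : ℕ) : Finset (Vtx k) :=
  {Sum.inl ((i : ZMod (6*k+3))),
   Sum.inl ((i : ZMod (6*k+3)) - ((2*k+1 : ℕ) : ZMod (6*k+3))),
   Sum.inl (((2*k+1 : ℕ) : ZMod (6*k+3)) + (i : ZMod (6*k+3)))}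

/-- The partite set Y_i = {−i, 2k+1−i, −(2k+1+i)}. -/
def Ypart (k i : ℕ) : Finset (Vtx k) :=
  {Sum.inl (-(i : ZMod (6*k+3))),
   Sum.inl (((2*k+1 : ℕ) : ZMod (6*k+3)) - (i : ZMod (6*k+3))),
   Sum.inl (-(((2*k+1 : ℕ) : ZMod (6*k+3)) + (i : ZMod (6*k+3))))}

/-- The edge set of the K_{3,3} with parts `Xpart k i` and `Ypart k i`. -/
def K33edges (k i : ℕ) : Finset (Finset (Vtx k)) :=
  ((Xpart k i) ×ˢ (Ypart k i)).image (fun p => ({p.1, p.2} : Finset (Vtx k)))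

/-! ### Auxiliary lemmas -/

lemma znat_inj (k : ℕ) {a b : ℕ} (ha : a < 6*k+3) (hb : b < 6*k+3)
    (h : ((a:ℕ) : ZMod (6*k+3)) = b) : a = b := by
  have : NeZero (6*k+3) := ⟨by omega⟩
  have h2 := congrArg ZMod.val h
  rwa [ZMod.val_cast_of_lt ha, ZMod.val_cast_of_lt hb] at h2

lemma hnz (k : ℕ) : 6*((k:ℕ) : ZMod (6*k+3)) + 3 = 0 := by
  have := ZMod.natCast_self (6*k+3); push_cast at this; exact this

lemma mem_F₁_iff (k : ℕ) (e : Finset (Vtx k)) :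
    e ∈ F₁ k ↔ (∃ x : ℕ, 1 ≤ x ∧ x ≤ 3*k+1 ∧
      e = {Sum.inl (x : ZMod (6*k+3)), Sum.inl (-(x : ZMod (6*k+3)))}) ∨
      e = {Sum.inl 0, Sum.inr ()} := by
  simp only [F₁, Finset.mem_union, Finset.mem_image, Finset.mem_Icc, Finset.mem_singleton]
  constructor
  · rintro (⟨x, ⟨h1, h2⟩, rfl⟩ | h)
    · exact Or.inl ⟨x, h1, h2, rfl⟩
    · exact Or.inr h
  · rintro (⟨x, h1, h2, rfl⟩ | h)
    · exact Or.inl ⟨x, ⟨h1, h2⟩, rfl⟩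
    · exact Or.inr h

lemma image_shift_pair (k : ℕ) (c : ZMod (6*k+3)) (a b : ZMod (6*k+3)) :
    Finset.image (shiftV k c) {Sum.inl a, Sum.inl b} =
      ({Sum.inl (a + c), Sum.inl (b + c)} : Finset (Vtx k)) := by
  simp [Finset.image_insert, shiftV]

lemma image_shift_inf (k : ℕ) (c : ZMod (6*k+3)) :
    Finset.image (shiftV k c) {Sum.inl 0, Sum.inr ()} =
      ({Sum.inl c, Sum.inr ()} : Finset (Vtx k)) := by
  simp [Finset.image_insert, shiftV]

lemma mem_Ffac_iff (k i : ℕ) (e : Finset (Vtx k)) :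
    e ∈ Ffac k i ↔ (∃ x : ℕ, 1 ≤ x ∧ x ≤ 3*k+1 ∧
      e = {Sum.inl ((x : ZMod (6*k+3)) + ((i : ZMod (6*k+3)) - 1)),
           Sum.inl (-(x : ZMod (6*k+3)) + ((i : ZMod (6*k+3)) - 1))}) ∨
      e = {Sum.inl ((i : ZMod (6*k+3)) - 1), Sum.inr ()} := by
  simp only [Ffac, Finset.mem_image]
  constructor
  · rintro ⟨f, hf, rfl⟩
    rcases (mem_F₁_iff k f).1 hf with ⟨x, h1, h2, rfl⟩ | rfl
    · exact Or.inl ⟨x, h1, h2, by rw [image_shift_pair]⟩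
    · exact Or.inr (by rw [image_shift_inf])
  · rintro (⟨x, h1, h2, rfl⟩ | rfl)
    · exact ⟨_, (mem_F₁_iff k _).2 (Or.inl ⟨x, h1, h2, rfl⟩), by rw [image_shift_pair]⟩
    · exact ⟨_, (mem_F₁_iff k _).2 (Or.inr rfl), by rw [image_shift_inf]⟩

lemma pair_mem_F₁ (k x : ℕ) (h1 : 1 ≤ x) (h2 : x ≤ 3*k+1) {a b : ZMod (6*k+3)}
    (hA : a = (x : ZMod (6*k+3))) (hB : b = -(x : ZMod (6*k+3))) :
    ({Sum.inl a, Sum.inl b} : Finset (Vtx k)) ∈ F₁ k := by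
  subst hA; subst hB; exact (mem_F₁_iff k _).2 (Or.inl ⟨x, h1, h2, rfl⟩)

lemma pair_mem_Ffac (k i x : ℕ) (h1 : 1 ≤ x) (h2 : x ≤ 3*k+1) {a b : ZMod (6*k+3)}
    (hA : a = (x : ZMod (6*k+3)) + ((i : ZMod (6*k+3)) - 1))
    (hB : b = -(x : ZMod (6*k+3)) + ((i : ZMod (6*k+3)) - 1)) :
    ({Sum.inl a, Sum.inl b} : Finset (Vtx k)) ∈ Ffac k i := by
  subst hA; subst hB; exact (mem_Ffac_iff k i _).2 (Or.inl ⟨x, h1, h2, rfl⟩)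

lemma inf_mem_F₁ (k : ℕ) : ({Sum.inl 0, Sum.inr ()} : Finset (Vtx k)) ∈ F₁ k :=
  (mem_F₁_iff k _).2 (Or.inr rfl)

lemma inf_mem_Ffac (k i : ℕ) {a : ZMod (6*k+3)} (hA : a = (i : ZMod (6*k+3)) - 1) :
    ({Sum.inl a, Sum.inr ()} : Finset (Vtx k)) ∈ Ffac k i := by
  subst hA; exact (mem_Ffac_iff k i _).2 (Or.inr rfl)

lemma mem_K33_of (k i : ℕ) {a b : Vtx k} (ha : a ∈ Xpart k i) (hb : b ∈ Ypart k i) :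
    ({a, b} : Finset (Vtx k)) ∈ K33edges k i :=
  Finset.mem_image.2 ⟨(a, b), Finset.mem_product.2 ⟨ha, hb⟩, rfl⟩

lemma mem_K4_pair (k : ℕ) {u v : Vtx k} (hu : u ∈ quadSet k) (hv : v ∈ quadSet k)
    (huv : u ≠ v) : ({u, v} : Finset (Vtx k)) ∈ K4edges k := by
  simp only [K4edges, Finset.mem_filter, Finset.mem_powerset]
  exact ⟨by simp [Finset.insert_subset_iff, hu, hv], Finset.card_pair huv⟩

lemma AneB (k : ℕ) : (Sum.inl (((2*k+1:ℕ) : ZMod (6*k+3))) : Vtx k)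
    ≠ Sum.inl (-((2*k+1:ℕ) : ZMod (6*k+3))) := by
  intro h
  have h0 := Sum.inl.inj h
  have h' : (((2*k+1:ℕ)) : ZMod (6*k+3)) = ((4*k+2:ℕ) : ZMod (6*k+3)) := by
    push_cast at h0 ⊢
    linear_combination h0 - hnz k
  exact absurd (znat_inj k (by omega) (by omega) h') (by omega)

lemma AneC (k : ℕ) : (Sum.inl (((2*k+1:ℕ) : ZMod (6*k+3))) : Vtx k)
    ≠ Sum.inl (0 : ZMod (6*k+3)) := by
  intro h
  have h0 := Sum.inl.inj h
  have h' : (((2*k+1:ℕ)) : ZMod (6*k+3)) = ((0:ℕ) : ZMod (6*k+3)) := by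
    push_cast at h0 ⊢; exact h0
  exact absurd (znat_inj k (by omega) (by omega) h') (by omega)

lemma BneC (k : ℕ) : (Sum.inl (-((2*k+1:ℕ) : ZMod (6*k+3))) : Vtx k)
    ≠ Sum.inl (0 : ZMod (6*k+3)) := by
  intro h
  have h0 := Sum.inl.inj h
  have h' : (((4*k+2:ℕ)) : ZMod (6*k+3)) = ((0:ℕ) : ZMod (6*k+3)) := by
    push_cast at h0 ⊢
    linear_combination h0 + hnz k
  exact absurd (znat_inj k (by omega) (by omega) h') (by omega)

/-- Canonical form of `Xpart`. -/
lemma Xpart_c (k i : ℕ) : Xpart k i =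
    {Sum.inl ((i:ℕ) : ZMod (6*k+3)), Sum.inl ((4*k+2+i : ℕ) : ZMod (6*k+3)),
     Sum.inl ((2*k+1+i : ℕ) : ZMod (6*k+3))} := by
  have h2 : (Sum.inl ((i : ZMod (6*k+3)) - ((2*k+1:ℕ) : ZMod (6*k+3))) : Vtx k)
      = Sum.inl ((4*k+2+i : ℕ) : ZMod (6*k+3)) := by
    congr 1; push_cast; linear_combination -(hnz k)
  have h3 : (Sum.inl (((2*k+1:ℕ) : ZMod (6*k+3)) + (i : ZMod (6*k+3))) : Vtx k)
      = Sum.inl ((2*k+1+i : ℕ) : ZMod (6*k+3)) := by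
    congr 1; push_cast; ring
  rw [Xpart, h2, h3]

/-- Canonical form of `Ypart` (for `i ≤ 2k+1`). -/
lemma Ypart_c (k i : ℕ) (hi : i ≤ 2*k+1) : Ypart k i =
    {Sum.inl ((6*k+3-i : ℕ) : ZMod (6*k+3)), Sum.inl ((2*k+1-i : ℕ) : ZMod (6*k+3)),
     Sum.inl ((4*k+2-i : ℕ) : ZMod (6*k+3))} := by
  have h1 : (Sum.inl (-(i : ZMod (6*k+3))) : Vtx k)
      = Sum.inl ((6*k+3-i : ℕ) : ZMod (6*k+3)) := by
    congr 1; push_cast [Nat.cast_sub (show i ≤ 6*k+3 by omega)]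
    linear_combination -(hnz k)
  have h2 : (Sum.inl (((2*k+1:ℕ) : ZMod (6*k+3)) - (i : ZMod (6*k+3))) : Vtx k)
      = Sum.inl ((2*k+1-i : ℕ) : ZMod (6*k+3)) := by
    congr 1; push_cast [Nat.cast_sub hi]; ring
  have h3 : (Sum.inl (-(((2*k+1:ℕ) : ZMod (6*k+3)) + (i : ZMod (6*k+3)))) : Vtx k)
      = Sum.inl ((4*k+2-i : ℕ) : ZMod (6*k+3)) := by
    congr 1; push_cast [Nat.cast_sub (show i ≤ 4*k+2 by omega)]
    linear_combination -(hnz k)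
  rw [Ypart, h1, h2, h3]

/-- Canonical form of `quadSet`. -/
lemma quadSet_c (k : ℕ) : quadSet k =
    {Sum.inl ((2*k+1 : ℕ) : ZMod (6*k+3)), Sum.inl ((4*k+2 : ℕ) : ZMod (6*k+3)),
     Sum.inl ((0:ℕ) : ZMod (6*k+3)), Sum.inr ()} := by
  have h2 : (Sum.inl (-((2*k+1:ℕ) : ZMod (6*k+3))) : Vtx k)
      = Sum.inl ((4*k+2 : ℕ) : ZMod (6*k+3)) := by
    congr 1; push_cast; linear_combination -(hnz k)
  have h3 : (Sum.inl (0 : ZMod (6*k+3)) : Vtx k)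
      = Sum.inl ((0:ℕ) : ZMod (6*k+3)) := by norm_num
  rw [quadSet, h2, h3]

/-! ### Routing helpers -/

lemma mem_of_pair_eq {α : Type*} [DecidableEq α] {a b c d : α} {S : Finset (Finset α)}
    (h1 : a = c) (h2 : b = d) (h : ({c, d} : Finset α) ∈ S) : ({a, b} : Finset α) ∈ S := by
  rw [h1, h2]; exact h

lemma mem_of_pair_eq' {α : Type*} [DecidableEq α] {a b c d : α} {S : Finset (Finset α)}
    (h1 : a = d) (h2 : b = c) (h : ({c, d} : Finset α) ∈ S) : ({a, b} : Finset α) ∈ S := by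
  rw [h1, h2, Finset.pair_comm]; exact h

lemma L1 (k : ℕ) {e : Finset (Vtx k)} (h : e ∈ F₁ k) :
    e ∈ F₁ k ∪ Ffac k (2*k+2) ∪ Ffac k (4*k+3) :=
  Finset.mem_union_left _ (Finset.mem_union_left _ h)

lemma L2 (k : ℕ) {e : Finset (Vtx k)} (h : e ∈ Ffac k (2*k+2)) :
    e ∈ F₁ k ∪ Ffac k (2*k+2) ∪ Ffac k (4*k+3) :=
  Finset.mem_union_left _ (Finset.mem_union_right _ h)

lemma L3 (k : ℕ) {e : Finset (Vtx k)} (h : e ∈ Ffac k (4*k+3)) :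
    e ∈ F₁ k ∪ Ffac k (2*k+2) ∪ Ffac k (4*k+3) :=
  Finset.mem_union_right _ h

lemma R4 (k : ℕ) {e : Finset (Vtx k)} (h : e ∈ K4edges k) :
    e ∈ K4edges k ∪ (Finset.Icc 1 k).biUnion (fun i => K33edges k i) :=
  Finset.mem_union_left _ h

lemma R33 (k i : ℕ) (hi1 : 1 ≤ i) (hi2 : i ≤ k) {e : Finset (Vtx k)} (h : e ∈ K33edges k i) :
    e ∈ K4edges k ∪ (Finset.Icc 1 k).biUnion (fun i => K33edges k i) :=
  Finset.mem_union_right _ (Finset.mem_biUnion.2 ⟨i, Finset.mem_Icc.2 ⟨hi1, hi2⟩, h⟩)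

/-! ### The main edge-set equality -/

set_option maxHeartbeats 4000000 in
lemma main_eq (k : ℕ) : F₁ k ∪ Ffac k (2*k+2) ∪ Ffac k (4*k+3)
    = K4edges k ∪ (Finset.Icc 1 k).biUnion (fun i => K33edges k i) := by
  apply Finset.Subset.antisymm
  · intro e he
    rw [Finset.mem_union, Finset.mem_union] at he
    rcases he with (h | h) | h
    · -- edges of F₁
      rcases (mem_F₁_iff k e).1 h with ⟨x, hx1, hx2, rfl⟩ | rfl
      · by_cases hxa : x ≤ k
        · exact R33 k x hx1 hxa (mem_K33_of k x (by simp [Xpart]) (by simp [Ypart]))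
        · by_cases hxb : x ≤ 2*k
          · set i := 2*k+1 - x with hidef
            have hx' : ((x + i : ℕ) : ZMod (6*k+3)) = ((2*k+1 : ℕ) : ZMod (6*k+3)) :=
              congrArg (fun t : ℕ => ((t:ℕ) : ZMod (6*k+3))) (by omega)
            have h1 : (Sum.inl ((x:ℕ) : ZMod (6*k+3)) : Vtx k)
                = Sum.inl (((2*k+1:ℕ):ZMod (6*k+3)) - ((i:ℕ):ZMod (6*k+3))) := by
              congr 1; push_cast at hx' ⊢; linear_combination hx'
            have h2 : (Sum.inl (-((x:ℕ) : ZMod (6*k+3))) : Vtx k)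
                = Sum.inl (((i:ℕ):ZMod (6*k+3)) - ((2*k+1:ℕ):ZMod (6*k+3))) := by
              congr 1; push_cast at hx' ⊢; linear_combination -hx'
            exact mem_of_pair_eq' h1 h2 (R33 k i (by omega) (by omega)
              (mem_K33_of k i (by simp [Xpart]) (by simp [Ypart])))
          · by_cases hxc : x = 2*k+1
            · subst hxc
              exact R4 k (mem_K4_pair k (by simp [quadSet]) (by simp [quadSet]) (AneB k))
            · set i := x - (2*k+1) with hidef
              have hx' : ((x : ℕ) : ZMod (6*k+3)) = ((2*k+1+i : ℕ) : ZMod (6*k+3)) :=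
                congrArg (fun t : ℕ => ((t:ℕ) : ZMod (6*k+3))) (by omega)
              have h1 : (Sum.inl ((x:ℕ) : ZMod (6*k+3)) : Vtx k)
                  = Sum.inl (((2*k+1:ℕ):ZMod (6*k+3)) + ((i:ℕ):ZMod (6*k+3))) := by
                congr 1; push_cast at hx' ⊢; linear_combination hx'
              have h2 : (Sum.inl (-((x:ℕ) : ZMod (6*k+3))) : Vtx k)
                  = Sum.inl (-(((2*k+1:ℕ):ZMod (6*k+3)) + ((i:ℕ):ZMod (6*k+3)))) := by
                congr 1; push_cast at hx' ⊢; linear_combination -hx'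
              exact mem_of_pair_eq h1 h2 (R33 k i (by omega) (by omega)
                (mem_K33_of k i (by simp [Xpart]) (by simp [Ypart])))
      · exact R4 k (mem_K4_pair k (by simp [quadSet]) (by simp [quadSet]) (by simp))
    · -- edges of F_{2k+2}
      rcases (mem_Ffac_iff k (2*k+2) e).1 h with ⟨x, hx1, hx2, rfl⟩ | rfl
      · by_cases hxa : x ≤ k
        · have h1 : (Sum.inl ((x : ZMod (6*k+3)) + (((2*k+2:ℕ) : ZMod (6*k+3)) - 1)) : Vtx k)
              = Sum.inl (((2*k+1:ℕ):ZMod (6*k+3)) + ((x:ℕ):ZMod (6*k+3))) := by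
            congr 1; push_cast; ring
          have h2 : (Sum.inl (-(x : ZMod (6*k+3)) + (((2*k+2:ℕ) : ZMod (6*k+3)) - 1)) : Vtx k)
              = Sum.inl (((2*k+1:ℕ):ZMod (6*k+3)) - ((x:ℕ):ZMod (6*k+3))) := by
            congr 1; push_cast; ring
          exact mem_of_pair_eq h1 h2 (R33 k x hx1 hxa
            (mem_K33_of k x (by simp [Xpart]) (by simp [Ypart])))
        · by_cases hxb : x ≤ 2*k
          · set i := 2*k+1 - x with hidef
            have hx' : ((x + i : ℕ) : ZMod (6*k+3)) = ((2*k+1 : ℕ) : ZMod (6*k+3)) :=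
              congrArg (fun t : ℕ => ((t:ℕ) : ZMod (6*k+3))) (by omega)
            have h1 : (Sum.inl ((x : ZMod (6*k+3)) + (((2*k+2:ℕ) : ZMod (6*k+3)) - 1)) : Vtx k)
                = Sum.inl (-(((2*k+1:ℕ):ZMod (6*k+3)) + ((i:ℕ):ZMod (6*k+3)))) := by
              congr 1; push_cast at hx' ⊢; linear_combination hx' + hnz k
            have h2 : (Sum.inl (-(x : ZMod (6*k+3)) + (((2*k+2:ℕ) : ZMod (6*k+3)) - 1)) : Vtx k)
                = Sum.inl ((i:ℕ) : ZMod (6*k+3)) := by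
              congr 1; push_cast at hx' ⊢; linear_combination -hx'
            exact mem_of_pair_eq' h1 h2 (R33 k i (by omega) (by omega)
              (mem_K33_of k i (by simp [Xpart]) (by simp [Ypart])))
          · by_cases hxc : x = 2*k+1
            · subst hxc
              have h1 : (Sum.inl (((2*k+1:ℕ) : ZMod (6*k+3)) + (((2*k+2:ℕ) : ZMod (6*k+3)) - 1)) : Vtx k)
                  = Sum.inl (-((2*k+1:ℕ) : ZMod (6*k+3))) := by
                congr 1; push_cast; linear_combination hnz k
              have h2 : (Sum.inl (-((2*k+1:ℕ) : ZMod (6*k+3)) + (((2*k+2:ℕ) : ZMod (6*k+3)) - 1)) : Vtx k)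
                  = Sum.inl (0 : ZMod (6*k+3)) := by
                congr 1; push_cast; ring
              exact mem_of_pair_eq h1 h2 (R4 k (mem_K4_pair k (by simp [quadSet])
                (by simp [quadSet]) (BneC k)))
            · set i := x - (2*k+1) with hidef
              have hx' : ((x : ℕ) : ZMod (6*k+3)) = ((2*k+1+i : ℕ) : ZMod (6*k+3)) :=
                congrArg (fun t : ℕ => ((t:ℕ) : ZMod (6*k+3))) (by omega)
              have h1 : (Sum.inl ((x : ZMod (6*k+3)) + (((2*k+2:ℕ) : ZMod (6*k+3)) - 1)) : Vtx k)
                  = Sum.inl (((i:ℕ):ZMod (6*k+3)) - ((2*k+1:ℕ):ZMod (6*k+3))) := by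
                congr 1; push_cast at hx' ⊢; linear_combination hx' + hnz k
              have h2 : (Sum.inl (-(x : ZMod (6*k+3)) + (((2*k+2:ℕ) : ZMod (6*k+3)) - 1)) : Vtx k)
                  = Sum.inl (-((i:ℕ) : ZMod (6*k+3))) := by
                congr 1; push_cast at hx' ⊢; linear_combination -hx'
              exact mem_of_pair_eq h1 h2 (R33 k i (by omega) (by omega)
                (mem_K33_of k i (by simp [Xpart]) (by simp [Ypart])))
      · have h1 : (Sum.inl (((2*k+2:ℕ) : ZMod (6*k+3)) - 1) : Vtx k)
            = Sum.inl (((2*k+1:ℕ)) : ZMod (6*k+3)) := by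
          congr 1; push_cast; ring
        exact mem_of_pair_eq h1 rfl (R4 k (mem_K4_pair k (by simp [quadSet])
          (by simp [quadSet]) (by simp)))
    · -- edges of F_{4k+3}
      rcases (mem_Ffac_iff k (4*k+3) e).1 h with ⟨x, hx1, hx2, rfl⟩ | rfl
      · by_cases hxa : x ≤ k
        · have h1 : (Sum.inl ((x : ZMod (6*k+3)) + (((4*k+3:ℕ) : ZMod (6*k+3)) - 1)) : Vtx k)
              = Sum.inl (((x:ℕ):ZMod (6*k+3)) - ((2*k+1:ℕ):ZMod (6*k+3))) := by
            congr 1; push_cast; linear_combination hnz k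
          have h2 : (Sum.inl (-(x : ZMod (6*k+3)) + (((4*k+3:ℕ) : ZMod (6*k+3)) - 1)) : Vtx k)
              = Sum.inl (-(((2*k+1:ℕ):ZMod (6*k+3)) + ((x:ℕ):ZMod (6*k+3)))) := by
            congr 1; push_cast; linear_combination hnz k
          exact mem_of_pair_eq h1 h2 (R33 k x hx1 hxa
            (mem_K33_of k x (by simp [Xpart]) (by simp [Ypart])))
        · by_cases hxb : x ≤ 2*k
          · set i := 2*k+1 - x with hidef
            have hx' : ((x + i : ℕ) : ZMod (6*k+3)) = ((2*k+1 : ℕ) : ZMod (6*k+3)) :=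
              congrArg (fun t : ℕ => ((t:ℕ) : ZMod (6*k+3))) (by omega)
            have h1 : (Sum.inl ((x : ZMod (6*k+3)) + (((4*k+3:ℕ) : ZMod (6*k+3)) - 1)) : Vtx k)
                = Sum.inl (-((i:ℕ) : ZMod (6*k+3))) := by
              congr 1; push_cast at hx' ⊢; linear_combination hx' + hnz k
            have h2 : (Sum.inl (-(x : ZMod (6*k+3)) + (((4*k+3:ℕ) : ZMod (6*k+3)) - 1)) : Vtx k)
                = Sum.inl (((2*k+1:ℕ):ZMod (6*k+3)) + ((i:ℕ):ZMod (6*k+3))) := by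
              congr 1; push_cast at hx' ⊢; linear_combination -hx'
            exact mem_of_pair_eq' h1 h2 (R33 k i (by omega) (by omega)
              (mem_K33_of k i (by simp [Xpart]) (by simp [Ypart])))
          · by_cases hxc : x = 2*k+1
            · subst hxc
              have h1 : (Sum.inl (((2*k+1:ℕ) : ZMod (6*k+3)) + (((4*k+3:ℕ) : ZMod (6*k+3)) - 1)) : Vtx k)
                  = Sum.inl (0 : ZMod (6*k+3)) := by
                congr 1; push_cast; linear_combination hnz k
              have h2 : (Sum.inl (-((2*k+1:ℕ) : ZMod (6*k+3)) + (((4*k+3:ℕ) : ZMod (6*k+3)) - 1)) : Vtx k)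
                  = Sum.inl (((2*k+1:ℕ)) : ZMod (6*k+3)) := by
                congr 1; push_cast; ring
              exact mem_of_pair_eq h1 h2 (R4 k (mem_K4_pair k (by simp [quadSet])
                (by simp [quadSet]) (AneC k).symm))
            · set i := x - (2*k+1) with hidef
              have hx' : ((x : ℕ) : ZMod (6*k+3)) = ((2*k+1+i : ℕ) : ZMod (6*k+3)) :=
                congrArg (fun t : ℕ => ((t:ℕ) : ZMod (6*k+3))) (by omega)
              have h1 : (Sum.inl ((x : ZMod (6*k+3)) + (((4*k+3:ℕ) : ZMod (6*k+3)) - 1)) : Vtx k)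
                  = Sum.inl ((i:ℕ) : ZMod (6*k+3)) := by
                congr 1; push_cast at hx' ⊢; linear_combination hx' + hnz k
              have h2 : (Sum.inl (-(x : ZMod (6*k+3)) + (((4*k+3:ℕ) : ZMod (6*k+3)) - 1)) : Vtx k)
                  = Sum.inl (((2*k+1:ℕ):ZMod (6*k+3)) - ((i:ℕ):ZMod (6*k+3))) := by
                congr 1; push_cast at hx' ⊢; linear_combination -hx'
              exact mem_of_pair_eq h1 h2 (R33 k i (by omega) (by omega)
                (mem_K33_of k i (by simp [Xpart]) (by simp [Ypart])))
      · have h1 : (Sum.inl (((4*k+3:ℕ) : ZMod (6*k+3)) - 1) : Vtx k)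
            = Sum.inl (-((2*k+1:ℕ) : ZMod (6*k+3))) := by
          congr 1; push_cast; linear_combination hnz k
        exact mem_of_pair_eq h1 rfl (R4 k (mem_K4_pair k (by simp [quadSet])
          (by simp [quadSet]) (by simp)))
  · intro e he
    rw [Finset.mem_union] at he
    rcases he with h | h
    · -- K₄ edges
      simp only [K4edges, Finset.mem_filter, Finset.mem_powerset] at h
      obtain ⟨u, v, huv, rfl⟩ := Finset.card_eq_two.1 h.2
      have hu := h.1 (Finset.mem_insert_self _ _)
      have hv := h.1 (Finset.mem_insert_of_mem (Finset.mem_singleton_self _))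
      simp only [quadSet, Finset.mem_insert, Finset.mem_singleton] at hu hv
      have eAB : ({Sum.inl ((2*k+1:ℕ):ZMod (6*k+3)),
          Sum.inl (-((2*k+1:ℕ):ZMod (6*k+3)))} : Finset (Vtx k))
          ∈ F₁ k ∪ Ffac k (2*k+2) ∪ Ffac k (4*k+3) :=
        L1 k (pair_mem_F₁ k (2*k+1) (by omega) (by omega) rfl rfl)
      have eAC : ({Sum.inl ((2*k+1:ℕ):ZMod (6*k+3)),
          Sum.inl (0 : ZMod (6*k+3))} : Finset (Vtx k))
          ∈ F₁ k ∪ Ffac k (2*k+2) ∪ Ffac k (4*k+3) := by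
        rw [Finset.pair_comm]
        exact L3 k (pair_mem_Ffac k (4*k+3) (2*k+1) (by omega) (by omega)
          (by push_cast; linear_combination -(hnz k)) (by push_cast; ring))
      have eAD : ({Sum.inl ((2*k+1:ℕ):ZMod (6*k+3)), Sum.inr ()} : Finset (Vtx k))
          ∈ F₁ k ∪ Ffac k (2*k+2) ∪ Ffac k (4*k+3) :=
        L2 k (inf_mem_Ffac k (2*k+2) (by push_cast; ring))
      have eBC : ({Sum.inl (-((2*k+1:ℕ):ZMod (6*k+3))),
          Sum.inl (0 : ZMod (6*k+3))} : Finset (Vtx k))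
          ∈ F₁ k ∪ Ffac k (2*k+2) ∪ Ffac k (4*k+3) :=
        L2 k (pair_mem_Ffac k (2*k+2) (2*k+1) (by omega) (by omega)
          (by push_cast; linear_combination -(hnz k)) (by push_cast; ring))
      have eBD : ({Sum.inl (-((2*k+1:ℕ):ZMod (6*k+3))), Sum.inr ()} : Finset (Vtx k))
          ∈ F₁ k ∪ Ffac k (2*k+2) ∪ Ffac k (4*k+3) :=
        L3 k (inf_mem_Ffac k (4*k+3) (by push_cast; linear_combination -(hnz k)))
      have eCD : ({Sum.inl (0 : ZMod (6*k+3)), Sum.inr ()} : Finset (Vtx k))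
          ∈ F₁ k ∪ Ffac k (2*k+2) ∪ Ffac k (4*k+3) :=
        L1 k (inf_mem_F₁ k)
      rcases hu with rfl | rfl | rfl | rfl <;> rcases hv with rfl | rfl | rfl | rfl <;>
        first
          | exact absurd rfl huv
          | exact eAB | exact eAC | exact eAD | exact eBC | exact eBD | exact eCD
          | (rw [Finset.pair_comm]
             first
               | exact eAB | exact eAC | exact eAD | exact eBC | exact eBD | exact eCD)
    · -- K_{3,3} edges
      obtain ⟨i, hi, hK⟩ := Finset.mem_biUnion.1 h
      rw [Finset.mem_Icc] at hi
      obtain ⟨hi1, hi2⟩ := hi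
      obtain ⟨p, hp, rfl⟩ := Finset.mem_image.1 hK
      obtain ⟨a, b⟩ := p
      obtain ⟨ha, hb⟩ := Finset.mem_product.1 hp
      simp only [Xpart, Finset.mem_insert, Finset.mem_singleton] at ha
      simp only [Ypart, Finset.mem_insert, Finset.mem_singleton] at hb
      rcases ha with rfl | rfl | rfl
      · rcases hb with rfl | rfl | rfl
        · exact L1 k (pair_mem_F₁ k i (by omega) (by omega) rfl rfl)
        · exact L3 k (pair_mem_Ffac k (4*k+3) (2*k+1+i) (by omega) (by omega)
            (by push_cast; linear_combination -(hnz k)) (by push_cast; ring))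
        · rw [Finset.pair_comm]
          exact L2 k (pair_mem_Ffac k (2*k+2) (2*k+1-i) (by omega) (by omega)
            (by push_cast [Nat.cast_sub (show i ≤ 2*k+1 by omega)];
                linear_combination -(hnz k))
            (by push_cast [Nat.cast_sub (show i ≤ 2*k+1 by omega)]; ring))
      · rcases hb with rfl | rfl | rfl
        · exact L2 k (pair_mem_Ffac k (2*k+2) (2*k+1+i) (by omega) (by omega)
            (by push_cast; linear_combination -(hnz k)) (by push_cast; ring))
        · rw [Finset.pair_comm]
          exact L1 k (pair_mem_F₁ k (2*k+1-i) (by omega) (by omega)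
            (by push_cast [Nat.cast_sub (show i ≤ 2*k+1 by omega)]; ring)
            (by push_cast [Nat.cast_sub (show i ≤ 2*k+1 by omega)]; ring))
        · exact L3 k (pair_mem_Ffac k (4*k+3) i (by omega) (by omega)
            (by push_cast; linear_combination -(hnz k))
            (by push_cast; linear_combination -(hnz k)))
      · rcases hb with rfl | rfl | rfl
        · rw [Finset.pair_comm]
          exact L3 k (pair_mem_Ffac k (4*k+3) (2*k+1-i) (by omega) (by omega)
            (by push_cast [Nat.cast_sub (show i ≤ 2*k+1 by omega)];
                linear_combination -(hnz k))
            (by push_cast [Nat.cast_sub (show i ≤ 2*k+1 by omega)]; ring))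
        · exact L2 k (pair_mem_Ffac k (2*k+2) i (by omega) (by omega)
            (by push_cast; ring) (by push_cast; ring))
        · exact L1 k (pair_mem_F₁ k (2*k+1+i) (by omega) (by omega)
            (by push_cast; ring) (by push_cast; ring))

/-! ### Disjointness -/

set_option maxHeartbeats 1000000 in
lemma disj2 (k : ℕ) : ∀ i ∈ Finset.Icc 1 k, Disjoint (quadSet k) (Xpart k i ∪ Ypart k i) := by
  intro i hi
  rw [Finset.mem_Icc] at hi
  obtain ⟨hi1, hi2⟩ := hi
  rw [Finset.disjoint_left]
  intro a ha hb
  rw [quadSet_c] at ha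
  rw [Finset.mem_union, Xpart_c, Ypart_c k i (by omega)] at hb
  simp only [Finset.mem_insert, Finset.mem_singleton] at ha
  rcases ha with rfl | rfl | rfl | rfl <;>
    simp only [Finset.mem_insert, Finset.mem_singleton, Sum.inl.injEq,
      reduceCtorEq, or_false, false_or, or_self] at hb <;>
    rcases hb with (h | h | h) | (h | h | h) <;>
    exact absurd (znat_inj k (by omega) (by omega) h) (by omega)

set_option maxHeartbeats 1000000 in
lemma disj3 (k : ℕ) : ∀ i ∈ Finset.Icc 1 k, ∀ j ∈ Finset.Icc 1 k, i ≠ j →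
    Disjoint (Xpart k i ∪ Ypart k i) (Xpart k j ∪ Ypart k j) := by
  intro i hi j hj hij
  rw [Finset.mem_Icc] at hi hj
  obtain ⟨hi1, hi2⟩ := hi
  obtain ⟨hj1, hj2⟩ := hj
  rw [Finset.disjoint_left]
  intro a ha hb
  rw [Finset.mem_union, Xpart_c, Ypart_c k i (by omega)] at ha
  rw [Finset.mem_union, Xpart_c, Ypart_c k j (by omega)] at hb
  simp only [Finset.mem_insert, Finset.mem_singleton] at ha
  rcases ha with (rfl | rfl | rfl) | (rfl | rfl | rfl) <;>
    simp only [Finset.mem_insert, Finset.mem_singleton, Sum.inl.injEq] at hb <;>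
    rcases hb with (h | h | h) | (h | h | h) <;>
    exact absurd (znat_inj k (by omega) (by omega) h) (by omega)

set_option maxHeartbeats 1000000 in
lemma disj4 (k : ℕ) : ∀ i ∈ Finset.Icc 1 k, Disjoint (Xpart k i) (Ypart k i) := by
  intro i hi
  rw [Finset.mem_Icc] at hi
  obtain ⟨hi1, hi2⟩ := hi
  rw [Finset.disjoint_left]
  intro a ha hb
  rw [Xpart_c] at ha
  rw [Ypart_c k i (by omega)] at hb
  simp only [Finset.mem_insert, Finset.mem_singleton] at ha
  rcases ha with rfl | rfl | rfl <;>
    simp only [Finset.mem_insert, Finset.mem_singleton, Sum.inl.injEq] at hb <;>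
    rcases hb with h | h | h <;>
    exact absurd (znat_inj k (by omega) (by omega) h) (by omega)

theorem stmt15 (k : ℕ) :
    (F₁ k ∪ Ffac k (2*k+2) ∪ Ffac k (4*k+3)
      = K4edges k ∪ (Finset.Icc 1 k).biUnion (fun i => K33edges k i)) ∧
    (∀ i ∈ Finset.Icc 1 k, Disjoint (quadSet k) (Xpart k i ∪ Ypart k i)) ∧
    (∀ i ∈ Finset.Icc 1 k, ∀ j ∈ Finset.Icc 1 k, i ≠ j →
      Disjoint (Xpart k i ∪ Ypart k i) (Xpart k j ∪ Ypart k j)) ∧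
    (∀ i ∈ Finset.Icc 1 k, Disjoint (Xpart k i) (Ypart k i)) :=
  ⟨main_eq k, disj2 k, disj3 k, disj4 k⟩
end

section
/- If v ≡ 3 (mod 6) and v > 9, then every STS(v) admitting a zero-sum 4-flow can be embedded into an STS(2v+1) admitting a zero-sum 4-flow. -/
set_option linter.unusedSectionVars false

namespace Stmt16
open Finset

def fup (v : ℕ) : Fin v → Fin (2*v+1) := Fin.castLE (by omega)
def finf (v : ℕ) : Fin (2*v+1) := ⟨2*v, by omega⟩

variable {v : ℕ}

section
variable [NeZero v]

def fnv (r : ZMod v) : Fin (2*v+1) := ⟨v + r.val, by have := ZMod.val_lt r; omega⟩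
def fdn (a : ZMod v) : Fin v := ⟨a.val, ZMod.val_lt a⟩

def T1 (i : Fin v) : Finset (Fin (2*v+1)) := {fup v i, finf v, fnv ((i : ℕ) : ZMod v)}
def T2 (i : Fin v) (c : ℕ) : Finset (Fin (2*v+1)) :=
  {fup v i, fnv (((i:ℕ) : ZMod v) + (c : ZMod v)), fnv (((i:ℕ) : ZMod v) - (c : ZMod v))}

end

def mm (v : ℕ) : ℕ := (v - 1) / 2

def WtE (t : ℕ) : ℤ := if t = 2 then -2 else 1
def Wt (t c : ℕ) : ℤ :=
  if c = 1 then 1 else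
  if c = 2 then (if t = 2 then -2 else 1) else
  if c = 3 then (if t = 2 then 1 else -1) else
  if c = 4 then (if t = 2 then 2 else -2) else
  if c % 3 = 2 then -2 else 1

section
variable [NeZero v]

def newB (v : ℕ) [NeZero v] : Finset (Finset (Fin (2*v+1))) :=
  (Finset.univ.image (fun i : Fin v => T1 i)) ∪
  ((Finset.univ ×ˢ Finset.range (mm v)).image (fun p : Fin v × ℕ => T2 p.1 (p.2+1)))

def bigB (v : ℕ) [NeZero v] (B : Finset (Finset (Fin v))) : Finset (Finset (Fin (2*v+1))) :=
  B.image (Finset.image (fup v)) ∪ newB v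

open scoped Classical in
noncomputable def gg (v : ℕ) [NeZero v] (B : Finset (Finset (Fin v)))
    (g : Finset (Fin v) → ℤ) (s : Finset (Fin (2*v+1))) : ℤ :=
  if h1 : ∃ b, b ∈ B ∧ s = b.image (fup v) then g h1.choose else
  if h2 : ∃ i : Fin v, s = T1 i then WtE ((h2.choose : ℕ) % 3) else
  if h3 : ∃ p : Fin v × ℕ, (1 ≤ p.2 ∧ p.2 ≤ mm v) ∧ s = T2 p.1 p.2 then
    Wt ((h3.choose.1 : ℕ) % 3) h3.choose.2 else 0

-- basic value lemmas
lemma fup_val (i : Fin v) : (fup v i : Fin (2*v+1)).val = i.val := rfl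
lemma fnv_val (r : ZMod v) : (fnv r : Fin (2*v+1)).val = v + r.val := rfl
lemma finf_val : (finf v).val = 2*v := rfl

lemma fup_inj : Function.Injective (fup v) := Fin.castLE_injective _
lemma fnv_inj : Function.Injective (fnv (v := v)) := by
  intro a b h
  have h' : v + a.val = v + b.val := congrArg Fin.val h
  exact ZMod.val_injective v (by omega)

lemma fup_ne_fnv (i : Fin v) (r : ZMod v) : fup v i ≠ fnv r := by
  intro h
  have h' : i.val = v + r.val := congrArg Fin.val h
  have := i.isLt; omega

lemma fup_ne_finf (i : Fin v) : fup v i ≠ finf v := by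
  intro h
  have h' : i.val = 2*v := congrArg Fin.val h
  have := i.isLt; omega

lemma finf_ne_fnv (r : ZMod v) : finf v ≠ fnv r := by
  intro h
  have h' : 2*v = v + r.val := congrArg Fin.val h
  have := ZMod.val_lt r; omega

lemma mem_T1 {x : Fin (2*v+1)} {i : Fin v} :
    x ∈ T1 i ↔ x = fup v i ∨ x = finf v ∨ x = fnv ((i:ℕ) : ZMod v) := by
  simp [T1]

lemma mem_T2 {x : Fin (2*v+1)} {i : Fin v} {c : ℕ} :
    x ∈ T2 i c ↔ x = fup v i ∨ x = fnv (((i:ℕ) : ZMod v) + (c : ZMod v)) ∨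
      x = fnv (((i:ℕ) : ZMod v) - (c : ZMod v)) := by
  simp [T2]

lemma fdn_cast (a : ZMod v) : (((fdn a : Fin v) : ℕ) : ZMod v) = a := by
  have : ((fdn a : Fin v) : ℕ) = a.val := rfl
  rw [this, ZMod.natCast_zmod_val]

lemma cast_fin_inj {i i' : Fin v} (h : ((i:ℕ) : ZMod v) = ((i':ℕ) : ZMod v)) : i = i' := by
  have h1 := ZMod.val_cast_of_lt i.isLt
  have h2 := ZMod.val_cast_of_lt i'.isLt
  have := congrArg ZMod.val h
  exact Fin.ext (by omega)

end

section
variable [NeZero v]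

lemma mm_lt (hodd : v % 2 = 1) : mm v < v := by unfold mm; omega
lemma mm_two (hodd : v % 2 = 1) : 2 * mm v = v - 1 := by unfold mm; omega

lemma cast_nat_inj {c c' : ℕ} (hc : c < v) (hc' : c' < v) (h : (c : ZMod v) = (c' : ZMod v)) :
    c = c' := by
  have h1 := ZMod.val_cast_of_lt (n := v) hc
  have h2 := ZMod.val_cast_of_lt (n := v) hc'
  have := congrArg ZMod.val h
  omega

lemma c_ne_negc (hodd : v % 2 = 1) {c c' : ℕ} (h1 : 1 ≤ c) (h2 : c ≤ mm v)
    (h1' : 1 ≤ c') (h2' : c' ≤ mm v) : (c : ZMod v) ≠ -(c' : ZMod v) := by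
  intro h
  have hz : ((c + c' : ℕ) : ZMod v) = 0 := by push_cast; rw [h]; ring
  rw [ZMod.natCast_eq_zero_iff] at hz
  have hle := Nat.le_of_dvd (by omega) hz
  have := mm_two hodd
  omega

lemma half_key (hodd : v % 2 = 1) : (2 : ZMod v) * (((v+1)/2 : ℕ) : ZMod v) = 1 := by
  have e : ((2 * ((v+1)/2) : ℕ) : ZMod v) = ((v + 1 : ℕ) : ZMod v) := by
    congr 1; omega
  push_cast [ZMod.natCast_self] at e
  simpa using e

lemma two_mul_cancel (hodd : v % 2 = 1) {x y : ZMod v} (h : x + x = y + y) : x = y := by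
  have key := half_key hodd
  set hf : ZMod v := (((v+1)/2 : ℕ) : ZMod v) with hhf
  calc x = (2 * hf) * x := by rw [key, one_mul]
    _ = hf * (x + x) := by ring
    _ = hf * (y + y) := by rw [h]
    _ = (2 * hf) * y := by ring
    _ = y := by rw [key, one_mul]

lemma U1 (hodd : v % 2 = 1) {z a : ZMod v} {c c' : ℕ} (hc : 1 ≤ c) (hc2 : c ≤ mm v)
    (hc' : 1 ≤ c') (hc2' : c' ≤ mm v)
    (h : a = z + (c : ZMod v) ∨ a = z - (c : ZMod v))
    (h' : a = z + (c' : ZMod v) ∨ a = z - (c' : ZMod v)) : c = c' := by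
  have hcv : c < v := lt_of_le_of_lt hc2 (mm_lt hodd)
  have hcv' : c' < v := lt_of_le_of_lt hc2' (mm_lt hodd)
  rcases h with h | h <;> rcases h' with h' | h'
  · exact cast_nat_inj hcv hcv' (add_left_cancel (h.symm.trans h'))
  · exact absurd (by linear_combination h.symm.trans h' : (c : ZMod v) = -(c' : ZMod v))
      (c_ne_negc hodd hc hc2 hc' hc2')
  · exact absurd (by linear_combination h'.symm.trans h : (c' : ZMod v) = -(c : ZMod v))
      (c_ne_negc hodd hc' hc2' hc hc2)
  · exact cast_nat_inj hcv hcv' (by linear_combination -(h.symm.trans h'))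

lemma mid_eq (hodd : v % 2 = 1) {i i' : Fin v}
    (h : ((i:ℕ) : ZMod v) + ((i:ℕ) : ZMod v) = ((i':ℕ) : ZMod v) + ((i':ℕ) : ZMod v)) :
    i = i' := cast_fin_inj (two_mul_cancel hodd h)

lemma T1_old_mem {x i : Fin v} : fup v x ∈ T1 i ↔ x = i := by
  rw [mem_T1]
  constructor
  · rintro (h | h | h)
    · exact fup_inj h
    · exact absurd h (fup_ne_finf x)
    · exact absurd h (fup_ne_fnv _ _)
  · rintro rfl; exact Or.inl rfl

lemma T2_old_mem {x i : Fin v} {c : ℕ} : fup v x ∈ T2 i c ↔ x = i := by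
  rw [mem_T2]
  constructor
  · rintro (h | h | h)
    · exact fup_inj h
    · exact absurd h (fup_ne_fnv _ _)
    · exact absurd h (fup_ne_fnv _ _)
  · rintro rfl; exact Or.inl rfl

lemma finf_notMem_T2 {i : Fin v} {c : ℕ} : finf v ∉ T2 i c := by
  rw [mem_T2]
  rintro (h | h | h)
  · exact (fup_ne_finf i) h.symm
  · exact (finf_ne_fnv _) h
  · exact (finf_ne_fnv _) h

lemma finf_mem_T1 {i : Fin v} : finf v ∈ T1 i := by
  rw [mem_T1]; exact Or.inr (Or.inl rfl)

lemma fnv_mem_T1 {r : ZMod v} {i : Fin v} : fnv r ∈ T1 i ↔ r = ((i:ℕ) : ZMod v) := by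
  rw [mem_T1]
  constructor
  · rintro (h | h | h)
    · exact absurd h.symm (fup_ne_fnv _ _)
    · exact absurd h.symm (finf_ne_fnv _)
    · exact fnv_inj h
  · rintro rfl; exact Or.inr (Or.inr rfl)

lemma fnv_mem_T2 {r : ZMod v} {i : Fin v} {c : ℕ} :
    fnv r ∈ T2 i c ↔ r = ((i:ℕ) : ZMod v) + (c : ZMod v) ∨ r = ((i:ℕ) : ZMod v) - (c : ZMod v) := by
  rw [mem_T2]
  constructor
  · rintro (h | h | h)
    · exact absurd h.symm (fup_ne_fnv _ _)
    · exact Or.inl (fnv_inj h)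
    · exact Or.inr (fnv_inj h)
  · rintro (rfl | rfl)
    · exact Or.inr (Or.inl rfl)
    · exact Or.inr (Or.inr rfl)

lemma not_old_fnv {b : Finset (Fin v)} (r : ZMod v) : fnv r ∉ b.image (fup v) := by
  rw [Finset.mem_image]
  rintro ⟨a, _, h⟩
  exact (fup_ne_fnv a r) h

lemma not_old_finf {b : Finset (Fin v)} : finf v ∉ b.image (fup v) := by
  rw [Finset.mem_image]
  rintro ⟨a, _, h⟩
  exact (fup_ne_finf a) h

lemma old_mem_image {b : Finset (Fin v)} {x0 : Fin v} :
    fup v x0 ∈ b.image (fup v) ↔ x0 ∈ b := by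
  rw [Finset.mem_image]
  constructor
  · rintro ⟨a, ha, h⟩; rwa [← fup_inj h]
  · intro h; exact ⟨x0, h, rfl⟩

lemma T1_ne_image {i : Fin v} {b : Finset (Fin v)} : T1 i ≠ b.image (fup v) := by
  intro h
  exact not_old_finf (h ▸ finf_mem_T1)

lemma T2_ne_image {i : Fin v} {c : ℕ} {b : Finset (Fin v)} : T2 i c ≠ b.image (fup v) := by
  intro h
  have : fnv (((i:ℕ) : ZMod v) + (c : ZMod v)) ∈ T2 i c := fnv_mem_T2.mpr (Or.inl rfl)
  exact not_old_fnv _ (h ▸ this)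

lemma T1_ne_T2 {i i' : Fin v} {c : ℕ} : T1 i ≠ T2 i' c := by
  intro h
  exact finf_notMem_T2 (h ▸ finf_mem_T1)

lemma T1_det {i i' : Fin v} (h : T1 i = T1 i') : i = i' := by
  have : fup v i ∈ T1 i' := h ▸ (mem_T1.mpr (Or.inl rfl))
  exact T1_old_mem.mp this

lemma T2_det (hodd : v % 2 = 1) {i i' : Fin v} {c c' : ℕ} (hc : 1 ≤ c) (hc2 : c ≤ mm v)
    (hc' : 1 ≤ c') (hc2' : c' ≤ mm v) (h : T2 i c = T2 i' c') : i = i' ∧ c = c' := by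
  have hi : i = i' := T2_old_mem.mp (h ▸ (mem_T2.mpr (Or.inl rfl) : fup v i ∈ T2 i c))
  subst hi
  refine ⟨rfl, ?_⟩
  have hm : fnv (((i:ℕ) : ZMod v) + (c : ZMod v)) ∈ T2 i c' := h ▸ fnv_mem_T2.mpr (Or.inl rfl)
  exact U1 hodd hc hc2 hc' hc2' (Or.inl rfl) (fnv_mem_T2.mp hm)

lemma exists_c (hodd : v % 2 = 1) {z a : ZMod v} (ha : a ≠ z) :
    ∃ c, 1 ≤ c ∧ c ≤ mm v ∧ (a = z + (c : ZMod v) ∨ a = z - (c : ZMod v)) := by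
  have hdne : a - z ≠ 0 := sub_ne_zero.mpr ha
  have hdv : (a - z).val < v := ZMod.val_lt _
  have hd1 : 1 ≤ (a - z).val := by
    rcases Nat.eq_zero_or_pos (a - z).val with h | h
    · exact absurd ((ZMod.val_eq_zero _).mp h) hdne
    · exact h
  have hcast : (((a - z).val : ℕ) : ZMod v) = a - z := ZMod.natCast_zmod_val _
  have hmm := mm_two hodd
  by_cases hle : (a - z).val ≤ mm v
  · exact ⟨(a - z).val, hd1, hle, Or.inl (by rw [hcast]; ring)⟩
  · refine ⟨v - (a - z).val, by omega, by omega, Or.inr ?_⟩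
    have : ((v - (a - z).val : ℕ) : ZMod v) = -(a - z) := by
      rw [Nat.cast_sub (le_of_lt hdv), ZMod.natCast_self, hcast]; ring
    rw [this]; ring

lemma exists_mid (hodd : v % 2 = 1) (a b : ZMod v) :
    ∃ i : Fin v, ((i:ℕ) : ZMod v) + ((i:ℕ) : ZMod v) = a + b := by
  refine ⟨fdn ((((v+1)/2 : ℕ) : ZMod v) * (a + b)), ?_⟩
  rw [fdn_cast]
  have key := half_key hodd
  calc (((v+1)/2 : ℕ) : ZMod v) * (a + b) + (((v+1)/2 : ℕ) : ZMod v) * (a + b)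
      = ((2 : ZMod v) * (((v+1)/2 : ℕ) : ZMod v)) * (a + b) := by ring
    _ = a + b := by rw [key, one_mul]

end

lemma Wt_ge5 (t c : ℕ) (h : 5 ≤ c) : Wt t c = if c % 3 = 2 then -2 else 1 := by
  unfold Wt
  rw [if_neg (by omega), if_neg (by omega), if_neg (by omega), if_neg (by omega)]

lemma WtE_bound (t : ℕ) : WtE t ≠ 0 ∧ |WtE t| ≤ 3 := by
  unfold WtE; split_ifs <;> norm_num

lemma Wt_bound (t c : ℕ) : Wt t c ≠ 0 ∧ |Wt t c| ≤ 3 := by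
  unfold Wt; split_ifs <;> norm_num

lemma sumA (t n : ℕ) : ∑ j ∈ Finset.range (3*n+7), Wt t (j+1) = -WtE t := by
  induction n with
  | zero =>
    norm_num [Finset.sum_range_succ, Wt, WtE]
    split_ifs <;> norm_num
  | succ n ih =>
    rw [show 3*(n+1)+7 = (3*n+7)+1+1+1 by ring, Finset.sum_range_succ, Finset.sum_range_succ,
      Finset.sum_range_succ, ih]
    have e1 : Wt t (3*n+7+1) = -2 := by
      rw [Wt_ge5 t _ (by omega), if_pos (by omega)]
    have e2 : Wt t (3*n+7+1+1) = 1 := by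
      rw [Wt_ge5 t _ (by omega), if_neg (by omega)]
    have e3 : Wt t (3*n+7+1+1+1) = 1 := by
      rw [Wt_ge5 t _ (by omega), if_neg (by omega)]
    rw [e1, e2, e3]; ring

lemma sumE (n : ℕ) : ∑ i ∈ Finset.range (3*n), WtE (i % 3) = 0 := by
  induction n with
  | zero => simp
  | succ n ih =>
    rw [show 3*(n+1) = (3*n)+1+1+1 by ring, Finset.sum_range_succ, Finset.sum_range_succ,
      Finset.sum_range_succ, ih,
      show (3*n) % 3 = 0 by omega, show (3*n+1) % 3 = 1 by omega,
      show (3*n+1+1) % 3 = 2 by omega]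
    norm_num [WtE]

lemma sumB (t n : ℕ) :
    ∑ j ∈ Finset.range (3*n+7),
      (Wt ((t + 2*(j+1)) % 3) (j+1) + Wt ((t + (j+1)) % 3) (j+1)) = -WtE (t % 3) := by
  induction n with
  | zero =>
    norm_num [Finset.sum_range_succ]
    rcases (by omega : t % 3 = 0 ∨ t % 3 = 1 ∨ t % 3 = 2) with ht | ht | ht <;>
      rw [show (t+2) % 3 = (t % 3 + 2) % 3 by omega, show (t+4) % 3 = (t % 3 + 1) % 3 by omega,
        show (t+6) % 3 = t % 3 by omega, show (t+1) % 3 = (t % 3 + 1) % 3 by omega,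
        show (t+8) % 3 = (t % 3 + 2) % 3 by omega,
        show (t+10) % 3 = (t % 3 + 1) % 3 by omega, show (t+5) % 3 = (t % 3 + 2) % 3 by omega,
        show (t+12) % 3 = t % 3 by omega, show (t+14) % 3 = (t % 3 + 2) % 3 by omega,
        show (t+7) % 3 = (t % 3 + 1) % 3 by omega, ht] <;>
      norm_num [Wt, WtE]
  | succ n ih =>
    rw [show 3*(n+1)+7 = (3*n+7)+1+1+1 by ring, Finset.sum_range_succ, Finset.sum_range_succ,
      Finset.sum_range_succ, ih]
    have e1 : ∀ s, Wt s (3*n+7+1) = -2 := fun s => by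
      rw [Wt_ge5 s _ (by omega), if_pos (by omega)]
    have e2 : ∀ s, Wt s (3*n+7+1+1) = 1 := fun s => by
      rw [Wt_ge5 s _ (by omega), if_neg (by omega)]
    have e3 : ∀ s, Wt s (3*n+7+1+1+1) = 1 := fun s => by
      rw [Wt_ge5 s _ (by omega), if_neg (by omega)]
    rw [e1, e1, e2, e2, e3, e3]; ring

section
variable [NeZero v] {B : Finset (Finset (Fin v))} {g : Finset (Fin v) → ℤ}

lemma mem_bigB {s : Finset (Fin (2*v+1))} :
    s ∈ bigB v B ↔ (∃ b ∈ B, s = b.image (fup v)) ∨ (∃ i : Fin v, s = T1 i) ∨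
      (∃ i : Fin v, ∃ c : ℕ, 1 ≤ c ∧ c ≤ mm v ∧ s = T2 i c) := by
  unfold bigB newB
  constructor
  · intro h
    rcases Finset.mem_union.mp h with h | h
    · rcases Finset.mem_image.mp h with ⟨b, hb, heq⟩
      exact Or.inl ⟨b, hb, heq.symm⟩
    · rcases Finset.mem_union.mp h with h | h
      · rcases Finset.mem_image.mp h with ⟨i, _, heq⟩
        exact Or.inr (Or.inl ⟨i, heq.symm⟩)
      · rcases Finset.mem_image.mp h with ⟨p, hp, heq⟩
        have h2 := (Finset.mem_product.mp hp).2
        rw [Finset.mem_range] at h2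
        exact Or.inr (Or.inr ⟨p.1, p.2+1, by omega, by omega, heq.symm⟩)
  · rintro (⟨b, hb, rfl⟩ | ⟨i, rfl⟩ | ⟨i, c, hc1, hc2, rfl⟩)
    · exact Finset.mem_union.mpr (Or.inl (Finset.mem_image_of_mem _ hb))
    · exact Finset.mem_union.mpr (Or.inr (Finset.mem_union.mpr (Or.inl
        (Finset.mem_image_of_mem _ (Finset.mem_univ i)))))
    · refine Finset.mem_union.mpr (Or.inr (Finset.mem_union.mpr (Or.inr
        (Finset.mem_image.mpr ⟨(i, c-1), ?_, ?_⟩))))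
      · exact Finset.mem_product.mpr ⟨Finset.mem_univ _, Finset.mem_range.mpr (by omega)⟩
      · show T2 i ((c-1)+1) = T2 i c
        congr 1
        omega

lemma image_mem_bigB {b : Finset (Fin v)} (hb : b ∈ B) : b.image (fup v) ∈ bigB v B :=
  mem_bigB.mpr (Or.inl ⟨b, hb, rfl⟩)
lemma T1_mem_bigB (i : Fin v) : T1 i ∈ bigB v B :=
  mem_bigB.mpr (Or.inr (Or.inl ⟨i, rfl⟩))
lemma T2_mem_bigB (i : Fin v) {c : ℕ} (hc1 : 1 ≤ c) (hc2 : c ≤ mm v) : T2 i c ∈ bigB v B :=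
  mem_bigB.mpr (Or.inr (Or.inr ⟨i, c, hc1, hc2, rfl⟩))

lemma gE1 {b : Finset (Fin v)} (hb : b ∈ B) : gg v B g (b.image (fup v)) = g b := by
  unfold gg
  have hp : ∃ b', b' ∈ B ∧ b.image (fup v) = b'.image (fup v) := ⟨b, hb, rfl⟩
  rw [dif_pos hp]
  obtain ⟨_, heq⟩ := hp.choose_spec
  exact (congrArg g (Finset.image_injective fup_inj heq)).symm

lemma gE2 (i : Fin v) : gg v B g (T1 i) = WtE (i.val % 3) := by
  unfold gg
  have h1 : ¬ ∃ b, b ∈ B ∧ T1 i = b.image (fup v) := by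
    rintro ⟨b, _, heq⟩; exact T1_ne_image heq
  have hp : ∃ i' : Fin v, T1 i = T1 i' := ⟨i, rfl⟩
  rw [dif_neg h1, dif_pos hp]
  exact congrArg (fun x : Fin v => WtE (x.val % 3)) (T1_det hp.choose_spec).symm

lemma gE3 (hodd : v % 2 = 1) (i : Fin v) {c : ℕ} (hc1 : 1 ≤ c) (hc2 : c ≤ mm v) :
    gg v B g (T2 i c) = Wt (i.val % 3) c := by
  unfold gg
  have h1 : ¬ ∃ b, b ∈ B ∧ T2 i c = b.image (fup v) := by
    rintro ⟨b, _, heq⟩; exact T2_ne_image heq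
  have h2 : ¬ ∃ i' : Fin v, T2 i c = T1 i' := by
    rintro ⟨i', heq⟩; exact T1_ne_T2 heq.symm
  have hp : ∃ p : Fin v × ℕ, (1 ≤ p.2 ∧ p.2 ≤ mm v) ∧ T2 i c = T2 p.1 p.2 :=
    ⟨(i, c), ⟨hc1, hc2⟩, rfl⟩
  rw [dif_neg h1, dif_neg h2, dif_pos hp]
  obtain ⟨⟨hq1, hq2⟩, heq⟩ := hp.choose_spec
  obtain ⟨hi, hc⟩ := T2_det hodd hc1 hc2 hq1 hq2 heq
  exact (congrArg₂ (fun (x : Fin v) (y : ℕ) => Wt (x.val % 3) y) hi hc).symm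

lemma card_T1 (i : Fin v) : (T1 i).card = 3 :=
  Finset.card_eq_three.mpr ⟨_, _, _, fup_ne_finf i, fup_ne_fnv _ _, finf_ne_fnv _, rfl⟩

lemma card_T2 (hodd : v % 2 = 1) (i : Fin v) {c : ℕ} (hc1 : 1 ≤ c) (hc2 : c ≤ mm v) :
    (T2 i c).card = 3 := by
  refine Finset.card_eq_three.mpr ⟨_, _, _, fup_ne_fnv _ _, fup_ne_fnv _ _, ?_, rfl⟩
  intro h
  have h' := fnv_inj h
  exact c_ne_negc hodd hc1 hc2 hc1 hc2 (by linear_combination h')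

end

section
variable [NeZero v] {B : Finset (Finset (Fin v))}

def UB (B : Finset (Finset (Fin v))) (x y : Fin (2*v+1)) : Prop :=
  ∃ s, s ∈ bigB v B ∧ x ∈ s ∧ y ∈ s ∧ ∀ t ∈ bigB v B, x ∈ t → y ∈ t → t = s

lemma Usym {x y : Fin (2*v+1)} (h : UB B x y) : UB B y x := by
  obtain ⟨s, h1, h2, h3, h4⟩ := h
  exact ⟨s, h1, h3, h2, fun t ht hy hx => h4 t ht hx hy⟩

lemma c_cast_ne_zero {c : ℕ} (hc1 : 1 ≤ c) (hc2 : c ≤ mm v) (hodd : v % 2 = 1) :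
    (c : ZMod v) ≠ 0 := by
  intro h
  rw [ZMod.natCast_eq_zero_iff] at h
  have := Nat.le_of_dvd (by omega) h
  have := mm_lt (v := v) hodd
  omega

lemma H_OO (hpair : ∀ x y : Fin v, x ≠ y → (B.filter (fun b => x ∈ b ∧ y ∈ b)).card = 1)
    {x0 y0 : Fin v} (hne : x0 ≠ y0) : UB B (fup v x0) (fup v y0) := by
  obtain ⟨b0, hb0⟩ := Finset.card_eq_one.mp (hpair x0 y0 hne)
  have hb0m : b0 ∈ B.filter (fun b => x0 ∈ b ∧ y0 ∈ b) := hb0 ▸ Finset.mem_singleton_self b0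
  obtain ⟨hb0B, hb0x, hb0y⟩ := Finset.mem_filter.mp hb0m
  refine ⟨b0.image (fup v), image_mem_bigB hb0B, old_mem_image.mpr hb0x,
    old_mem_image.mpr hb0y, ?_⟩
  intro t ht hx hy
  rcases mem_bigB.mp ht with ⟨b, hb, rfl⟩ | ⟨i, rfl⟩ | ⟨i, c, hc1, hc2, rfl⟩
  · have : b ∈ B.filter (fun b => x0 ∈ b ∧ y0 ∈ b) :=
      Finset.mem_filter.mpr ⟨hb, old_mem_image.mp hx, old_mem_image.mp hy⟩
    rw [hb0, Finset.mem_singleton] at this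
    rw [this]
  · exact absurd ((T1_old_mem.mp hx).trans (T1_old_mem.mp hy).symm) hne
  · exact absurd ((T2_old_mem.mp hx).trans (T2_old_mem.mp hy).symm) hne

lemma H_OI (x0 : Fin v) : UB B (fup v x0) (finf v) := by
  refine ⟨T1 x0, T1_mem_bigB x0, mem_T1.mpr (Or.inl rfl), finf_mem_T1, ?_⟩
  intro t ht hx hy
  rcases mem_bigB.mp ht with ⟨b, hb, rfl⟩ | ⟨i, rfl⟩ | ⟨i, c, hc1, hc2, rfl⟩
  · exact absurd hy not_old_finf
  · rw [T1_old_mem.mp hx]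
  · exact absurd hy finf_notMem_T2

lemma H_ON (hodd : v % 2 = 1) (x0 : Fin v) (r : ZMod v) : UB B (fup v x0) (fnv r) := by
  by_cases hr : r = ((x0:ℕ) : ZMod v)
  · refine ⟨T1 x0, T1_mem_bigB x0, mem_T1.mpr (Or.inl rfl), fnv_mem_T1.mpr hr, ?_⟩
    intro t ht hx hy
    rcases mem_bigB.mp ht with ⟨b, hb, rfl⟩ | ⟨i, rfl⟩ | ⟨i, c, hc1, hc2, rfl⟩
    · exact absurd hy (not_old_fnv r)
    · rw [T1_old_mem.mp hx]
    · rcases fnv_mem_T2.mp hy with h | h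
      · rw [T2_old_mem.mp hx] at hr
        exact absurd (by linear_combination hr - h) (c_cast_ne_zero hc1 hc2 hodd)
      · rw [T2_old_mem.mp hx] at hr
        exact absurd (by linear_combination h - hr) (c_cast_ne_zero hc1 hc2 hodd)
  · obtain ⟨c, hc1, hc2, hor⟩ := exists_c hodd hr
    refine ⟨T2 x0 c, T2_mem_bigB x0 hc1 hc2, mem_T2.mpr (Or.inl rfl), fnv_mem_T2.mpr hor, ?_⟩
    intro t ht hx hy
    rcases mem_bigB.mp ht with ⟨b, hb, rfl⟩ | ⟨i, rfl⟩ | ⟨i, c', hc1', hc2', rfl⟩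
    · exact absurd hy (not_old_fnv r)
    · have hxi : x0 = i := T1_old_mem.mp hx
      have := fnv_mem_T1.mp hy
      rw [← hxi] at this
      exact absurd this hr
    · have hxi : x0 = i := T2_old_mem.mp hx
      subst hxi
      rw [U1 hodd hc1' hc2' hc1 hc2 (fnv_mem_T2.mp hy) hor]

lemma H_IN (r : ZMod v) : UB B (finf v) (fnv r) := by
  refine ⟨T1 (fdn r), T1_mem_bigB _, finf_mem_T1, fnv_mem_T1.mpr (fdn_cast r).symm, ?_⟩
  intro t ht hx hy
  rcases mem_bigB.mp ht with ⟨b, hb, rfl⟩ | ⟨i, rfl⟩ | ⟨i, c, hc1, hc2, rfl⟩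
  · exact absurd hx not_old_finf
  · have hr := fnv_mem_T1.mp hy
    have : i = fdn r := by
      apply Fin.ext
      have : r.val = (((i:ℕ) : ZMod v)).val := congrArg ZMod.val hr
      rw [ZMod.val_cast_of_lt i.isLt] at this
      exact this.symm
    rw [this]
  · exact absurd hx finf_notMem_T2

lemma H_NN (hodd : v % 2 = 1) {a b : ZMod v} (hab : a ≠ b) : UB B (fnv a) (fnv b) := by
  obtain ⟨i0, hi0⟩ := exists_mid hodd a b
  have hane : a ≠ ((i0:ℕ) : ZMod v) := by
    intro h; exact hab (by linear_combination 2*h + hi0)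
  obtain ⟨c, hc1, hc2, hor⟩ := exists_c hodd hane
  have hbmem : b = ((i0:ℕ) : ZMod v) + (c : ZMod v) ∨ b = ((i0:ℕ) : ZMod v) - (c : ZMod v) := by
    rcases hor with h | h
    · exact Or.inr (by linear_combination -hi0 - h)
    · exact Or.inl (by linear_combination -hi0 - h)
  refine ⟨T2 i0 c, T2_mem_bigB i0 hc1 hc2, fnv_mem_T2.mpr hor, fnv_mem_T2.mpr hbmem, ?_⟩
  intro t ht hx hy
  rcases mem_bigB.mp ht with ⟨b', hb', rfl⟩ | ⟨i, rfl⟩ | ⟨i, c', hc1', hc2', rfl⟩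
  · exact absurd hx (not_old_fnv a)
  · have h1 := fnv_mem_T1.mp hx
    have h2 := fnv_mem_T1.mp hy
    exact absurd (h1.trans h2.symm) hab
  · have ora := fnv_mem_T2.mp hx
    have orb := fnv_mem_T2.mp hy
    have hsum : ((i:ℕ) : ZMod v) + ((i:ℕ) : ZMod v) = a + b := by
      rcases ora with h | h <;> rcases orb with h' | h'
      · exact absurd (h.trans h'.symm) hab
      · linear_combination -h - h'
      · linear_combination -h - h'
      · exact absurd (h.trans h'.symm) hab
    have hi : i = i0 := mid_eq hodd (hsum.trans hi0.symm)
    subst hi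
    rw [U1 hodd hc1' hc2' hc1 hc2 ora hor]

lemma tri (x : Fin (2*v+1)) :
    (∃ x0 : Fin v, x = fup v x0) ∨ x = finf v ∨ ∃ r : ZMod v, x = fnv r := by
  have hx := x.isLt
  by_cases h1 : x.val < v
  · exact Or.inl ⟨⟨x.val, h1⟩, Fin.ext rfl⟩
  · by_cases h2 : x.val = 2*v
    · exact Or.inr (Or.inl (Fin.ext h2))
    · refine Or.inr (Or.inr ⟨((x.val - v : ℕ) : ZMod v), Fin.ext ?_⟩)
      show x.val = v + _
      rw [ZMod.val_cast_of_lt (by omega)]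
      omega

lemma pair_card (hodd : v % 2 = 1)
    (hpair : ∀ x y : Fin v, x ≠ y → (B.filter (fun b => x ∈ b ∧ y ∈ b)).card = 1)
    (x y : Fin (2*v+1)) (hxy : x ≠ y) :
    ((bigB v B).filter (fun s => x ∈ s ∧ y ∈ s)).card = 1 := by
  suffices h : UB B x y by
    obtain ⟨s, hs, hx, hy, hu⟩ := h
    rw [Finset.card_eq_one]
    refine ⟨s, Finset.eq_singleton_iff_unique_mem.mpr ⟨Finset.mem_filter.mpr ⟨hs, hx, hy⟩, ?_⟩⟩
    intro t ht
    obtain ⟨ht1, ht2⟩ := Finset.mem_filter.mp ht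
    exact hu t ht1 ht2.1 ht2.2
  rcases tri x with ⟨x0, rfl⟩ | rfl | ⟨a, rfl⟩ <;> rcases tri y with ⟨y0, rfl⟩ | rfl | ⟨b, rfl⟩
  · exact H_OO hpair (fun h => hxy (congrArg (fup v) h))
  · exact H_OI x0
  · exact H_ON hodd x0 b
  · exact Usym (H_OI y0)
  · exact absurd rfl hxy
  · exact H_IN b
  · exact Usym (H_ON hodd y0 a)
  · exact Usym (H_IN a)
  · exact H_NN hodd (fun h => hxy (congrArg fnv h))

end

section
variable [NeZero v] {B : Finset (Finset (Fin v))} {g : Finset (Fin v) → ℤ}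

lemma fdn_val (a : ZMod v) : (fdn a : Fin v).val = a.val := rfl

lemma fdn_of_cast {i : Fin v} {a : ZMod v} (h : ((i:ℕ) : ZMod v) = a) : i = fdn a := by
  apply Fin.ext
  have := congrArg ZMod.val h
  rwa [ZMod.val_cast_of_lt i.isLt] at this

lemma fdn_inj {a b : ZMod v} (h : fdn a = fdn b) : a = b :=
  ZMod.val_injective v (congrArg Fin.val h)

lemma F_old (x0 : Fin v) : (bigB v B).filter (fun s => fup v x0 ∈ s) =
    (B.filter (fun b => x0 ∈ b)).image (Finset.image (fup v)) ∪
    ({T1 x0} ∪ (Finset.range (mm v)).image (fun j => T2 x0 (j+1))) := by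
  ext s
  constructor
  · intro hs'
    obtain ⟨hs, hx⟩ := Finset.mem_filter.mp hs'
    rcases mem_bigB.mp hs with ⟨b, hb, rfl⟩ | ⟨i, rfl⟩ | ⟨i, c, hc1, hc2, rfl⟩
    · exact Finset.mem_union.mpr (Or.inl (Finset.mem_image_of_mem _
        (Finset.mem_filter.mpr ⟨hb, old_mem_image.mp hx⟩)))
    · refine Finset.mem_union.mpr (Or.inr (Finset.mem_union.mpr (Or.inl ?_)))
      rw [← T1_old_mem.mp hx]
      exact Finset.mem_singleton_self _
    · refine Finset.mem_union.mpr (Or.inr (Finset.mem_union.mpr (Or.inr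
        (Finset.mem_image.mpr ⟨c-1, Finset.mem_range.mpr (by omega), ?_⟩))))
      rw [show (c-1)+1 = c by omega, T2_old_mem.mp hx]
  · intro h
    refine Finset.mem_filter.mpr ?_
    rcases Finset.mem_union.mp h with h | h
    · obtain ⟨b, hb, rfl⟩ := Finset.mem_image.mp h
      obtain ⟨hbB, hbx⟩ := Finset.mem_filter.mp hb
      exact ⟨image_mem_bigB hbB, old_mem_image.mpr hbx⟩
    · rcases Finset.mem_union.mp h with h | h
      · rw [Finset.mem_singleton.mp h]
        exact ⟨T1_mem_bigB x0, mem_T1.mpr (Or.inl rfl)⟩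
      · obtain ⟨j, hj, rfl⟩ := Finset.mem_image.mp h
        rw [Finset.mem_range] at hj
        exact ⟨T2_mem_bigB x0 (by omega) (by omega), mem_T2.mpr (Or.inl rfl)⟩

lemma F_inf : (bigB v B).filter (fun s => finf v ∈ s) =
    Finset.univ.image (fun i : Fin v => T1 i) := by
  ext s
  constructor
  · intro hs'
    obtain ⟨hs, hx⟩ := Finset.mem_filter.mp hs'
    rcases mem_bigB.mp hs with ⟨b, hb, rfl⟩ | ⟨i, rfl⟩ | ⟨i, c, hc1, hc2, rfl⟩
    · exact absurd hx not_old_finf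
    · exact Finset.mem_image_of_mem _ (Finset.mem_univ i)
    · exact absurd hx finf_notMem_T2
  · intro h
    obtain ⟨i, _, rfl⟩ := Finset.mem_image.mp h
    exact Finset.mem_filter.mpr ⟨T1_mem_bigB i, finf_mem_T1⟩

lemma F_res (r : ZMod v) : (bigB v B).filter (fun s => fnv r ∈ s) =
    {T1 (fdn r)} ∪
    ((Finset.range (mm v)).image (fun j => T2 (fdn (r - ((j+1 : ℕ) : ZMod v))) (j+1)) ∪
     (Finset.range (mm v)).image (fun j => T2 (fdn (r + ((j+1 : ℕ) : ZMod v))) (j+1))) := by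
  ext s
  constructor
  · intro hs'
    obtain ⟨hs, hx⟩ := Finset.mem_filter.mp hs'
    rcases mem_bigB.mp hs with ⟨b, hb, rfl⟩ | ⟨i, rfl⟩ | ⟨i, c, hc1, hc2, rfl⟩
    · exact absurd hx (not_old_fnv r)
    · refine Finset.mem_union.mpr (Or.inl ?_)
      rw [fdn_of_cast (fnv_mem_T1.mp hx).symm]
      exact Finset.mem_singleton_self _
    · rcases fnv_mem_T2.mp hx with h | h
      · refine Finset.mem_union.mpr (Or.inr (Finset.mem_union.mpr (Or.inl
          (Finset.mem_image.mpr ⟨c-1, Finset.mem_range.mpr (by omega), ?_⟩))))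
        rw [show (c-1)+1 = c by omega, ← fdn_of_cast (by linear_combination -h :
          ((i:ℕ) : ZMod v) = r - (c : ZMod v))]
      · refine Finset.mem_union.mpr (Or.inr (Finset.mem_union.mpr (Or.inr
          (Finset.mem_image.mpr ⟨c-1, Finset.mem_range.mpr (by omega), ?_⟩))))
        rw [show (c-1)+1 = c by omega, ← fdn_of_cast (by linear_combination -h :
          ((i:ℕ) : ZMod v) = r + (c : ZMod v))]
  · intro h
    refine Finset.mem_filter.mpr ?_
    rcases Finset.mem_union.mp h with h | h
    · rw [Finset.mem_singleton.mp h]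
      exact ⟨T1_mem_bigB _, fnv_mem_T1.mpr (fdn_cast r).symm⟩
    · rcases Finset.mem_union.mp h with h | h
      · obtain ⟨j, hj, rfl⟩ := Finset.mem_image.mp h
        rw [Finset.mem_range] at hj
        refine ⟨T2_mem_bigB _ (by omega) (by omega), fnv_mem_T2.mpr (Or.inl ?_)⟩
        rw [fdn_cast]; ring
      · obtain ⟨j, hj, rfl⟩ := Finset.mem_image.mp h
        rw [Finset.mem_range] at hj
        refine ⟨T2_mem_bigB _ (by omega) (by omega), fnv_mem_T2.mpr (Or.inr ?_)⟩
        rw [fdn_cast]; ring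

lemma val_add_mod3 (hodd : v % 2 = 1) (h3 : (3:ℕ) ∣ v) {c : ℕ} (hc1 : 1 ≤ c) (hc2 : c ≤ mm v)
    (r : ZMod v) : (r + (c : ZMod v)).val % 3 = (r.val + c) % 3 := by
  have hcv : c < v := lt_of_le_of_lt hc2 (mm_lt hodd)
  rw [ZMod.val_add, ZMod.val_cast_of_lt hcv, Nat.mod_mod_of_dvd _ h3]

lemma val_sub_mod3 (hodd : v % 2 = 1) (h3 : (3:ℕ) ∣ v) {c : ℕ} (hc1 : 1 ≤ c) (hc2 : c ≤ mm v)
    (r : ZMod v) : (r - (c : ZMod v)).val % 3 = (r.val + 2*c) % 3 := by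
  have hcv : c < v := lt_of_le_of_lt hc2 (mm_lt hodd)
  have hcval : ((c : ZMod v)).val = c := ZMod.val_cast_of_lt hcv
  have hcne : (c : ZMod v) ≠ 0 := c_cast_ne_zero hc1 hc2 hodd
  rw [sub_eq_add_neg, ZMod.val_add, ZMod.neg_val, if_neg hcne, hcval,
    Nat.mod_mod_of_dvd _ h3]
  omega

lemma flow_old (hv6 : v % 6 = 3) (h9 : 9 < v)
    (hgflow : ∀ x : Fin v, ∑ b ∈ B.filter (fun b => x ∈ b), g b = 0) (x0 : Fin v) :
    ∑ s ∈ (bigB v B).filter (fun s => fup v x0 ∈ s), gg v B g s = 0 := by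
  have hodd : v % 2 = 1 := by omega
  have hmm : mm v = 3*((v-15)/6)+7 := by unfold mm; omega
  have d2 : Disjoint ({T1 x0} : Finset (Finset (Fin (2*v+1))))
      ((Finset.range (mm v)).image (fun j => T2 x0 (j+1))) := by
    rw [Finset.disjoint_left]
    intro s hs hs'
    obtain ⟨j, _, rfl⟩ := Finset.mem_image.mp hs'
    exact T1_ne_T2 (Finset.mem_singleton.mp hs).symm
  have d1 : Disjoint ((B.filter (fun b => x0 ∈ b)).image (Finset.image (fup v)))
      ({T1 x0} ∪ (Finset.range (mm v)).image (fun j => T2 x0 (j+1))) := by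
    rw [Finset.disjoint_left]
    intro s hs hs'
    obtain ⟨b, _, rfl⟩ := Finset.mem_image.mp hs
    rcases Finset.mem_union.mp hs' with h | h
    · exact T1_ne_image (Finset.mem_singleton.mp h).symm
    · obtain ⟨j, _, heq⟩ := Finset.mem_image.mp h
      exact T2_ne_image heq
  rw [F_old x0, Finset.sum_union d1, Finset.sum_union d2, Finset.sum_singleton]
  have e1 : ∑ s ∈ (B.filter (fun b => x0 ∈ b)).image (Finset.image (fup v)), gg v B g s
      = 0 := by
    rw [Finset.sum_image (fun b _ b' _ h => Finset.image_injective fup_inj h)]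
    rw [Finset.sum_congr rfl (fun b hb => gE1 (Finset.mem_filter.mp hb).1)]
    exact hgflow x0
  have e2 : ∑ s ∈ (Finset.range (mm v)).image (fun j => T2 x0 (j+1)), gg v B g s
      = -WtE (x0.val % 3) := by
    rw [Finset.sum_image]
    · rw [Finset.sum_congr rfl (fun j hj => gE3 hodd x0 (c := j+1) (by omega)
        (by have := Finset.mem_range.mp hj; omega))]
      rw [hmm]
      exact sumA _ _
    · intro j hj j' hj' h
      have h1 := Finset.mem_range.mp hj
      have h2 := Finset.mem_range.mp hj'
      have := (T2_det hodd (by omega) (by omega) (by omega) (by omega) h).2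
      omega
  rw [e1, e2, gE2]
  ring

lemma flow_inf (hv6 : v % 6 = 3) (h9 : 9 < v) :
    ∑ s ∈ (bigB v B).filter (fun s => finf v ∈ s), gg v B g s = 0 := by
  rw [F_inf, Finset.sum_image (fun i _ i' _ h => T1_det h)]
  rw [Finset.sum_congr rfl (fun i _ => gE2 (B := B) (g := g) i)]
  rw [Fin.sum_univ_eq_sum_range (fun k => WtE (k % 3)) v]
  rw [show v = 3*(v/3) by omega]
  exact sumE _

lemma flow_res (hv6 : v % 6 = 3) (h9 : 9 < v) (r : ZMod v) :
    ∑ s ∈ (bigB v B).filter (fun s => fnv r ∈ s), gg v B g s = 0 := by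
  have hodd : v % 2 = 1 := by omega
  have h3 : (3:ℕ) ∣ v := by omega
  have hmm : mm v = 3*((v-15)/6)+7 := by unfold mm; omega
  have dT : ∀ {j j' : ℕ}, j < mm v → j' < mm v →
      T2 (fdn (r - ((j+1 : ℕ) : ZMod v))) (j+1) = T2 (fdn (r + ((j'+1 : ℕ) : ZMod v))) (j'+1) →
      False := by
    intro j j' hj hj' h
    obtain ⟨hi, hc⟩ := T2_det hodd (by omega) (by omega) (by omega) (by omega) h
    have hcc : j = j' := by omega
    subst hcc
    have hz := fdn_inj hi
    have h2 : ((j+1 : ℕ) : ZMod v) = -((j+1 : ℕ) : ZMod v) := by linear_combination -hz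
    exact c_ne_negc hodd (by omega) (by omega) (by omega) (by omega) h2
  have d2 : Disjoint
      ((Finset.range (mm v)).image (fun j => T2 (fdn (r - ((j+1 : ℕ) : ZMod v))) (j+1)))
      ((Finset.range (mm v)).image (fun j => T2 (fdn (r + ((j+1 : ℕ) : ZMod v))) (j+1))) := by
    rw [Finset.disjoint_left]
    intro s hs hs'
    obtain ⟨j, hj, rfl⟩ := Finset.mem_image.mp hs
    obtain ⟨j', hj', heq⟩ := Finset.mem_image.mp hs'
    exact dT (Finset.mem_range.mp hj) (Finset.mem_range.mp hj') heq.symm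
  have d1 : Disjoint ({T1 (fdn r)} : Finset (Finset (Fin (2*v+1))))
      ((Finset.range (mm v)).image (fun j => T2 (fdn (r - ((j+1 : ℕ) : ZMod v))) (j+1)) ∪
       (Finset.range (mm v)).image (fun j => T2 (fdn (r + ((j+1 : ℕ) : ZMod v))) (j+1))) := by
    rw [Finset.disjoint_left]
    intro s hs hs'
    rw [Finset.mem_singleton.mp hs] at hs'
    rcases Finset.mem_union.mp hs' with h | h <;>
      · obtain ⟨j, _, heq⟩ := Finset.mem_image.mp h
        exact T1_ne_T2 heq.symm
  rw [F_res r, Finset.sum_union d1, Finset.sum_union d2, Finset.sum_singleton, gE2]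
  have inj1 : ∀ j ∈ Finset.range (mm v), ∀ j' ∈ Finset.range (mm v),
      T2 (fdn (r - ((j+1 : ℕ) : ZMod v))) (j+1) = T2 (fdn (r - ((j'+1 : ℕ) : ZMod v))) (j'+1) →
      j = j' := by
    intro j hj j' hj' h
    have h1 := Finset.mem_range.mp hj
    have h2 := Finset.mem_range.mp hj'
    have := (T2_det hodd (by omega) (by omega) (by omega) (by omega) h).2
    omega
  have inj2 : ∀ j ∈ Finset.range (mm v), ∀ j' ∈ Finset.range (mm v),
      T2 (fdn (r + ((j+1 : ℕ) : ZMod v))) (j+1) = T2 (fdn (r + ((j'+1 : ℕ) : ZMod v))) (j'+1) →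
      j = j' := by
    intro j hj j' hj' h
    have h1 := Finset.mem_range.mp hj
    have h2 := Finset.mem_range.mp hj'
    have := (T2_det hodd (by omega) (by omega) (by omega) (by omega) h).2
    omega
  rw [Finset.sum_image inj1, Finset.sum_image inj2]
  have c1 : ∀ j ∈ Finset.range (mm v),
      gg v B g (T2 (fdn (r - ((j+1 : ℕ) : ZMod v))) (j+1)) =
      Wt ((r.val + 2*(j+1)) % 3) (j+1) := by
    intro j hj
    have hjm := Finset.mem_range.mp hj
    rw [gE3 hodd _ (by omega) (by omega)]
    congr 1
    have hv : ((fdn (r - ((j+1 : ℕ) : ZMod v)) : Fin v) : ℕ) = (r - ((j+1 : ℕ) : ZMod v)).val :=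
      rfl
    rw [hv]
    exact val_sub_mod3 hodd h3 (by omega) (by omega) r
  have c2 : ∀ j ∈ Finset.range (mm v),
      gg v B g (T2 (fdn (r + ((j+1 : ℕ) : ZMod v))) (j+1)) =
      Wt ((r.val + (j+1)) % 3) (j+1) := by
    intro j hj
    have hjm := Finset.mem_range.mp hj
    rw [gE3 hodd _ (by omega) (by omega)]
    congr 1
    have hv : ((fdn (r + ((j+1 : ℕ) : ZMod v)) : Fin v) : ℕ) = (r + ((j+1 : ℕ) : ZMod v)).val :=
      rfl
    rw [hv]
    exact val_add_mod3 hodd h3 (by omega) (by omega) r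
  rw [Finset.sum_congr rfl c1, Finset.sum_congr rfl c2, ← Finset.sum_add_distrib, hmm,
    sumB r.val _]
  have hfr : ((fdn r : Fin v) : ℕ) = r.val := rfl
  rw [hfr]
  ring

end

end Stmt16

/-- if v ≡ 3 (mod 6), v > 9, every STS(v) with a zero-sum 4-flow embeds into an STS(2v+1) with a zero-sum 4-flow. -/
theorem stmt16 (v : ℕ) (hv : v % 6 = 3) (hv9 : 9 < v)
    (B : Finset (Finset (Fin v)))
    (hcard : ∀ b ∈ B, b.card = 3)
    (hpair : ∀ x y : Fin v, x ≠ y → (B.filter (fun b => x ∈ b ∧ y ∈ b)).card = 1)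
    (g : Finset (Fin v) → ℤ)
    (hgval : ∀ b ∈ B, g b ≠ 0 ∧ |g b| ≤ 3)
    (hgflow : ∀ x : Fin v, ∑ b ∈ B.filter (fun b => x ∈ b), g b = 0) :
    ∃ B' : Finset (Finset (Fin (2*v+1))),
      (∀ b ∈ B', b.card = 3) ∧
      (∀ x y : Fin (2*v+1), x ≠ y →
        (B'.filter (fun b => x ∈ b ∧ y ∈ b)).card = 1) ∧
      B.image (Finset.image (Fin.castLE (by omega : v ≤ 2*v+1))) ⊆ B' ∧
      ∃ g' : Finset (Fin (2*v+1)) → ℤ,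
        (∀ b ∈ B', g' b ≠ 0 ∧ |g' b| ≤ 3) ∧
        (∀ x : Fin (2*v+1), ∑ b ∈ B'.filter (fun b => x ∈ b), g' b = 0) ∧
        (∀ b ∈ B, g' (b.image (Fin.castLE (by omega : v ≤ 2*v+1))) = g b) := by
  haveI : NeZero v := ⟨by omega⟩
  have hodd : v % 2 = 1 := by omega
  refine ⟨Stmt16.bigB v B, ?_, ?_, ?_, Stmt16.gg v B g, ?_, ?_, ?_⟩
  · intro b hb
    rcases Stmt16.mem_bigB.mp hb with ⟨b0, hb0, rfl⟩ | ⟨i, rfl⟩ | ⟨i, c, h1, h2, rfl⟩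
    · rw [Finset.card_image_of_injective _ Stmt16.fup_inj]
      exact hcard b0 hb0
    · exact Stmt16.card_T1 i
    · exact Stmt16.card_T2 hodd i h1 h2
  · exact fun x y hxy => Stmt16.pair_card hodd hpair x y hxy
  · intro s hs
    obtain ⟨b, hb, rfl⟩ := Finset.mem_image.mp hs
    exact Stmt16.image_mem_bigB hb
  · intro b hb
    rcases Stmt16.mem_bigB.mp hb with ⟨b0, hb0, rfl⟩ | ⟨i, rfl⟩ | ⟨i, c, h1, h2, rfl⟩
    · rw [Stmt16.gE1 hb0]
      exact hgval b0 hb0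
    · rw [Stmt16.gE2 i]
      exact Stmt16.WtE_bound _
    · rw [Stmt16.gE3 hodd i h1 h2]
      exact Stmt16.Wt_bound _ _
  · intro x
    rcases Stmt16.tri x with ⟨x0, rfl⟩ | rfl | ⟨r, rfl⟩
    · exact Stmt16.flow_old hv hv9 hgflow x0
    · exact Stmt16.flow_inf hv hv9
    · exact Stmt16.flow_res hv hv9 r
  · intro b hb
    exact Stmt16.gE1 hb
end
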